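/- arXiv:2404.02264 — 10 statements merged into one kernel-verified Lean document; each statement's English description precedes it below -/
import Mathlib

section
/- Let N be a nilpotent group whose commutator subgroup [N,N] has finite Prüfer rank, i.e., there exists r ∈ ℕ such that every finitely generated subgroup of N contained in [N,N] can be generated by at most r elements. Let M be a subsemigroup of N such that every n ∈ N can be written as n = m·c with m ∈ M and c ∈ [N,N]. Then M = N. -/
open Subgroup
open scoped commutatorElement IsMulCommutative

section helpers
variable {G : Type*} [Monoid G] (M : Subsemigroup G)

lemma sg_pow_mem {a : G} (ha : a ∈ M) : ∀ n : ℕ, 1 ≤ n → a ^ n ∈ M := by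
  intro n hn
  induction n with
  | zero => omega
  | succ k ih =>
    rcases Nat.eq_or_lt_of_le hn with h | h
    · rw [← h, pow_one]; exact ha
    · rw [pow_succ]
      exact M.mul_mem (ih (by omega)) ha

lemma sg_mul_pow_mem {a b : G} (ha : a ∈ M) (hb : b ∈ M) : ∀ n : ℕ, a * b ^ n ∈ M := by
  intro n
  induction n with
  | zero => simpa using ha
  | succ k ih => rw [pow_succ, ← mul_assoc]; exact M.mul_mem ih hb

end helpers

section cap
variable {A : Type*} [CommGroup A] (S : Subsemigroup A)

lemma cap_core {τ ζ : A} (hτ : τ ∈ S) (s : ℤ)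
    (hsup : ∀ c' : ℕ, 1 ≤ c' → τ ^ c' * ζ ^ (s * (c':ℤ)^2) ∈ S) :
    ∀ (p n : ℕ), 1 ≤ p → 3 * (Nat.sqrt n + 1) ≤ p → τ ^ p * ζ ^ (s * (n:ℤ)) ∈ S := by
  intro p n hp hcap
  by_cases h0 : n = 0
  · subst h0
    simpa using sg_pow_mem S hτ p hp
  · have hc1 : 1 ≤ Nat.sqrt n := Nat.sqrt_pos.mpr (by omega)
    have hcc : Nat.sqrt n * Nat.sqrt n ≤ n := Nat.sqrt_le n
    have hlt : n < (Nat.sqrt n + 1) * (Nat.sqrt n + 1) := Nat.lt_succ_sqrt n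
    set c := Nat.sqrt n with hcdef
    set d0 := n - c * c with hd0
    have hlt' : n < c * c + 2 * c + 1 := by nlinarith [hlt]
    have hd2c : d0 ≤ 2 * c := by omega
    set rest := p - c - d0 with hrest
    have hsum : c + d0 + rest = p := by omega
    have h1 : τ ^ c * ζ ^ (s * (c:ℤ)^2) ∈ S := hsup c hc1
    have h2 : τ ^ 1 * ζ ^ (s * ((1:ℕ):ℤ)^2) ∈ S := hsup 1 le_rfl
    have h3 : τ ^ c * ζ ^ (s * (c:ℤ)^2) * (τ ^ 1 * ζ ^ (s * ((1:ℕ):ℤ)^2)) ^ d0 ∈ S :=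
      sg_mul_pow_mem S h1 h2 d0
    have h4 : τ ^ c * ζ ^ (s * (c:ℤ)^2) * (τ ^ 1 * ζ ^ (s * ((1:ℕ):ℤ)^2)) ^ d0 * τ ^ rest ∈ S := by
      rcases Nat.eq_zero_or_pos rest with hr | hr
      · rw [hr]; simpa using h3
      · exact S.mul_mem h3 (sg_pow_mem S hτ rest hr)
    have e1 : (τ ^ 1 * ζ ^ (s * ((1:ℕ):ℤ)^2)) ^ d0 = τ ^ d0 * ζ ^ (s * (d0:ℤ)) := by
      rw [mul_pow, pow_one, ← zpow_natCast (ζ ^ (s * ((1:ℕ):ℤ)^2)) d0, ← zpow_mul]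
      norm_num
    have hn' : (c:ℤ)^2 + (d0:ℤ) = (n:ℤ) := by
      have : c * c + d0 = n := by omega
      push_cast [← this]; ring
    have heq : τ ^ c * ζ ^ (s * (c:ℤ)^2) * (τ ^ d0 * ζ ^ (s * (d0:ℤ))) * τ ^ rest
        = τ ^ p * ζ ^ (s * (n:ℤ)) := by
      have hz : s * (c:ℤ)^2 + s * (d0:ℤ) = s * (n:ℤ) := by rw [← hn']; ring
      calc τ ^ c * ζ ^ (s * (c:ℤ)^2) * (τ ^ d0 * ζ ^ (s * (d0:ℤ))) * τ ^ rest
          = (τ ^ c * τ ^ d0 * τ ^ rest) * (ζ ^ (s * (c:ℤ)^2) * ζ ^ (s * (d0:ℤ))) := by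
            simp [mul_comm, mul_left_comm, mul_assoc]
        _ = τ ^ (c + d0 + rest) * ζ ^ (s * (c:ℤ)^2 + s * (d0:ℤ)) := by
            rw [pow_add, pow_add, zpow_add]
        _ = τ ^ p * ζ ^ (s * (n:ℤ)) := by rw [hsum, hz]
    rw [← heq]
    rw [e1] at h4
    exact h4

lemma cap_lemma {τ ζ : A} (hτ : τ ∈ S)
    (hc : ∀ c : ℕ, 1 ≤ c → τ ^ c * ζ ^ ((c:ℤ)^2) ∈ S ∧ τ ^ c * ζ ^ (-((c:ℤ)^2)) ∈ S) :
    ∀ (p : ℕ) (e : ℤ), 1 ≤ p → 3 * (Nat.sqrt e.natAbs + 1) ≤ p → τ ^ p * ζ ^ e ∈ S := by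
  intro p e hp hcap
  rcases Int.natAbs_eq e with he | he
  · have := cap_core S hτ 1 (fun c' hc' => by simpa using (hc c' hc').1) p e.natAbs hp hcap
    rw [one_mul] at this
    rwa [← he] at this
  · have := cap_core S hτ (-1) (fun c' hc' => by
        have := (hc c' hc').2
        rw [show -((c':ℤ)^2) = -1 * (c':ℤ)^2 by ring] at this
        exact this) p e.natAbs hp hcap
    rw [neg_one_mul] at this
    rwa [← he] at this

end cap


-- representation of elements of closure of a finite family in a comm group
lemma rep_lemma {A : Type*} [CommGroup A] {ι : Type*} [Fintype ι] (g : ι → A) {a : A}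
    (ha : a ∈ Subgroup.closure (Set.range g)) : ∃ c : ι → ℤ, a = ∏ i, g i ^ c i := by
  classical
  induction ha using Subgroup.closure_induction with
  | mem x hx =>
    obtain ⟨i0, rfl⟩ := hx
    refine ⟨fun i => if i = i0 then 1 else 0, ?_⟩
    rw [Finset.prod_eq_single i0]
    · simp
    · intro j _ hj; simp [hj]
    · intro h; exact absurd (Finset.mem_univ i0) h
  | one => exact ⟨0, by simp⟩
  | mul x y hx hy ihx ihy =>
    obtain ⟨c1, rfl⟩ := ihx
    obtain ⟨c2, rfl⟩ := ihy
    exact ⟨c1 + c2, by simp [zpow_add, Finset.prod_mul_distrib]⟩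
  | inv x hx ihx =>
    obtain ⟨c1, rfl⟩ := ihx
    refine ⟨-c1, ?_⟩
    rw [← Finset.prod_inv_distrib]
    simp [zpow_neg]

lemma zpow_sum' {A : Type*} [CommGroup A] {ι : Type*} (s : Finset ι) (m : ι → ℤ) (a : A) :
    a ^ (∑ i ∈ s, m i) = ∏ i ∈ s, a ^ m i := by
  classical
  induction s using Finset.induction with
  | empty => simp
  | insert x s' hx ih =>
                    rw [Finset.sum_insert hx, Finset.prod_insert hx, zpow_add, ih]

lemma dep_vectors {ι κ : Type*} [Fintype ι] [Fintype κ]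
    (h : Fintype.card κ < Fintype.card ι) (v : ι → κ → ℤ) :
    ∃ n : ι → ℤ, n ≠ 0 ∧ ∀ k, ∑ i, n i * v i k = 0 := by
  classical
  set vQ : ι → κ → ℚ := fun i k => (v i k : ℚ) with hvQ
  have hni : ¬ LinearIndependent ℚ vQ := by
    intro hli
    have := hli.fintype_card_le_finrank
    rw [Module.finrank_pi] at this
    omega
  obtain ⟨g, hg0, i0, hi0⟩ := Fintype.not_linearIndependent_iff.mp hni
  set n : ι → ℤ := fun i => (g i).num * ∏ j ∈ Finset.univ.erase i, ((g j).den : ℤ) with hn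
  have hcast : ∀ i, (n i : ℚ) = g i * ∏ j, ((g j).den : ℚ) := by
    intro i
    have : (∏ j, ((g j).den : ℚ)) = ((g i).den : ℚ) * ∏ j ∈ Finset.univ.erase i, ((g j).den : ℚ) := by
      rw [← Finset.prod_erase_mul Finset.univ _ (Finset.mem_univ i)]
      ring
    rw [this, hn]
    push_cast
    rw [← mul_assoc, Rat.mul_den_eq_num]
  refine ⟨n, ?_, ?_⟩
  · intro hzero
    have : n i0 = 0 := congrFun hzero i0
    rw [hn] at this
    simp only at this
    rcases mul_eq_zero.mp this with h1 | h2
    · exact hi0 (Rat.num_eq_zero.mp h1)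
    · have : ∀ j ∈ Finset.univ.erase i0, ((g j).den : ℤ) ≠ 0 := by
        intro j _
        exact_mod_cast (g j).den_nz
      exact (Finset.prod_ne_zero_iff.mpr this) h2
  · intro k
    have hQ : ∑ i, (n i : ℚ) * (v i k : ℚ) = 0 := by
      calc ∑ i, (n i : ℚ) * (v i k : ℚ)
          = (∏ j, ((g j).den : ℚ)) * ∑ i, g i * vQ i k := by
            rw [Finset.mul_sum]
            refine Finset.sum_congr rfl fun i _ => ?_
            rw [hcast i]; ring
        _ = 0 := by
            have := congrFun hg0 k
            simp only [Finset.sum_apply, Pi.smul_apply, smul_eq_mul, Pi.zero_apply] at this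
            rw [this, mul_zero]
    exact_mod_cast hQ

lemma dep_result {A : Type*} [CommGroup A] {ι κ : Type*} [Fintype ι] [Fintype κ]
    (h : Fintype.card κ < Fintype.card ι) (g : κ → A) (f : ι → A)
    (hf : ∀ i, f i ∈ Subgroup.closure (Set.range g)) :
    ∃ n : ι → ℤ, n ≠ 0 ∧ ∏ i, f i ^ n i = 1 := by
  classical
  choose c hc using fun i => rep_lemma g (hf i)
  obtain ⟨n, hn0, hrel⟩ := dep_vectors h (fun i k => c i k)
  refine ⟨n, hn0, ?_⟩
  calc ∏ i, f i ^ n i = ∏ i, ∏ k, g k ^ (c i k * n i) := by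
        refine Finset.prod_congr rfl fun i _ => ?_
        rw [hc i, ← Finset.prod_zpow]
        refine Finset.prod_congr rfl fun k _ => ?_
        rw [← zpow_mul]
    _ = ∏ k, ∏ i, g k ^ (c i k * n i) := Finset.prod_comm
    _ = ∏ k, g k ^ (∑ i, c i k * n i) := by
        refine Finset.prod_congr rfl fun k _ => (zpow_sum' _ _ _).symm
    _ = 1 := by
        refine Finset.prod_eq_one fun k _ => ?_
        have : ∑ i, c i k * n i = 0 := by
          rw [← hrel k]; exact Finset.sum_congr rfl fun i _ => mul_comm _ _
        rw [this, zpow_zero]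


section endgame
variable {A : Type*} [CommGroup A]

def IndT {s : ℕ} (f : Fin s → A) : Prop := ∀ n : Fin s → ℤ, ∏ i, f i ^ n i = 1 → n = 0

lemma sg_prod_mem (S : Subsemigroup A) {ι : Type*} (s : Finset ι) (hs : s.Nonempty)
    (f : ι → A) (h : ∀ i ∈ s, f i ∈ S) : ∏ i ∈ s, f i ∈ S := by
  classical
  induction hs using Finset.Nonempty.cons_induction with
  | singleton i => simpa using h i (by simp)
  | cons i s' hi hne ih =>
    rw [Finset.prod_cons]
    exact S.mul_mem (h i (Finset.mem_cons_self _ _)) (ih (fun j hj => h j (Finset.mem_cons_of_mem hj)))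

lemma list_prod_fin (l : List A) : ∏ i : Fin l.length, l.get i = l.prod := by
  simpa using Fin.prod_univ_get l

/-- Abelian endgame: from quadratic supply, bounded rank, and generation we conclude
that the subsemigroup `S` is everything. -/
theorem endgame (S : Subsemigroup A) (r : ℕ) (K : Set A)
    (hKtop : Subgroup.closure K = ⊤)
    (hKinv : ∀ ζ ∈ K, ζ⁻¹ ∈ K) (hKone : (1:A) ∈ K)
    (hsup : ∀ ζ ∈ K, ∃ τ : A, τ ∈ S ∧ ∀ c : ℕ, 1 ≤ c →
        τ^c * ζ^((c:ℤ)^2) ∈ S ∧ τ^c * ζ^(-((c:ℤ)^2)) ∈ S)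
    (hindep : ∀ (s : ℕ), r < s → ∀ f : Fin s → A, (∀ i, f i ∈ K) →
        ∃ n : Fin s → ℤ, n ≠ 0 ∧ ∏ i, f i ^ n i = 1) :
    ∀ t : A, t ∈ S := by
  classical
  intro t
  -- independent tuples in K
  set Q : ℕ → Prop := fun s => ∃ f : Fin s → A, (∀ i, f i ∈ K) ∧ IndT f with hQ
  have hQ0 : Q 0 := ⟨fun i => i.elim0, fun i => i.elim0, fun n _ => funext fun i => i.elim0⟩
  have hQle : ∀ s, Q s → s ≤ r := by
    intro s hs
    by_contra hgt
    obtain ⟨f, hfK, hfind⟩ := hs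
    obtain ⟨n, hn0, hrel⟩ := hindep s (by omega) f hfK
    exact hn0 (hfind n hrel)
  set s₀ := Nat.findGreatest Q r with hs₀def
  have hQs₀ : Q s₀ := Nat.findGreatest_spec (Nat.zero_le r) hQ0
  have hmax : ¬ Q (s₀ + 1) := by
    by_cases h : s₀ + 1 ≤ r
    · exact Nat.findGreatest_is_greatest (Nat.lt_succ_self _) h
    · intro hQs; have := hQle _ hQs; omega
  obtain ⟨f₀, hf₀K, hf₀ind⟩ := hQs₀
  set L₀ := Subgroup.closure (Set.range f₀) with hL₀
  -- every element of K has a positive power in L₀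
  have hKmult : ∀ ζ ∈ K, ∃ d : ℕ, 1 ≤ d ∧ ζ ^ ((d:ℕ):ℤ) ∈ L₀ := by
    intro ζ hζ
    have hnind : ¬ IndT (Fin.snoc f₀ ζ) := by
      intro hind
      exact hmax ⟨Fin.snoc f₀ ζ, fun i => by
        induction i using Fin.lastCases with
        | last => simpa using hζ
        | cast j => simpa using hf₀K j, hind⟩
    unfold IndT at hnind
    push_neg at hnind
    obtain ⟨n, hrel, hn0⟩ := hnind
    have hsplit : (∏ i : Fin s₀, f₀ i ^ n (Fin.castSucc i)) * ζ ^ (n (Fin.last s₀)) = 1 := by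
      rw [← hrel, Fin.prod_univ_castSucc]
      simp
    by_cases hlast : n (Fin.last s₀) = 0
    · exfalso
      apply hn0
      have h0 : (fun i => n (Fin.castSucc i)) = (0 : Fin s₀ → ℤ) := by
        apply hf₀ind
        rw [hlast, zpow_zero, mul_one] at hsplit
        exact hsplit
      funext i
      induction i using Fin.lastCases with
      | last => exact hlast
      | cast j => exact congrFun h0 j
    · have hzL : ζ ^ (n (Fin.last s₀)) ∈ L₀ := by
        have : ζ ^ (n (Fin.last s₀)) = (∏ i : Fin s₀, f₀ i ^ n (Fin.castSucc i))⁻¹ := by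
          rw [eq_inv_iff_mul_eq_one, mul_comm]; exact hsplit
        rw [this]
        exact inv_mem (prod_mem fun i _ => zpow_mem (Subgroup.subset_closure (Set.mem_range_self i)) _)
      refine ⟨(n (Fin.last s₀)).natAbs, by omega, ?_⟩
      rcases Int.natAbs_eq (n (Fin.last s₀)) with he | he
      · rwa [← he]
      · rw [show ((n (Fin.last s₀)).natAbs : ℤ) = -(n (Fin.last s₀)) by omega, zpow_neg]
        exact inv_mem hzL
  -- every element of A has a positive power in L₀
  have hallmult : ∀ a : A, ∃ d : ℕ, 1 ≤ d ∧ a ^ ((d:ℕ):ℤ) ∈ L₀ := by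
    intro a
    have ha : a ∈ Subgroup.closure K := by rw [hKtop]; trivial
    induction ha using Subgroup.closure_induction with
    | mem x hx => exact hKmult x hx
    | one => exact ⟨1, le_rfl, by simpa using one_mem L₀⟩
    | mul x y hx hy ihx ihy =>
      obtain ⟨d1, hd1, hx1⟩ := ihx
      obtain ⟨d2, hd2, hy1⟩ := ihy
      refine ⟨d1 * d2, Nat.one_le_iff_ne_zero.mpr (by positivity), ?_⟩
      have : (x * y) ^ (((d1*d2 :ℕ)):ℤ) = (x ^ ((d1:ℕ):ℤ)) ^ ((d2:ℕ):ℤ) * (y ^ ((d2:ℕ):ℤ)) ^ ((d1:ℕ):ℤ) := by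
        rw [mul_zpow, ← zpow_mul, ← zpow_mul]
        push_cast
        ring_nf
      rw [this]
      exact mul_mem (zpow_mem hx1 _) (zpow_mem hy1 _)
    | inv x hx ihx =>
      obtain ⟨d, hd, hx1⟩ := ihx
      exact ⟨d, hd, by rw [inv_zpow]; exact inv_mem hx1⟩
  -- represent t as a product of a list of elements of K
  have ht : t ∈ Submonoid.closure (K ∪ K⁻¹) := by
    rw [← Subgroup.closure_toSubmonoid]
    show t ∈ (Subgroup.closure K).toSubmonoid
    rw [hKtop]; trivial
  obtain ⟨l, hlK, hlprod⟩ := Submonoid.exists_list_of_mem_closure ht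
  have hlK' : ∀ y ∈ (1 :: l : List A), y ∈ K := by
    intro y hy
    rcases List.mem_cons.mp hy with h | h
    · rwa [h]
    · rcases hlK y h with h' | h'
      · exact h'
      · simpa using hKinv _ (Set.mem_inv.mp h')
  set l' : List A := 1 :: l with hl'
  have hl'prod : l'.prod = t := by rw [hl', List.prod_cons, one_mul, hlprod]
  -- the combined index type
  set ι := (Fin l'.length) ⊕ (Fin s₀) with hι
  set ζf : ι → A := Sum.elim l'.get f₀ with hζf
  set mexp : ι → ℤ := Sum.elim (fun _ => (1:ℤ)) (fun _ => (0:ℤ)) with hmexp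
  have hζK : ∀ i, ζf i ∈ K := by
    rintro (i | j)
    · exact hlK' _ (List.get_mem l' i)
    · exact hf₀K j
  have htprod : ∏ i, ζf i ^ mexp i = t := by
    rw [hζf, hmexp, Fintype.prod_sum_type]
    simp only [Sum.elim_inl, Sum.elim_inr, zpow_one, zpow_zero]
    rw [Finset.prod_const_one, mul_one, list_prod_fin, hl'prod]
  -- choose the supply data
  choose τ hτS hτsup using fun i => hsup (ζf i) (hζK i)
  choose d hd1 hdL using fun i => hallmult (τ i)
  set D : ℕ := ∏ i, d i with hD
  have hD1 : 1 ≤ D := Nat.one_le_iff_ne_zero.mpr (Finset.prod_ne_zero_iff.mpr (fun i _ => by have := hd1 i; omega))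
  have hτD : ∀ i, (τ i) ^ ((D:ℕ):ℤ) ∈ L₀ := by
    intro i
    obtain ⟨m, hm⟩ : d i ∣ D := Finset.dvd_prod_of_mem _ (Finset.mem_univ i)
    rw [hm]
    push_cast
    rw [zpow_mul]
    exact zpow_mem (hdL i) _
  have hL₀le : L₀ ≤ Subgroup.closure (Set.range ζf) := by
    rw [hL₀]
    apply Subgroup.closure_mono
    rintro x ⟨j, rfl⟩
    exact ⟨Sum.inr j, rfl⟩
  have hJ : (∏ i, (τ i) ^ ((D:ℕ):ℤ)) ∈ Subgroup.closure (Set.range ζf) :=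
    prod_mem fun i _ => hL₀le (hτD i)
  obtain ⟨c, hc⟩ := rep_lemma ζf hJ
  -- choose the scaling factor
  set Cm : ℕ := Finset.univ.sup (fun i => (c i).natAbs) with hCm
  set lam : ℕ := 15 * (Cm + 2)^2 with hlam
  set P : ℕ := lam * D with hP
  have hlam1 : 1 ≤ lam := Nat.one_le_iff_ne_zero.mpr (by rw [hlam]; positivity)
  have hP1 : 1 ≤ P := by
    rw [hP]
    calc 1 = 1 * 1 := by norm_num
      _ ≤ lam * D := Nat.mul_le_mul hlam1 hD1
  set e : ι → ℤ := fun i => mexp i - (lam:ℤ) * c i with he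
  have hebound : ∀ i, 3 * (Nat.sqrt (e i).natAbs + 1) ≤ P := by
    intro i
    have h1 : (mexp i).natAbs ≤ 1 := by
      rcases i with i | j <;> simp [hmexp]
    have h2 : (e i).natAbs ≤ 1 + lam * Cm := by
      have := Int.natAbs_sub_le (mexp i) ((lam:ℤ) * c i)
      have h3 : ((lam:ℤ) * c i).natAbs = lam * (c i).natAbs := by
        rw [Int.natAbs_mul]; simp
      have h4 : (c i).natAbs ≤ Cm := Finset.le_sup (f := fun i => (c i).natAbs) (Finset.mem_univ i)
      calc (e i).natAbs ≤ (mexp i).natAbs + ((lam:ℤ) * c i).natAbs := this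
        _ ≤ 1 + lam * Cm := by rw [h3]; exact Nat.add_le_add h1 (Nat.mul_le_mul_left _ h4)
    have h5 : (e i).natAbs ≤ (4 * (Cm+2)^2)^2 := by
      calc (e i).natAbs ≤ 1 + lam * Cm := h2
        _ ≤ (4 * (Cm+2)^2)^2 := by rw [hlam]; nlinarith [Nat.zero_le Cm]
    have h6 : Nat.sqrt (e i).natAbs ≤ 4 * (Cm+2)^2 := by
      calc Nat.sqrt (e i).natAbs ≤ Nat.sqrt ((4 * (Cm+2)^2)^2) := Nat.sqrt_le_sqrt h5
        _ = 4 * (Cm+2)^2 := Nat.sqrt_eq' _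
    calc 3 * (Nat.sqrt (e i).natAbs + 1) ≤ 3 * (4 * (Cm+2)^2 + 1) := by omega
      _ ≤ 15 * (Cm+2)^2 * 1 := by nlinarith [Nat.zero_le Cm]
      _ ≤ P := by rw [hP, hlam]; exact Nat.mul_le_mul_left _ hD1
  -- each factor is in S
  have hfac : ∀ i, (τ i) ^ P * (ζf i) ^ (e i) ∈ S := by
    intro i
    exact cap_lemma S (hτS i) (hτsup i) P (e i) hP1 (hebound i)
  have hXS : (∏ i, (τ i) ^ P * (ζf i) ^ (e i)) ∈ S := by
    have hne : (Finset.univ : Finset ι).Nonempty := by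
      refine ⟨Sum.inl ⟨0, ?_⟩, Finset.mem_univ _⟩
      rw [hl']; simp
    exact sg_prod_mem S Finset.univ hne _ (fun i _ => hfac i)
  -- and the product equals t
  have hXt : (∏ i, (τ i) ^ P * (ζf i) ^ (e i)) = t := by
    rw [Finset.prod_mul_distrib]
    have h7 : (∏ i, (τ i) ^ P) = (∏ i, (τ i) ^ ((D:ℕ):ℤ)) ^ (lam:ℤ) := by
      rw [← Finset.prod_zpow]
      refine Finset.prod_congr rfl fun i _ => ?_
      rw [← zpow_natCast (τ i) P, hP, ← zpow_mul]
      push_cast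
      ring_nf
    rw [h7, hc, ← Finset.prod_zpow]
    rw [← Finset.prod_mul_distrib]
    have h8 : ∀ i, (ζf i ^ c i) ^ (lam:ℤ) * ζf i ^ e i = ζf i ^ mexp i := by
      intro i
      rw [← zpow_mul, ← zpow_add, he]
      congr 1
      ring
    rw [Finset.prod_congr rfl (fun i _ => h8 i), htprod]
  rw [← hXt]
  exact hXS

end endgame


section kappa
variable {G : Type*} [Group G]

/-- The commutator in the convenient normalization. -/
def kap (u v : G) : G := u⁻¹ * v⁻¹ * u * v

variable (Z P : Subgroup G)

section basic
variable (hcent : ∀ z ∈ Z, ∀ g : G, z * g = g * z)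
variable (hPZ : ∀ u ∈ P, ∀ v : G, kap u v ∈ Z)

omit hcent hPZ in
lemma kap_one_left (v : G) : kap (1:G) v = 1 := by unfold kap; group

omit hcent hPZ in
lemma kap_one_right (u : G) : kap u (1:G) = 1 := by unfold kap; group

omit hcent hPZ in
lemma comm_single (u v : G) : u * v = v * u * kap u v := by unfold kap; group

include hcent hPZ

lemma kap_hom_right {u : G} (hu : u ∈ P) (v₁ v₂ : G) :
    kap u (v₁ * v₂) = kap u v₁ * kap u v₂ := by
  have h1 : kap u (v₁ * v₂) = u⁻¹ * v₂⁻¹ * u * (kap u v₁ * v₂) := by unfold kap; group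
  have h2 : u⁻¹ * v₂⁻¹ * u * (v₂ * kap u v₁) = (kap u v₂) * kap u v₁ := by unfold kap; group
  rw [h1, hcent _ (hPZ u hu v₁) v₂, h2, hcent _ (hPZ u hu v₂) (kap u v₁)]

lemma kap_hom_left {u₁ u₂ : G} (hu₁ : u₁ ∈ P) (hu₂ : u₂ ∈ P) (v : G) :
    kap (u₁ * u₂) v = kap u₁ v * kap u₂ v := by
  have h1 : kap (u₁ * u₂) v = u₂⁻¹ * (kap u₁ v * (v⁻¹ * u₂ * v)) := by unfold kap; group
  have h2 : u₂⁻¹ * ((v⁻¹ * u₂ * v) * kap u₁ v) = kap u₂ v * kap u₁ v := by unfold kap; group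
  rw [h1, hcent _ (hPZ u₁ hu₁ v) (v⁻¹ * u₂ * v), h2, hcent _ (hPZ u₂ hu₂ v) (kap u₁ v)]

lemma kap_inv_right {u : G} (hu : u ∈ P) (v : G) : kap u v⁻¹ = (kap u v)⁻¹ := by
  have h := kap_hom_right Z P hcent hPZ hu v v⁻¹
  rw [mul_inv_cancel, kap_one_right] at h
  exact (inv_eq_of_mul_eq_one_right h.symm).symm

lemma kap_inv_left {u : G} (hu : u ∈ P) (v : G) : kap u⁻¹ v = (kap u v)⁻¹ := by
  have h := kap_hom_left Z P hcent hPZ hu (inv_mem hu) v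
  rw [mul_inv_cancel, kap_one_left] at h
  exact (inv_eq_of_mul_eq_one_right h.symm).symm

omit hPZ in
lemma kap_zright (u : G) {z : G} (hz : z ∈ Z) (v : G) :
    kap u (v * z) = kap u v := by
  have h1 : kap u (v * z) = u⁻¹ * (z⁻¹ * (v⁻¹ * u * v * z)) := by unfold kap; group
  rw [h1, hcent _ (inv_mem hz) (v⁻¹ * u * v * z)]
  unfold kap; group

omit hPZ in
lemma kap_zleft (u : G) {z : G} (hz : z ∈ Z) (v : G) :
    kap (u * z) v = kap u v := by
  have h1 : kap (u * z) v = z⁻¹ * (u⁻¹ * v⁻¹ * u * (z * v)) := by unfold kap; group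
  rw [h1, hcent _ hz v]
  have h2 : z⁻¹ * (u⁻¹ * v⁻¹ * u * (v * z)) = z⁻¹ * ((u⁻¹ * v⁻¹ * u * v) * z) := by group
  rw [h2, ← hcent _ hz (u⁻¹ * v⁻¹ * u * v)]
  unfold kap; group

lemma comm_pow_right {u : G} (hu : u ∈ P) (v : G) :
    ∀ p : ℕ, u * v ^ p = v ^ p * u * (kap u v) ^ p := by
  intro p
  induction p with
  | zero => simp
  | succ q ih =>
    calc u * v ^ (q+1) = (u * v ^ q) * v := by rw [pow_succ, mul_assoc]
      _ = v ^ q * u * kap u v ^ q * v := by rw [ih]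
      _ = v ^ q * u * (kap u v ^ q * v) := by rw [mul_assoc]
      _ = v ^ q * u * (v * kap u v ^ q) := by rw [hcent _ (pow_mem (hPZ u hu v) q) v]
      _ = v ^ q * (u * v) * kap u v ^ q := by simp [mul_assoc]
      _ = v ^ q * (v * u * kap u v) * kap u v ^ q := by rw [comm_single u v]
      _ = (v ^ q * v) * u * (kap u v * kap u v ^ q) := by simp [mul_assoc]
      _ = v ^ (q+1) * u * kap u v ^ (q+1) := by rw [← pow_succ, ← pow_succ']

lemma comm_pow {u : G} (hu : u ∈ P) (v : G) :
    ∀ (q p : ℕ), u ^ q * v ^ p = v ^ p * u ^ q * (kap u v) ^ (p * q) := by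
  intro q
  induction q with
  | zero => simp
  | succ q ih =>
    intro p
    have hexp : p * q + p = p * (q + 1) := by ring
    calc u ^ (q+1) * v ^ p = u ^ q * (u * v ^ p) := by rw [pow_succ, mul_assoc]
      _ = u ^ q * (v ^ p * u * kap u v ^ p) := by rw [comm_pow_right Z P hcent hPZ hu v p]
      _ = (u ^ q * v ^ p) * u * kap u v ^ p := by simp [mul_assoc]
      _ = v ^ p * u ^ q * kap u v ^ (p*q) * u * kap u v ^ p := by rw [ih p]
      _ = v ^ p * u ^ q * (kap u v ^ (p*q) * u) * kap u v ^ p := by simp [mul_assoc]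
      _ = v ^ p * u ^ q * (u * kap u v ^ (p*q)) * kap u v ^ p := by
            rw [hcent _ (pow_mem (hPZ u hu v) (p*q)) u]
      _ = (v ^ p * (u ^ q * u)) * (kap u v ^ (p*q) * kap u v ^ p) := by simp [mul_assoc]
      _ = v ^ p * u ^ (q+1) * kap u v ^ (p * (q+1)) := by
            rw [← pow_succ u q, ← pow_add, hexp, mul_assoc]
end basic
end kappa


section supply
variable {G : Type*} [Group G]
variable (Z P : Subgroup G)
variable (hcent : ∀ z ∈ Z, ∀ g : G, z * g = g * z)
variable (hPZ : ∀ u ∈ P, ∀ v : G, kap u v ∈ Z)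
variable (hZP : Z ≤ P)

include hcent in
lemma cancel_pow {z₁ z₂ : G} (hz₁ : z₁ ∈ Z) (hz₂ : z₂ ∈ Z) (w : G) (c : ℕ) :
    (w * z₁) ^ c * (w⁻¹ * z₂) ^ c = (z₁ * z₂) ^ c := by
  have c1 : Commute w z₁ := (hcent _ hz₁ w).symm
  have c2 : Commute w⁻¹ z₂ := (hcent _ hz₂ w⁻¹).symm
  have c3 : Commute z₁ z₂ := hcent _ hz₁ z₂
  rw [c1.mul_pow, c2.mul_pow, c3.mul_pow]
  calc w ^ c * z₁ ^ c * ((w⁻¹) ^ c * z₂ ^ c)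
      = w ^ c * (z₁ ^ c * (w⁻¹) ^ c) * z₂ ^ c := by simp [mul_assoc]
    _ = w ^ c * ((w⁻¹) ^ c * z₁ ^ c) * z₂ ^ c := by
        rw [hcent _ (pow_mem hz₁ c) ((w⁻¹) ^ c)]
    _ = (w ^ c * (w⁻¹) ^ c) * (z₁ ^ c * z₂ ^ c) := by simp [mul_assoc]
    _ = z₁ ^ c * z₂ ^ c := by rw [inv_pow, mul_inv_cancel, one_mul]

include hcent hPZ hZP in
lemma word_eq {x : G} (w : G) (hx : x ∈ P)
    {z₁ z₂ z₃ z₄ : G} (hz₁ : z₁ ∈ Z) (hz₂ : z₂ ∈ Z) (hz₃ : z₃ ∈ Z) (hz₄ : z₄ ∈ Z) (c : ℕ) :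
    (w * z₁) ^ c * (x * z₃) ^ c * (w⁻¹ * z₂) ^ c * (x⁻¹ * z₄) ^ c
      = ((z₁ * z₂) * (z₃ * z₄)) ^ c * (kap (x * z₃) (w⁻¹ * z₂)) ^ (c * c) := by
  set A := (w * z₁) ^ c
  set B := (x * z₃) ^ c
  set A' := (w⁻¹ * z₂) ^ c
  set B' := (x⁻¹ * z₄) ^ c
  set k := kap (x * z₃) (w⁻¹ * z₂) with hk
  have hbP : x * z₃ ∈ P := mul_mem hx (hZP hz₃)
  have hkZ : k ∈ Z := hPZ _ hbP _
  have step1 : B * A' = A' * B * k ^ (c * c) := comm_pow Z P hcent hPZ hbP (w⁻¹ * z₂) c c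
  have hAA' : A * A' = (z₁ * z₂) ^ c := cancel_pow Z hcent hz₁ hz₂ w c
  have hBB' : B * B' = (z₃ * z₄) ^ c := cancel_pow Z hcent hz₃ hz₄ x c
  have c4 : Commute (z₁ * z₂) (z₃ * z₄) := hcent _ (mul_mem hz₁ hz₂) _
  calc A * B * A' * B'
      = A * (B * A') * B' := by simp [mul_assoc]
    _ = A * (A' * B * k ^ (c*c)) * B' := by rw [step1]
    _ = (A * A') * B * (k ^ (c*c) * B') := by simp [mul_assoc]
    _ = (A * A') * B * (B' * k ^ (c*c)) := by rw [hcent _ (pow_mem hkZ (c*c)) B']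
    _ = ((A * A') * (B * B')) * k ^ (c*c) := by simp [mul_assoc]
    _ = ((z₁ * z₂) ^ c * (z₃ * z₄) ^ c) * k ^ (c*c) := by rw [hAA', hBB']
    _ = ((z₁ * z₂) * (z₃ * z₄)) ^ c * k ^ (c*c) := by rw [c4.mul_pow]

lemma word_mem (M : Subsemigroup G) {a b a' b' : G}
    (ha : a ∈ M) (hb : b ∈ M) (ha' : a' ∈ M) (hb' : b' ∈ M) {c : ℕ} (hc : 1 ≤ c) :
    a ^ c * b ^ c * a' ^ c * b' ^ c ∈ M :=
  M.mul_mem (M.mul_mem (M.mul_mem (sg_pow_mem M ha c hc) (sg_pow_mem M hb c hc))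
    (sg_pow_mem M ha' c hc)) (sg_pow_mem M hb' c hc)

include hcent hPZ hZP in
/-- The main supply lemma: for any `x ∈ P` and `w`, there is `τ ∈ Z ∩ M` such that
`τ^c ⋅ kap x w^(±c²) ∈ M` for all `c ≥ 1`. -/
lemma supply_main (M : Subsemigroup G) (hMZ : ∀ n : G, ∃ z ∈ Z, n * z ∈ M)
    {x : G} (w : G) (hx : x ∈ P) :
    ∃ τ : G, τ ∈ Z ∧ τ ∈ M ∧ ∀ c : ℕ, 1 ≤ c →
      τ ^ c * (kap x w) ^ (c * c) ∈ M ∧ τ ^ c * ((kap x w)⁻¹) ^ (c * c) ∈ M := by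
  obtain ⟨z₁, hz₁, ha⟩ := hMZ w
  obtain ⟨z₂, hz₂, ha'⟩ := hMZ w⁻¹
  obtain ⟨z₃, hz₃, hb⟩ := hMZ x
  obtain ⟨z₄, hz₄, hb'⟩ := hMZ x⁻¹
  have hb2 : (x⁻¹)⁻¹ * z₃ ∈ M := by rwa [inv_inv]
  refine ⟨(z₁ * z₂) * (z₃ * z₄), mul_mem (mul_mem hz₁ hz₂) (mul_mem hz₃ hz₄), ?_, ?_⟩
  · -- τ ∈ M : the word a a' b b'
    have h1 : (w * z₁) * (w⁻¹ * z₂) = z₁ * z₂ := by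
      simpa using cancel_pow Z hcent hz₁ hz₂ w 1
    have h2 : (x * z₃) * (x⁻¹ * z₄) = z₃ * z₄ := by
      simpa using cancel_pow Z hcent hz₃ hz₄ x 1
    have hm : ((w * z₁) * (w⁻¹ * z₂)) * ((x * z₃) * (x⁻¹ * z₄)) ∈ M :=
      M.mul_mem (M.mul_mem ha ha') (M.mul_mem hb hb')
    rwa [h1, h2] at hm
  · intro c hc
    constructor
    · -- positive sign : word a b'' a' b with x replaced by x⁻¹
      have h := word_eq Z P hcent hPZ hZP w (inv_mem hx) hz₁ hz₂ hz₄ hz₃ c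
      have hm := word_mem M ha hb' ha' hb2 hc
      rw [h] at hm
      have hk : kap (x⁻¹ * z₄) (w⁻¹ * z₂) = kap x w := by
        rw [kap_zleft Z hcent x⁻¹ hz₄, kap_zright Z hcent x⁻¹ hz₂,
          kap_inv_left Z P hcent hPZ hx, kap_inv_right Z P hcent hPZ hx, inv_inv]
      rw [hk] at hm
      rwa [show z₄ * z₃ = z₃ * z₄ from hcent _ hz₄ z₃] at hm
    · -- negative sign : word a b a' b'
      have h := word_eq Z P hcent hPZ hZP w hx hz₁ hz₂ hz₃ hz₄ c
      have hm := word_mem M ha hb ha' hb' hc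
      rw [h] at hm
      have hk : kap (x * z₃) (w⁻¹ * z₂) = (kap x w)⁻¹ := by
        rw [kap_zleft Z hcent x hz₃, kap_zright Z hcent x hz₂,
          kap_inv_right Z P hcent hPZ hx]
      rwa [hk] at hm

end supply


section transfer
variable {G : Type*} [Group G]

lemma closure_subtype_mem (Z : Subgroup G) (Kg : Set G) (hKZ : Kg ⊆ (Z : Set G))
    {g : G} (hg : g ∈ Subgroup.closure Kg) :
    ∃ hgZ : g ∈ Z, (⟨g, hgZ⟩ : Z) ∈ Subgroup.closure {z : Z | (z : G) ∈ Kg} := by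
  induction hg using Subgroup.closure_induction with
  | mem x hx => exact ⟨hKZ hx, Subgroup.subset_closure hx⟩
  | one => exact ⟨one_mem Z, one_mem _⟩
  | mul x y hx hy ihx ihy =>
    obtain ⟨hxZ, hx'⟩ := ihx
    obtain ⟨hyZ, hy'⟩ := ihy
    exact ⟨mul_mem hxZ hyZ, mul_mem hx' hy'⟩
  | inv x hx ihx =>
    obtain ⟨hxZ, hx'⟩ := ihx
    exact ⟨inv_mem hxZ, inv_mem hx'⟩

/-- transfer of the rank condition to an independence statement inside a central subgroup -/
lemma indep_transfer (Z : Subgroup G) [IsMulCommutative Z] (r : ℕ)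
    (hrank : ∀ H : Subgroup G, H ≤ commutator G → H.FG →
      ∃ S : Finset G, S.card ≤ r ∧ Subgroup.closure (S : Set G) = H)
    (hZcomm : Z ≤ commutator G)
    (s : ℕ) (hs : r < s) (f : Fin s → Z) :
    ∃ n : Fin s → ℤ, n ≠ 0 ∧ ∏ i, f i ^ n i = 1 := by
  classical
  set H := Subgroup.closure (Set.range (fun i => (f i : G))) with hH
  have hHZ : H ≤ Z := by
    rw [hH]
    apply Subgroup.closure_le _ |>.mpr
    rintro x ⟨i, rfl⟩
    exact (f i).2
  have hHfg : H.FG := by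
    rw [Subgroup.fg_iff]
    exact ⟨_, rfl, Set.finite_range _⟩
  obtain ⟨Sf, hcard, hSf⟩ := hrank H (le_trans hHZ hZcomm) hHfg
  have hSfZ : (Sf : Set G) ⊆ (Z : Set G) := by
    intro a ha
    exact hHZ (hSf ▸ Subgroup.subset_closure ha)
  set gA : {a // a ∈ Sf} → Z := fun a => ⟨a.1, hSfZ a.2⟩ with hgA
  have hfmem : ∀ i, f i ∈ Subgroup.closure (Set.range gA) := by
    intro i
    have h1 : (f i : G) ∈ Subgroup.closure (Sf : Set G) := by
      rw [hSf]; exact Subgroup.subset_closure ⟨i, rfl⟩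
    obtain ⟨hz, hmem⟩ := closure_subtype_mem Z (Sf : Set G) hSfZ h1
    have : ({z : Z | (z : G) ∈ (Sf : Set G)}) = Set.range gA := by
      ext z
      constructor
      · intro hzin; exact ⟨⟨z.1, hzin⟩, Subtype.ext rfl⟩
      · rintro ⟨a, rfl⟩; exact a.2
    rw [this] at hmem
    have heq : (⟨(f i : G), hz⟩ : Z) = f i := Subtype.ext rfl
    rwa [heq] at hmem
  have hcards : Fintype.card {a // a ∈ Sf} < Fintype.card (Fin s) := by
    rw [Fintype.card_coe, Fintype.card_fin]
    omega
  exact dep_result hcards gA f hfmem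

lemma lcs_map_surj {H : Type*} [Group H] (φ : G →* H) (hφ : Function.Surjective φ) :
    ∀ n : ℕ, Subgroup.map φ (Subgroup.lowerCentralSeries (⊤ : Subgroup G) n) = Subgroup.lowerCentralSeries (⊤ : Subgroup H) n := by
  intro n
  induction n with
  | zero => exact Subgroup.map_top_of_surjective φ hφ
  | succ n ih =>
    show Subgroup.map φ ⁅Subgroup.lowerCentralSeries (⊤ : Subgroup G) n, ⊤⁆ = ⁅Subgroup.lowerCentralSeries (⊤ : Subgroup H) n, ⊤⁆
    rw [Subgroup.map_commutator, ih, Subgroup.map_top_of_surjective φ hφ]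

end transfer


section main
universe u

theorem sat_aux (r : ℕ) : ∀ (k : ℕ) (N : Type u) (_ : Group N),
    Subgroup.lowerCentralSeries (⊤ : Subgroup N) k = ⊥ →
    (∀ H : Subgroup N, H ≤ commutator N → H.FG →
      ∃ S : Finset N, S.card ≤ r ∧ Subgroup.closure (S : Set N) = H) →
    ∀ (M : Subsemigroup N),
    (∀ n : N, ∃ m ∈ M, ∃ c ∈ commutator N, n = m * c) →
    ∀ n : N, n ∈ M := by
  intro k
  induction k with
  | zero =>
    intro N instN hlcs hrank M hsat n
    have hall : ∀ g : N, g = 1 := by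
      intro g
      have h1 : g ∈ Subgroup.lowerCentralSeries (⊤ : Subgroup N) 0 := by
        rw [Subgroup.lowerCentralSeries_zero]; trivial
      rw [hlcs] at h1
      simpa using h1
    obtain ⟨m, hm, c, hc, heq⟩ := hsat n
    have : n = m := by rw [hall n, hall m]
    rw [this]; exact hm
  | succ k ih =>
    intro N instN hlcs hrank M hsat
    rcases k with _ | j
    · -- commutator is trivial
      intro n
      obtain ⟨m, hm, c, hc, heq⟩ := hsat n
      rw [← Subgroup.top_lowerCentralSeries_one, hlcs] at hc
      rw [Subgroup.mem_bot] at hc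
      rw [heq, hc, mul_one]
      exact hm
    · -- main case
      set Z := Subgroup.lowerCentralSeries (⊤ : Subgroup N) (j+1) with hZdef
      set P := Subgroup.lowerCentralSeries (⊤ : Subgroup N) j with hPdef
      have hZP : Z ≤ P := Subgroup.lowerCentralSeries_antitone _ (by omega)
      have hZcomm : Z ≤ commutator N := by
        rw [← Subgroup.top_lowerCentralSeries_one]
        exact Subgroup.lowerCentralSeries_antitone _ (by omega)
      have hZPtop : (⁅Z, (⊤ : Subgroup N)⁆ : Subgroup N) = ⊥ := hlcs
      have hcent : ∀ z ∈ Z, ∀ g : N, z * g = g * z := by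
        intro z hz g
        have h1 : ⁅z, g⁆ ∈ ⁅Z, (⊤ : Subgroup N)⁆ :=
          Subgroup.commutator_mem_commutator hz (Subgroup.mem_top g)
        rw [hZPtop, Subgroup.mem_bot] at h1
        exact commutatorElement_eq_one_iff_mul_comm.mp h1
      have hPZ : ∀ u ∈ P, ∀ v : N, kap u v ∈ Z := by
        intro u hu v
        have heq : kap u v = ⁅u⁻¹, v⁻¹⁆ := by
          simp [kap, commutatorElement_def]
        rw [heq]
        show ⁅u⁻¹, v⁻¹⁆ ∈ ⁅P, (⊤ : Subgroup N)⁆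
        exact Subgroup.commutator_mem_commutator (inv_mem hu) (Subgroup.mem_top _)
      -- pass to the quotient and use the induction hypothesis
      set φ : N →* N ⧸ Z := QuotientGroup.mk' Z with hφdef
      have hφsurj : Function.Surjective φ := QuotientGroup.mk'_surjective Z
      have hcommQ : commutator (N ⧸ Z) = Subgroup.map φ (commutator N) := by
        have h := Subgroup.map_commutator (⊤ : Subgroup N) ⊤ φ
        rw [Subgroup.map_top_of_surjective _ hφsurj] at h
        rw [_root_.commutator_def, _root_.commutator_def]
        exact h.symm
      have hlcsQ : Subgroup.lowerCentralSeries (⊤ : Subgroup (N ⧸ Z)) (j+1) = ⊥ := by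
        rw [← lcs_map_surj φ hφsurj (j+1)]
        rw [Subgroup.map_eq_bot_iff, hφdef, QuotientGroup.ker_mk']
      have hrankQ : ∀ H : Subgroup (N ⧸ Z), H ≤ commutator (N ⧸ Z) → H.FG →
          ∃ S : Finset (N ⧸ Z), S.card ≤ r ∧ Subgroup.closure (S : Set (N ⧸ Z)) = H := by
        intro H' hH' hfg
        obtain ⟨T', hT'⟩ := hfg
        have hlift : ∀ q ∈ T', ∃ g ∈ commutator N, φ g = q := by
          intro q hq
          have h1 : q ∈ commutator (N ⧸ Z) := hH' (hT' ▸ Subgroup.subset_closure hq)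
          rw [hcommQ] at h1
          obtain ⟨g, hg, hgq⟩ := h1
          exact ⟨g, hg, hgq⟩
        choose gT hgT1 hgT2 using hlift
        classical
        set T : Finset N := T'.attach.image (fun q => gT q.1 q.2) with hTdef
        have hTsub : (T : Set N) ⊆ (commutator N : Set N) := by
          intro a ha
          rw [hTdef] at ha
          simp only [Finset.coe_image, Set.mem_image] at ha
          obtain ⟨q, hq, rfl⟩ := ha
          exact hgT1 q.1 q.2
        obtain ⟨Sf, hScard, hSf⟩ := hrank (Subgroup.closure (T : Set N))
          ((Subgroup.closure_le _).mpr hTsub) ⟨T, rfl⟩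
        refine ⟨Sf.image φ, le_trans (Finset.card_image_le) hScard, ?_⟩
        have h2 : ((Sf.image φ : Finset (N ⧸ Z)) : Set (N ⧸ Z)) = φ '' (Sf : Set N) := by
          simp
        rw [h2, ← MonoidHom.map_closure, hSf, MonoidHom.map_closure]
        have h3 : φ '' (T : Set N) = (T' : Set (N ⧸ Z)) := by
          rw [hTdef]
          ext q
          simp only [Finset.coe_image, Set.mem_image, Finset.mem_coe]
          constructor
          · rintro ⟨a, ⟨p, hp, rfl⟩, rfl⟩
            rw [hgT2 p.1 p.2]
            exact p.2
          · intro hq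
            exact ⟨gT q hq, ⟨⟨q, hq⟩, by simp, rfl⟩, hgT2 q hq⟩
        rw [h3, hT']
      have hsatQ : ∀ q : N ⧸ Z, ∃ m ∈ M.map φ.toMulHom,
          ∃ c ∈ commutator (N ⧸ Z), q = m * c := by
        intro q
        obtain ⟨n, rfl⟩ := hφsurj q
        obtain ⟨m, hm, c, hc, rfl⟩ := hsat n
        refine ⟨φ m, ⟨m, hm, rfl⟩, φ c, ?_, by rw [map_mul]⟩
        rw [hcommQ]
        exact ⟨c, hc, rfl⟩
      have hQall := ih (N ⧸ Z) inferInstance hlcsQ hrankQ (M.map φ.toMulHom) hsatQ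
      have hMZ : ∀ n : N, ∃ z ∈ Z, n * z ∈ M := by
        intro n
        obtain ⟨m, hm, hφm⟩ := hQall (φ n)
        refine ⟨n⁻¹ * m, ?_, ?_⟩
        · have hφm' : φ m = φ n := hφm
          have h1 : φ (n⁻¹ * m) = 1 := by
            rw [map_mul, map_inv, hφm']
            group
          have h2 : n⁻¹ * m ∈ φ.ker := h1
          rwa [hφdef, QuotientGroup.ker_mk'] at h2
        · have h3 : n * (n⁻¹ * m) = m := by group
          rw [h3]; exact hm
      -- set up the abelian endgame inside Z
      haveI hZC : IsMulCommutative Z := ⟨⟨fun a b => Subtype.ext (hcent _ a.2 _)⟩⟩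
      set SA : Subsemigroup ↥Z :=
        { carrier := {z : ↥Z | (z : N) ∈ M}
          mul_mem' := fun ha hb => M.mul_mem ha hb } with hSAdef
      set Kg : Set N := {g : N | ∃ x ∈ P, ∃ w : N, g = kap x w} with hKgdef
      have hKgZ : Kg ⊆ (Z : Set N) := by
        rintro g ⟨x, hx, w, rfl⟩
        exact hPZ x hx w
      have hKg : Subgroup.closure Kg = Z := by
        have hZPtop' : Z = ⁅P, (⊤ : Subgroup N)⁆ := rfl
        rw [hZPtop', Subgroup.commutator_def]
        congr 1
        ext g
        constructor
        · rintro ⟨x, hx, w, rfl⟩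
          refine ⟨x⁻¹, inv_mem hx, w⁻¹, Subgroup.mem_top _, ?_⟩
          simp [kap, commutatorElement_def]
        · rintro ⟨g₁, h₁, g₂, -, rfl⟩
          refine ⟨g₁⁻¹, inv_mem h₁, g₂⁻¹, ?_⟩
          simp [kap, commutatorElement_def]
      set KA : Set ↥Z := {z : ↥Z | (z : N) ∈ Kg} with hKAdef
      have hKtopA : Subgroup.closure KA = ⊤ := by
        rw [eq_top_iff]
        rintro z -
        have h1 : (z : N) ∈ Subgroup.closure Kg := by rw [hKg]; exact z.2
        obtain ⟨hz, hmem⟩ := closure_subtype_mem Z Kg hKgZ h1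
        have heq : (⟨(z : N), hz⟩ : ↥Z) = z := Subtype.ext rfl
        rwa [heq] at hmem
      have hKinvA : ∀ ζ ∈ KA, ζ⁻¹ ∈ KA := by
        rintro ζ ⟨x, hx, w, hζ⟩
        refine ⟨x, hx, w⁻¹, ?_⟩
        have : ((ζ⁻¹ : ↥Z) : N) = ((ζ : N))⁻¹ := rfl
        rw [this, hζ, ← kap_inv_right Z P hcent hPZ hx]
      have hKoneA : (1 : ↥Z) ∈ KA := by
        refine ⟨1, one_mem P, 1, ?_⟩
        rw [kap_one_left]
        rfl
      have hsupA : ∀ ζ ∈ KA, ∃ τ : ↥Z, τ ∈ SA ∧ ∀ c : ℕ, 1 ≤ c →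
          τ^c * ζ^((c:ℤ)^2) ∈ SA ∧ τ^c * ζ^(-((c:ℤ)^2)) ∈ SA := by
        rintro ζ ⟨x, hx, w, hζ⟩
        obtain ⟨τg, hτZ, hτM, hτfam⟩ := supply_main Z P hcent hPZ hZP M hMZ w hx
        refine ⟨⟨τg, hτZ⟩, hτM, ?_⟩
        intro c hc
        obtain ⟨hpos, hneg⟩ := hτfam c hc
        have hcast : ((c:ℤ)^2) = ((c * c : ℕ) : ℤ) := by push_cast; ring
        constructor
        · show ((⟨τg, hτZ⟩^c * ζ^((c:ℤ)^2) : ↥Z) : N) ∈ M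
          have hval : ((⟨τg, hτZ⟩^c * ζ^((c:ℤ)^2) : ↥Z) : N) = τg^c * (kap x w)^(c*c) := by
            push_cast
            rw [hζ, hcast, zpow_natCast]
          rwa [hval]
        · show ((⟨τg, hτZ⟩^c * ζ^(-((c:ℤ)^2)) : ↥Z) : N) ∈ M
          have hval : ((⟨τg, hτZ⟩^c * ζ^(-((c:ℤ)^2)) : ↥Z) : N) = τg^c * ((kap x w)⁻¹)^(c*c) := by
            push_cast
            rw [hζ, hcast, zpow_neg, zpow_natCast, inv_pow]
          rwa [hval]
      have hindepA : ∀ (s : ℕ), r < s → ∀ f : Fin s → ↥Z, (∀ i, f i ∈ KA) →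
          ∃ n : Fin s → ℤ, n ≠ 0 ∧ ∏ i, f i ^ n i = 1 := by
        intro s hs f _
        exact indep_transfer Z r hrank hZcomm s hs f
      have hall := endgame SA r KA hKtopA hKinvA hKoneA hsupA hindepA
      intro n
      obtain ⟨z, hz, hnz⟩ := hMZ n
      have hzM : z⁻¹ ∈ M := hall ⟨z⁻¹, inv_mem hz⟩
      have heq : n = (n * z) * z⁻¹ := by group
      rw [heq]
      exact M.mul_mem hnz hzM

end main


/-- Let `N` be a nilpotent group whose commutator subgroup has finite
Prüfer rank (there is `r` such that every finitely generated subgroup of `N` contained in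
`[N,N]` can be generated by at most `r` elements). If `M` is a subsemigroup of `N` such
that every `n ∈ N` can be written `n = m·c` with `m ∈ M` and `c ∈ [N,N]`, then `M = N`. -/
theorem nilpotent_finite_pruefer_rank_saturation
    {N : Type*} [Group N] [Group.IsNilpotent N]
    (hrank : ∃ r : ℕ, ∀ H : Subgroup N, H ≤ commutator N → H.FG →
      ∃ S : Finset N, S.card ≤ r ∧ Subgroup.closure (S : Set N) = H)
    (M : Subsemigroup N)
    (hsat : ∀ n : N, ∃ m ∈ M, ∃ c ∈ commutator N, n = m * c) :
    ∀ n : N, n ∈ M := by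
  obtain ⟨r, hrank⟩ := hrank
  obtain ⟨k, hk⟩ := Subgroup.nilpotent_iff_lowerCentralSeries.mp ‹_›
  exact sat_aux r k N ‹_› hk hrank M hsat
end

section
/- Assume the following condition (LocInf): for every v ∈ ℝⁿ∖{0} there exists f_v ∈ ℳ such that (a) in_v(f_v) ∈ (𝔸⁺)^K, and (b) setting I'_ξ := M_v(I_ξ, f_v) and J'_ξ := O_v ∪ J_ξ, one has (O_w ∪ J'_ξ) ∩ M_w(I'_ξ, in_v(f_v)) ≠ ∅ for every w ∈ ℝⁿ∖{0} and every ξ ∈ Ξ. Then there exists a single f ∈ ℳ such that in_v(f) ∈ (𝔸⁺)^K for all v ∈ ℝⁿ∖{0}, and (O_v ∪ J_ξ) ∩ M_v(I_ξ, f) ≠ ∅ for all v ∈ ℝⁿ∖{0} and all ξ ∈ Ξ. -/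
noncomputable section

/-- The ring `𝔸` of real Laurent polynomials in `n` variables: the monoid algebra of
`(ℤⁿ, +)` over `ℝ`. -/
abbrev LaurentA (n : ℕ) := AddMonoidAlgebra ℝ (Fin n → ℤ)

namespace LaurentA

variable {n K : ℕ}

/-- Dot product `v · a` of a real vector with an integer exponent vector. -/
def dotIZ (v : Fin n → ℝ) (a : Fin n → ℤ) : ℝ := ∑ k, v k * (a k : ℝ)

/-- The weighted degree `deg_v f` (with `deg_v 0 = ⊥ = −∞`). -/
def degv (v : Fin n → ℝ) (f : LaurentA n) : WithBot ℝ :=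
  f.coeff.support.sup fun a => ((dotIZ v a : ℝ) : WithBot ℝ)

open scoped Classical in
/-- The initial polynomial `in_v f`: the sum of the monomials of `f` whose weighted
degree at direction `v` is maximal (`in_v 0 = 0`). -/
def initv (v : Fin n → ℝ) (f : LaurentA n) : LaurentA n :=
  AddMonoidAlgebra.ofCoeff (Finsupp.filter (fun a => ((dotIZ v a : ℝ) : WithBot ℝ) = degv v f) f.coeff)

/-- `𝔸⁺`: nonzero Laurent polynomials all of whose coefficients are nonnegative. -/
def Apos (n : ℕ) : Set (LaurentA n) := {f | f ≠ 0 ∧ ∀ a, 0 ≤ f.coeff a}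

/-- `M_v(I, f)`: the set of indices `i ∈ I` for which `deg_v (f i)` is maximal among `I`. -/
def Mv (v : Fin n → ℝ) (I : Set (Fin K)) (f : Fin K → LaurentA n) : Set (Fin K) :=
  {i | i ∈ I ∧ ∀ i' ∈ I, degv v (f i') ≤ degv v (f i)}

/-- `O_v`: the indices `i` with `v · ãᵢ ≠ 0`. -/
def Ov (atil : Fin K → Fin n → ℤ) (v : Fin n → ℝ) : Set (Fin K) :=
  {i | dotIZ v (atil i) ≠ 0}

/-- Evaluation `f(r)` of a Laurent polynomial at a point `r` with positive coordinates. -/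
def evalAt (r : Fin n → ℝ) (f : LaurentA n) : ℝ :=
  ∑ a ∈ f.coeff.support, f.coeff a * ∏ k, r k ^ (a k)

end LaurentA

namespace LaurentA

variable {n K : ℕ}

-- basic lemmas
section Basic

variable {v w : Fin n → ℝ} {f p q : LaurentA n}

lemma dotIZ_add (v : Fin n → ℝ) (a b : Fin n → ℤ) : dotIZ v (a + b) = dotIZ v a + dotIZ v b := by
  simp [dotIZ, mul_add, Finset.sum_add_distrib]

lemma dotIZ_sub (v : Fin n → ℝ) (a b : Fin n → ℤ) : dotIZ v (a - b) = dotIZ v a - dotIZ v b := by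
  simp [dotIZ, mul_sub, Finset.sum_sub_distrib]

lemma dotIZ_smul (c : ℝ) (v : Fin n → ℝ) (a : Fin n → ℤ) : dotIZ (c • v) a = c * dotIZ v a := by
  simp [dotIZ, Finset.mul_sum, mul_assoc]

/-- real degree -/
def rdegv (v : Fin n → ℝ) (f : LaurentA n) : ℝ := WithBot.unbotD 0 (degv v f)

lemma le_degv {a : Fin n → ℤ} (ha : a ∈ f.coeff.support) : ((dotIZ v a : ℝ) : WithBot ℝ) ≤ degv v f :=
  Finset.le_sup (f := fun a => ((dotIZ v a : ℝ) : WithBot ℝ)) ha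

lemma degv_eq_coe (hf : f ≠ 0) : degv v f = ((rdegv v f : ℝ) : WithBot ℝ) := by
  obtain ⟨a, ha, hs⟩ := Finset.exists_mem_eq_sup f.coeff.support
    (Finsupp.support_nonempty_iff.mpr (by simpa using hf)) (fun a => ((dotIZ v a : ℝ) : WithBot ℝ))
  rw [rdegv, degv] at *
  rw [hs]; rfl

lemma exists_rdegv (hf : f ≠ 0) : ∃ a ∈ f.coeff.support, dotIZ v a = rdegv v f := by
  obtain ⟨a, ha, hs⟩ := Finset.exists_mem_eq_sup f.coeff.support
    (Finsupp.support_nonempty_iff.mpr (by simpa using hf)) (fun a => ((dotIZ v a : ℝ) : WithBot ℝ))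
  refine ⟨a, ha, ?_⟩
  have := degv_eq_coe (v := v) hf
  rw [degv, hs] at this
  exact WithBot.coe_inj.mp this

lemma dotIZ_le_rdegv (hf : f ≠ 0) {a : Fin n → ℤ} (ha : a ∈ f.coeff.support) :
    dotIZ v a ≤ rdegv v f := by
  have := le_degv (v := v) ha
  rw [degv_eq_coe hf] at this
  exact_mod_cast this

lemma initv_apply (a : Fin n → ℤ) :
    (initv v f).coeff a = if ((dotIZ v a : ℝ) : WithBot ℝ) = degv v f then f.coeff a else 0 := by
  classical
  rw [initv, AddMonoidAlgebra.coeff_ofCoeff, Finsupp.filter_apply]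

lemma initv_apply' (hf : f ≠ 0) (a : Fin n → ℤ) :
    (initv v f).coeff a = if dotIZ v a = rdegv v f then f.coeff a else 0 := by
  rw [initv_apply, degv_eq_coe hf]
  congr 1
  simp [WithBot.coe_inj]

lemma initv_zero : initv v (0 : LaurentA n) = 0 := by
  ext a; rw [initv_apply]; simp

lemma degv_zero : degv v (0 : LaurentA n) = ⊥ := by
  unfold degv; simp

lemma initv_ne_zero (hf : f ≠ 0) : initv v f ≠ 0 := by
  obtain ⟨a, ha, hd⟩ := exists_rdegv (v := v) hf
  intro h
  have := initv_apply' (v := v) hf a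
  rw [h, if_pos hd] at this
  exact Finsupp.mem_support_iff.mp ha this.symm

lemma ne_zero_of_initv_apos (h : initv v f ∈ Apos n) : f ≠ 0 := by
  intro h0; rw [h0, initv_zero] at h; exact h.1 rfl

lemma initv_mem_apos (hf : f ∈ Apos n) : initv v f ∈ Apos n := by
  refine ⟨initv_ne_zero hf.1, fun a => ?_⟩
  rw [initv_apply]
  split
  · exact hf.2 a
  · exact le_refl 0

lemma support_initv_subset : (initv v f).coeff.support ⊆ f.coeff.support := by
  intro a ha
  rw [Finsupp.mem_support_iff] at ha ⊢
  rw [initv_apply] at ha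
  intro h; apply ha; split <;> simp [h]

end Basic

section Pres

variable {v w : Fin n → ℝ} {S : Finset (Fin n → ℤ)} {p q : LaurentA n}

/-- order preservation hypothesis -/
def Pres (v w : Fin n → ℝ) (S : Finset (Fin n → ℤ)) : Prop :=
  ∀ a ∈ S, ∀ a' ∈ S, dotIZ v a < dotIZ v a' → dotIZ w a < dotIZ w a'

lemma Pres.refl (v : Fin n → ℝ) (S : Finset (Fin n → ℤ)) : Pres v v S :=
  fun _ _ _ _ h => h

/-- w-argmax points are v-argmax points -/
lemma Pres.argmax (H : Pres v w S) (hp : p ≠ 0) (hS : p.coeff.support ⊆ S) {a : Fin n → ℤ}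
    (ha : a ∈ p.coeff.support) (hmax : dotIZ w a = rdegv w p) : dotIZ v a = rdegv v p := by
  by_contra hne
  obtain ⟨a', ha', hd'⟩ := exists_rdegv (v := v) hp
  have hlt : dotIZ v a < dotIZ v a' := by
    rw [hd']
    exact lt_of_le_of_ne (dotIZ_le_rdegv hp ha) hne
  have := H a (hS ha) a' (hS ha') hlt
  rw [hmax] at this
  exact absurd (dotIZ_le_rdegv (v := w) hp ha') (not_le.mpr this)

lemma Pres.rdegv_initv (H : Pres v w S) (hp : p ≠ 0) (hS : p.coeff.support ⊆ S) :
    rdegv w (initv v p) = rdegv w p := by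
  obtain ⟨a, ha, hd⟩ := exists_rdegv (v := w) hp
  have hav : dotIZ v a = rdegv v p := H.argmax hp hS ha hd
  have hmem : a ∈ (initv v p).coeff.support := by
    rw [Finsupp.mem_support_iff, initv_apply' hp, if_pos hav]
    exact Finsupp.mem_support_iff.mp ha
  have hne : initv v p ≠ 0 := initv_ne_zero hp
  apply le_antisymm
  · obtain ⟨b, hb, hdb⟩ := exists_rdegv (v := w) hne
    rw [← hdb]
    exact dotIZ_le_rdegv hp (support_initv_subset hb)
  · rw [← hd]
    exact dotIZ_le_rdegv hne hmem

lemma Pres.initv_initv (H : Pres v w S) (hS : p.coeff.support ⊆ S) :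
    initv w (initv v p) = initv w p := by
  by_cases hp : p = 0
  · simp [hp, initv_zero]
  have hne : initv v p ≠ 0 := initv_ne_zero hp
  ext a
  rw [initv_apply' (v := w) hne, initv_apply' (v := w) hp, H.rdegv_initv hp hS]
  by_cases hd : dotIZ w a = rdegv w p
  · rw [if_pos hd, if_pos hd]
    by_cases hpa : p.coeff a = 0
    · rw [initv_apply' (v := v) hp]
      split
      · rfl
      · exact hpa.symm
    · have ha : a ∈ p.coeff.support := Finsupp.mem_support_iff.mpr hpa
      rw [initv_apply' (v := v) hp, if_pos (H.argmax hp hS ha hd)]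
  · rw [if_neg hd, if_neg hd]

lemma Pres.degv_lt (H : Pres v w S) (hSp : p.coeff.support ⊆ S) (hSq : q.coeff.support ⊆ S)
    (h : degv v p < degv v q) : degv w p < degv w q := by
  have hq : q ≠ 0 := by
    intro h0; rw [h0, degv_zero] at h; exact absurd h (not_lt_bot)
  obtain ⟨b, hb, hdb⟩ := exists_rdegv (v := v) hq
  by_cases hp : p = 0
  · rw [hp, degv_zero, degv_eq_coe hq]
    exact WithBot.bot_lt_coe _
  obtain ⟨a, ha, hda⟩ := exists_rdegv (v := w) hp
  have hlt : dotIZ v a < dotIZ v b := by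
    calc dotIZ v a ≤ rdegv v p := dotIZ_le_rdegv hp ha
    _ < rdegv v q := by
        rw [degv_eq_coe hp, degv_eq_coe hq] at h
        exact_mod_cast h
    _ = dotIZ v b := hdb.symm
  have hw := H a (hSp ha) b (hSq hb) hlt
  rw [degv_eq_coe hp, degv_eq_coe hq, ← hda]
  calc ((dotIZ w a : ℝ) : WithBot ℝ) < ((dotIZ w b : ℝ) : WithBot ℝ) := by exact_mod_cast hw
  _ ≤ ((rdegv w q : ℝ) : WithBot ℝ) := by exact_mod_cast dotIZ_le_rdegv hq hb

lemma Pres.degv_initv (H : Pres v w S) (hp : p ≠ 0) (hS : p.coeff.support ⊆ S) :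
    degv w (initv v p) = degv w p := by
  rw [degv_eq_coe (initv_ne_zero hp), degv_eq_coe hp, H.rdegv_initv hp hS]

end Pres

section MvLemmas

variable {v w : Fin n → ℝ}

lemma Mv_congr {I : Set (Fin K)} {f g : Fin K → LaurentA n}
    (h : ∀ i, degv w (f i) = degv w (g i)) : Mv w I f = Mv w I g := by
  unfold Mv; ext i; simp only [Set.mem_setOf_eq, h]

lemma Mv_eq_of_pres {I : Set (Fin K)} {f : Fin K → LaurentA n}
    (hmono : ∀ i i' : Fin K, degv v (f i) < degv v (f i') → degv w (f i) < degv w (f i')) :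
    Mv w I f = Mv w (Mv v I f) f := by
  ext i
  constructor
  · rintro ⟨hiI, hmax⟩
    have hiv : i ∈ Mv v I f := by
      refine ⟨hiI, fun i' hi' => ?_⟩
      by_contra hlt
      have := hmono i i' (not_le.mp hlt)
      exact absurd (hmax i' hi') (not_le.mpr this)
    exact ⟨hiv, fun i' hi' => hmax i' hi'.1⟩
  · rintro ⟨⟨hiI, hvmax⟩, hwmax⟩
    refine ⟨hiI, fun i' hi' => ?_⟩
    rcases eq_or_lt_of_le (hvmax i' hi') with heq | hlt
    · exact hwmax i' ⟨hi', fun i'' hi'' => le_trans (hvmax i'' hi'') heq.symm.le⟩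
    · exact (hmono i' i hlt).le

end MvLemmas

section Scaling

variable {v : Fin n → ℝ} {c : ℝ} {p q : LaurentA n}

lemma rdegv_smul (hc : 0 < c) (p : LaurentA n) : rdegv (c • v) p = c * rdegv v p := by
  by_cases hp : p = 0
  · rw [hp]; unfold rdegv degv; simp
  apply le_antisymm
  · obtain ⟨a, ha, hd⟩ := exists_rdegv (v := c • v) hp
    rw [← hd, dotIZ_smul]
    exact mul_le_mul_of_nonneg_left (dotIZ_le_rdegv hp ha) hc.le
  · obtain ⟨a, ha, hd⟩ := exists_rdegv (v := v) hp
    rw [← hd, ← dotIZ_smul]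
    exact dotIZ_le_rdegv hp ha

lemma initv_smul (hc : 0 < c) (p : LaurentA n) : initv (c • v) p = initv v p := by
  by_cases hp : p = 0
  · rw [hp, initv_zero, initv_zero]
  ext a
  rw [initv_apply' (v := c • v) hp, initv_apply' (v := v) hp, rdegv_smul hc, dotIZ_smul]
  rcases eq_or_ne (dotIZ v a) (rdegv v p) with h | h
  · rw [if_pos (by rw [h]), if_pos h]
  · rw [if_neg (fun hh => h (mul_left_cancel₀ hc.ne' hh)), if_neg h]

lemma degv_le_smul_iff (hc : 0 < c) (p q : LaurentA n) :
    degv (c • v) p ≤ degv (c • v) q ↔ degv v p ≤ degv v q := by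
  by_cases hp : p = 0
  · rw [hp, degv_zero, degv_zero]
    simp
  by_cases hq : q = 0
  · rw [hq, degv_zero, degv_zero, le_bot_iff, le_bot_iff,
      degv_eq_coe (v := c • v) hp, degv_eq_coe (v := v) hp]
    simp
  rw [degv_eq_coe (v := c • v) hp, degv_eq_coe (v := c • v) hq,
    degv_eq_coe (v := v) hp, degv_eq_coe (v := v) hq, rdegv_smul hc, rdegv_smul hc]
  rw [WithBot.coe_le_coe, WithBot.coe_le_coe]
  exact mul_le_mul_iff_of_pos_left hc

lemma Mv_smul (hc : 0 < c) (I : Set (Fin K)) (f : Fin K → LaurentA n) :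
    Mv (c • v) I f = Mv v I f := by
  unfold Mv; ext i
  simp only [Set.mem_setOf_eq]
  constructor <;> rintro ⟨h1, h2⟩ <;> refine ⟨h1, fun i' hi' => ?_⟩
  · exact (degv_le_smul_iff hc _ _).mp (h2 i' hi')
  · exact (degv_le_smul_iff hc _ _).mpr (h2 i' hi')

lemma Ov_smul (hc : c ≠ 0) (atil : Fin K → Fin n → ℤ) :
    Ov atil (c • v) = Ov atil v := by
  unfold Ov; ext i
  simp only [Set.mem_setOf_eq, dotIZ_smul, mul_ne_zero_iff]
  exact and_iff_right hc

end Scaling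

section Local

open scoped RealInnerProductSpace

/-- The target property of a tuple `g` at direction `w`. -/
def PG (atil : Fin K → Fin n → ℤ) {Ξ : Type*} (I J : Ξ → Set (Fin K))
    (g : Fin K → LaurentA n) (w : Fin n → ℝ) : Prop :=
  (∀ i, initv w (g i) ∈ Apos n) ∧ ∀ ξ, ((Ov atil w ∪ J ξ) ∩ Mv w (I ξ) g).Nonempty

lemma dotIZ_continuous (a : Fin n → ℤ) :
    Continuous (fun w : EuclideanSpace ℝ (Fin n) => dotIZ w a) := by
  apply continuous_finset_sum
  intro k _
  exact ((continuous_apply k).comp (PiLp.continuous_ofLp 2 (fun _ : Fin n => ℝ))).mul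
    continuous_const

lemma coord_le_norm (x : EuclideanSpace ℝ (Fin n)) (k : Fin n) : |x k| ≤ ‖x‖ := by
  rw [EuclideanSpace.norm_eq, ← Real.sqrt_sq_eq_abs]
  apply Real.sqrt_le_sqrt
  have := Finset.single_le_sum (f := fun i => ‖x i‖ ^ 2) (fun i _ => sq_nonneg _)
    (Finset.mem_univ k)
  simpa [sq_abs] using this

open scoped RealInnerProductSpace in
lemma inner_euclid (x y : EuclideanSpace ℝ (Fin n)) : ⟪x, y⟫ = ∑ i, x i * y i := by
  simp [PiLp.inner_apply, RCLike.inner_apply, conj_trivial, mul_comm]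

lemma abs_dotIZ_le {x : EuclideanSpace ℝ (Fin n)} (hx : ‖x‖ = 1) (a : Fin n → ℤ) :
    |dotIZ x a| ≤ ∑ k, |(a k : ℝ)| := by
  calc |dotIZ x a| ≤ ∑ k, |x k * (a k : ℝ)| := Finset.abs_sum_le_sum_abs _ _
  _ ≤ ∑ k, |(a k : ℝ)| := by
      apply Finset.sum_le_sum
      intro k _
      rw [abs_mul]
      calc |x k| * |(a k : ℝ)| ≤ 1 * |(a k : ℝ)| := by
            apply mul_le_mul_of_nonneg_right _ (abs_nonneg _)
            rw [← hx]; exact coord_le_norm x k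
      _ = |(a k : ℝ)| := one_mul _

lemma local_good (atil : Fin K → Fin n → ℤ) {Ξ : Type*} (I J : Ξ → Set (Fin K))
    (M : Submodule (LaurentA n) (Fin K → LaurentA n))
    (hLocInf : ∀ v : Fin n → ℝ, v ≠ 0 → ∃ fv ∈ M,
      (∀ i, initv v (fv i) ∈ Apos n) ∧
      ∀ w : Fin n → ℝ, w ≠ 0 → ∀ ξ : Ξ,
        ((Ov atil w ∪ (Ov atil v ∪ J ξ)) ∩
          Mv w (Mv v (I ξ) fv) (fun i => initv v (fv i))).Nonempty)
    (v : Fin n → ℝ) (hv : v ≠ 0) :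
    ∃ g, g ∈ M ∧ (∀ i, g i ≠ 0) ∧ ∃ U : Set (EuclideanSpace ℝ (Fin n)), IsOpen U ∧ WithLp.toLp 2 v ∈ U ∧
      ∀ w : EuclideanSpace ℝ (Fin n), w ∈ U → (w : Fin n → ℝ) ≠ 0 → PG atil I J g w := by
  classical
  obtain ⟨fv, hfvM, hpos, hb⟩ := hLocInf v hv
  have hfz : ∀ i, fv i ≠ 0 := fun i => ne_zero_of_initv_apos (hpos i)
  set S : Finset (Fin n → ℤ) := Finset.univ.biUnion (fun i : Fin K => (fv i).coeff.support) with hS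
  have hSsub : ∀ i, (fv i).coeff.support ⊆ S := fun i =>
    Finset.subset_biUnion_of_mem (fun i : Fin K => (fv i).coeff.support) (Finset.mem_univ i)
  refine ⟨fv, hfvM, hfz, {w : EuclideanSpace ℝ (Fin n) | Pres v w S ∧
      ∀ i : Fin K, dotIZ v (atil i) ≠ 0 → dotIZ w (atil i) ≠ 0}, ?_, ?_, ?_⟩
  · -- openness
    have h1 : IsOpen {w : EuclideanSpace ℝ (Fin n) | Pres v w S} := by
      have he : {w : EuclideanSpace ℝ (Fin n) | Pres v w S} =
          ⋂ a ∈ S, ⋂ a' ∈ S, {w : EuclideanSpace ℝ (Fin n) |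
            dotIZ v a < dotIZ v a' → dotIZ w a < dotIZ w a'} := by
        ext w; simp [Pres, Set.mem_iInter]
      rw [he]
      refine isOpen_biInter_finset fun a _ => isOpen_biInter_finset fun a' _ => ?_
      by_cases h : dotIZ v a < dotIZ v a'
      · have : {w : EuclideanSpace ℝ (Fin n) |
            dotIZ v a < dotIZ v a' → dotIZ w a < dotIZ w a'} =
            {w : EuclideanSpace ℝ (Fin n) | dotIZ w a < dotIZ w a'} := by
          ext w; simp [h]
        rw [this]
        exact isOpen_lt (dotIZ_continuous a) (dotIZ_continuous a')
      · have : {w : EuclideanSpace ℝ (Fin n) |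
            dotIZ v a < dotIZ v a' → dotIZ w a < dotIZ w a'} = Set.univ := by
          ext w; simp [h]
        rw [this]
        exact isOpen_univ
    have h2 : IsOpen {w : EuclideanSpace ℝ (Fin n) |
        ∀ i : Fin K, dotIZ v (atil i) ≠ 0 → dotIZ w (atil i) ≠ 0} := by
      have he : {w : EuclideanSpace ℝ (Fin n) |
          ∀ i : Fin K, dotIZ v (atil i) ≠ 0 → dotIZ w (atil i) ≠ 0} =
          ⋂ i : Fin K, {w : EuclideanSpace ℝ (Fin n) |
            dotIZ v (atil i) ≠ 0 → dotIZ w (atil i) ≠ 0} := by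
        ext w; simp [Set.mem_iInter]
      rw [he]
      refine isOpen_iInter_of_finite fun i => ?_
      by_cases h : dotIZ v (atil i) ≠ 0
      · have : {w : EuclideanSpace ℝ (Fin n) |
            dotIZ v (atil i) ≠ 0 → dotIZ w (atil i) ≠ 0} =
            (fun w : EuclideanSpace ℝ (Fin n) => dotIZ w (atil i)) ⁻¹' {0}ᶜ := by
          ext w; simp [h]
        rw [this]
        exact (isOpen_compl_singleton).preimage (dotIZ_continuous (atil i))
      · have : {w : EuclideanSpace ℝ (Fin n) |
            dotIZ v (atil i) ≠ 0 → dotIZ w (atil i) ≠ 0} = Set.univ := by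
          ext w; simp [h]
        rw [this]
        exact isOpen_univ
    exact h1.inter h2
  · exact ⟨Pres.refl v S, fun i h => h⟩
  · rintro w ⟨hw1, hw2⟩ hw0
    constructor
    · intro i
      rw [← hw1.initv_initv (hSsub i)]
      exact initv_mem_apos (hpos i)
    · intro ξ
      obtain ⟨i₁, hi₁⟩ := hb w hw0 ξ
      have hMv : Mv w (Mv v (I ξ) fv) (fun i => initv v (fv i)) = Mv w (I ξ) fv := by
        rw [Mv_congr (w := w) (I := Mv v (I ξ) fv) (f := fun i => initv v (fv i)) (g := fv)
          (fun i => hw1.degv_initv (hfz i) (hSsub i))]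
        exact (Mv_eq_of_pres (fun i i' h => hw1.degv_lt (hSsub i) (hSsub i') h)).symm
      rw [hMv] at hi₁
      refine ⟨i₁, ?_, hi₁.2⟩
      rcases hi₁.1 with h | h
      · exact Or.inl h
      · rcases h with h | h
        · exact Or.inl (hw2 i₁ h)
        · exact Or.inr h

end Local

end LaurentA

set_option maxHeartbeats 1000000 in
open LaurentA in
/-- Assuming (LocInf), there exists a single `f ∈ ℳ` whose initial
polynomial at every direction `v ≠ 0` lies in `(𝔸⁺)^K`, and such that
`(O_v ∪ J_ξ) ∩ M_v(I_ξ, f) ≠ ∅` for all `v ≠ 0` and all `ξ ∈ Ξ`. -/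
theorem glue_local_infinity_conditions
    {n K : ℕ} (hn : 1 ≤ n) (hK : 1 ≤ K)
    (atil : Fin K → Fin n → ℤ)
    {Ξ : Type*} [Finite Ξ] (I J : Ξ → Set (Fin K))
    (M : Submodule (LaurentA n) (Fin K → LaurentA n))
    (hLocInf : ∀ v : Fin n → ℝ, v ≠ 0 → ∃ fv ∈ M,
      (∀ i, initv v (fv i) ∈ Apos n) ∧
      ∀ w : Fin n → ℝ, w ≠ 0 → ∀ ξ : Ξ,
        ((Ov atil w ∪ (Ov atil v ∪ J ξ)) ∩
          Mv w (Mv v (I ξ) fv) (fun i => initv v (fv i))).Nonempty) :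
    ∃ f ∈ M,
      (∀ v : Fin n → ℝ, v ≠ 0 → ∀ i, initv v (f i) ∈ Apos n) ∧
      ∀ v : Fin n → ℝ, v ≠ 0 → ∀ ξ : Ξ,
        ((Ov atil v ∪ J ξ) ∩ Mv v (I ξ) f).Nonempty := by
  classical
  open scoped RealInnerProductSpace in
  -- the unit sphere in Euclidean space
  have hsph0 : ∀ x : Metric.sphere (0 : EuclideanSpace ℝ (Fin n)) 1,
      ((x : EuclideanSpace ℝ (Fin n)) : Fin n → ℝ) ≠ 0 := by
    intro x hx0
    have : (x : EuclideanSpace ℝ (Fin n)) = 0 := by ext k; exact congrFun hx0 k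
    have hm := x.2
    rw [this] at hm
    simp at hm
  have hloc : ∀ x : Metric.sphere (0 : EuclideanSpace ℝ (Fin n)) 1,
      ∃ g, g ∈ M ∧ (∀ i, g i ≠ 0) ∧ ∃ U : Set (EuclideanSpace ℝ (Fin n)), IsOpen U ∧
        (x : EuclideanSpace ℝ (Fin n)) ∈ U ∧
        ∀ w : EuclideanSpace ℝ (Fin n), w ∈ U → (w : Fin n → ℝ) ≠ 0 → PG atil I J g w :=
    fun x => local_good atil I J M hLocInf _ (hsph0 x)
  choose g hgM hgz U hUopen hUmem hUP using hloc
  -- Lebesgue number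
  obtain ⟨ρ, hρ, hleb⟩ := lebesgue_number_lemma_of_metric (isCompact_sphere (0 : EuclideanSpace ℝ (Fin n)) 1)
    hUopen (fun y hy => Set.mem_iUnion.mpr ⟨⟨y, hy⟩, hUmem ⟨y, hy⟩⟩)
  -- finite net of radius ρ/3
  obtain ⟨t, ht⟩ := (isCompact_sphere (0 : EuclideanSpace ℝ (Fin n)) 1).elim_finite_subcover
    (fun x : Metric.sphere (0 : EuclideanSpace ℝ (Fin n)) 1 =>
      Metric.ball (x : EuclideanSpace ℝ (Fin n)) (ρ/3))
    (fun x => Metric.isOpen_ball)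
    (fun y hy => Set.mem_iUnion.mpr ⟨⟨y, hy⟩, Metric.mem_ball_self (by linarith)⟩)
  -- assignment of cover elements
  have hass : ∀ x : Metric.sphere (0 : EuclideanSpace ℝ (Fin n)) 1,
      ∃ y : Metric.sphere (0 : EuclideanSpace ℝ (Fin n)) 1,
        Metric.ball (x : EuclideanSpace ℝ (Fin n)) ρ ⊆ U y := fun x => hleb x x.2
  choose nb hnb using hass
  -- constants
  set A : Finset (Fin n → ℤ) :=
    t.biUnion (fun u => Finset.univ.biUnion fun i : Fin K => ((g (nb u)) i).coeff.support) with hA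
  set R : ℝ := ∑ a ∈ A, ∑ k, |((a k : ℤ) : ℝ)| with hR
  have hR0 : 0 ≤ R := Finset.sum_nonneg fun a _ => Finset.sum_nonneg fun k _ => abs_nonneg _
  have hRb : ∀ u ∈ t, ∀ i : Fin K, ∀ a ∈ ((g (nb u)) i).coeff.support,
      (∑ k, |((a k : ℤ) : ℝ)|) ≤ R := by
    intro u hu i a ha
    have hmem : a ∈ A := by
      rw [hA]
      exact Finset.mem_biUnion.mpr ⟨u, hu, Finset.mem_biUnion.mpr ⟨i, Finset.mem_univ i, ha⟩⟩
    rw [hR]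
    exact Finset.single_le_sum (f := fun a : Fin n → ℤ => ∑ k, |((a k : ℤ) : ℝ)|)
      (fun a _ => Finset.sum_nonneg fun k _ => abs_nonneg _) hmem
  have hrdeg_bound : ∀ (x : EuclideanSpace ℝ (Fin n)), ‖x‖ = 1 → ∀ u ∈ t, ∀ i : Fin K,
      |rdegv x ((g (nb u)) i)| ≤ R := by
    intro x hx u hu i
    obtain ⟨a, ha, hda⟩ := exists_rdegv (v := (x : Fin n → ℝ)) (hgz (nb u) i)
    rw [← hda]
    exact le_trans (abs_dotIZ_le hx a) (hRb u hu i a ha)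
  set γ : ℝ := 5 * ρ^2 / 72 with hγdef
  have hγ : 0 < γ := by positivity
  obtain ⟨D, hD⟩ := exists_nat_gt ((n + 2*R + 1)/γ)
  have hDγ : (n : ℝ) + 2*R + 1 < D * γ := by
    rw [div_lt_iff₀ hγ] at hD
    linarith
  -- the shifts
  set b : Metric.sphere (0 : EuclideanSpace ℝ (Fin n)) 1 → (Fin n → ℤ) :=
    fun u => fun k => round ((D : ℝ) * (u : EuclideanSpace ℝ (Fin n)) k) with hb
  -- the glued element
  set f : Fin K → LaurentA n :=
    ∑ u ∈ t, (AddMonoidAlgebra.single (b u) (1:ℝ)) • g (nb u) with hf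
  have hfM : f ∈ M := Submodule.sum_mem _ (fun u _ => Submodule.smul_mem _ _ (hgM (nb u)))
  have hcoef : ∀ (i : Fin K) (a : Fin n → ℤ), (f i).coeff a = ∑ u ∈ t, ((g (nb u)) i).coeff (a - b u) := by
    intro i a
    rw [hf, Finset.sum_apply, AddMonoidAlgebra.coeff_sum, Finsupp.finset_sum_apply]
    apply Finset.sum_congr rfl
    intro u _
    show (AddMonoidAlgebra.single (b u) (1:ℝ) * ((g (nb u)) i)).coeff a = _
    rw [AddMonoidAlgebra.coeff_single_mul_apply, one_mul, neg_add_eq_sub]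
  -- dot products of shifts vs inner products
  have hdotb : ∀ (x : EuclideanSpace ℝ (Fin n)), ‖x‖ = 1 →
      ∀ u : Metric.sphere (0 : EuclideanSpace ℝ (Fin n)) 1,
      |dotIZ x (b u) - (D : ℝ) * ⟪x, (u : EuclideanSpace ℝ (Fin n))⟫| ≤ n / 2 := by
    intro x hx u
    rw [inner_euclid]
    have heq : dotIZ x (b u) - (D:ℝ) * ∑ k, x k * (u : EuclideanSpace ℝ (Fin n)) k
        = ∑ k, x k * (((b u) k : ℝ) - D * (u : EuclideanSpace ℝ (Fin n)) k) := by
      rw [dotIZ, Finset.mul_sum, ← Finset.sum_sub_distrib]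
      apply Finset.sum_congr rfl
      intro k _
      ring
    rw [heq]
    calc |∑ k, x k * (((b u) k : ℝ) - D * (u : EuclideanSpace ℝ (Fin n)) k)|
        ≤ ∑ k, |x k * (((b u) k : ℝ) - D * (u : EuclideanSpace ℝ (Fin n)) k)| :=
          Finset.abs_sum_le_sum_abs _ _
      _ ≤ ∑ _k : Fin n, (1/2 : ℝ) := by
          apply Finset.sum_le_sum
          intro k _
          rw [abs_mul]
          have h1 : |x k| ≤ 1 := by rw [← hx]; exact coord_le_norm x k
          have h2 : |((b u) k : ℝ) - D * (u : EuclideanSpace ℝ (Fin n)) k| ≤ 1/2 := by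
            simp only [hb]
            rw [abs_sub_comm]
            exact abs_sub_round _
          calc |x k| * |((b u) k : ℝ) - D * (u : EuclideanSpace ℝ (Fin n)) k|
              ≤ 1 * (1/2) := mul_le_mul h1 h2 (abs_nonneg _) zero_le_one
          _ = 1/2 := one_mul _
      _ = n / 2 := by
          rw [Finset.sum_const, Finset.card_univ, Fintype.card_fin, nsmul_eq_mul]
          ring
  -- the main statement for unit vectors
  have main : ∀ (x : EuclideanSpace ℝ (Fin n)), ‖x‖ = 1 → PG atil I J f x := by
    intro x hx
    have hx0 : (x : Fin n → ℝ) ≠ 0 := by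
      intro h
      have hz : x = (0 : EuclideanSpace ℝ (Fin n)) := by ext k; exact congrFun h k
      rw [hz] at hx; simpa using hx
    have hxmem : x ∈ Metric.sphere (0 : EuclideanSpace ℝ (Fin n)) 1 := by
      rwa [mem_sphere_zero_iff_norm]
    obtain ⟨us, hus⟩ := Set.mem_iUnion₂.mp (ht hxmem)
    obtain ⟨hust, husball⟩ := hus
    have husd : dist x (us : EuclideanSpace ℝ (Fin n)) < ρ/3 := Metric.mem_ball.mp husball
    have hnormu : ∀ u : Metric.sphere (0 : EuclideanSpace ℝ (Fin n)) 1,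
        ‖(u : EuclideanSpace ℝ (Fin n))‖ = 1 := fun u => mem_sphere_zero_iff_norm.mp u.2
    have hgood : ∀ u : Metric.sphere (0 : EuclideanSpace ℝ (Fin n)) 1,
        dist x (u : EuclideanSpace ℝ (Fin n)) < ρ/2 →
        PG atil I J (g (nb u)) x := by
      intro u hd
      exact hUP (nb u) x (hnb u (Metric.mem_ball.mpr (by linarith))) hx0
    have hinner : ∀ u : Metric.sphere (0 : EuclideanSpace ℝ (Fin n)) 1,
        ρ/2 ≤ dist x (u : EuclideanSpace ℝ (Fin n)) →
        γ ≤ ⟪x, (us : EuclideanSpace ℝ (Fin n))⟫ - ⟪x, (u : EuclideanSpace ℝ (Fin n))⟫ := by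
      intro u hd
      have e1 : ‖x - (us : EuclideanSpace ℝ (Fin n))‖^2
          = 2 - 2*⟪x, (us : EuclideanSpace ℝ (Fin n))⟫ := by
        rw [norm_sub_sq_real, hx, hnormu us]; ring
      have e2 : ‖x - (u : EuclideanSpace ℝ (Fin n))‖^2
          = 2 - 2*⟪x, (u : EuclideanSpace ℝ (Fin n))⟫ := by
        rw [norm_sub_sq_real, hx, hnormu u]; ring
      have hn1 : ‖x - (us : EuclideanSpace ℝ (Fin n))‖ < ρ/3 := by
        rwa [← dist_eq_norm]
      have hn2 : ρ/2 ≤ ‖x - (u : EuclideanSpace ℝ (Fin n))‖ := by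
        rwa [← dist_eq_norm]
      have hn1' : ‖x - (us : EuclideanSpace ℝ (Fin n))‖^2 < (ρ/3)^2 := by
        apply pow_lt_pow_left₀ hn1 (norm_nonneg _)
        norm_num
      have hn2' : (ρ/2)^2 ≤ ‖x - (u : EuclideanSpace ℝ (Fin n))‖^2 := by
        apply pow_le_pow_left₀ (by positivity) hn2
      rw [hγdef]
      nlinarith [hn1', hn2', e1, e2]
    set d : Metric.sphere (0 : EuclideanSpace ℝ (Fin n)) 1 → Fin K → ℝ :=
      fun u i => dotIZ x (b u) + rdegv x ((g (nb u)) i) with hd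
    have hdom : ∀ u ∈ t, ρ/2 ≤ dist x (u : EuclideanSpace ℝ (Fin n)) →
        ∀ i, d u i + 1 ≤ d us i := by
      intro u hu hdist i
      have hb1 := hdotb x hx u
      have hb2 := hdotb x hx us
      have hin := hinner u hdist
      have hr1 := hrdeg_bound x hx u hu i
      have hr2 := hrdeg_bound x hx us hust i
      have hmul : (D:ℝ) * γ ≤ D * (⟪x, (us : EuclideanSpace ℝ (Fin n))⟫
          - ⟪x, (u : EuclideanSpace ℝ (Fin n))⟫) :=
        mul_le_mul_of_nonneg_left hin (Nat.cast_nonneg D)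
      have ha1 := abs_le.mp hb1
      have ha2 := abs_le.mp hb2
      have ha3 := abs_le.mp hr1
      have ha4 := abs_le.mp hr2
      simp only [hd]
      have hn2 : (0:ℝ) ≤ n := Nat.cast_nonneg n
      nlinarith [hDγ, hmul, ha1.1, ha1.2, ha2.1, ha2.2, ha3.1, ha3.2, ha4.1, ha4.2]
    set di : Fin K → ℝ := fun i => t.sup' ⟨us, hust⟩ (fun u => d u i) with hdi
    have hdile : ∀ u ∈ t, ∀ i, d u i ≤ di i := by
      intro u hu i
      simp only [hdi]
      exact Finset.le_sup' (fun u => d u i) hu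
    have hterm_le : ∀ u i (a : Fin n → ℤ), ((g (nb u)) i).coeff (a - b u) ≠ 0 → dotIZ x a ≤ d u i := by
      intro u i a h
      have hmem : a - b u ∈ ((g (nb u)) i).coeff.support := Finsupp.mem_support_iff.mpr h
      have hle := dotIZ_le_rdegv (v := (x : Fin n → ℝ)) (hgz (nb u) i) hmem
      rw [dotIZ_sub] at hle
      simp only [hd]
      linarith
    have C2 : ∀ i (a : Fin n → ℤ), di i < dotIZ x a → (f i).coeff a = 0 := by
      intro i a hlt
      rw [hcoef]
      apply Finset.sum_eq_zero
      intro u hu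
      by_contra h
      exact absurd (le_trans (hterm_le u i a h) (hdile u hu i)) (not_le.mpr hlt)
    have Goodtop : ∀ i, ∀ u ∈ t, di i ≤ d u i → dist x (u : EuclideanSpace ℝ (Fin n)) < ρ/2 := by
      intro i u hu hle
      by_contra hbad
      have h1 := hdom u hu (le_of_not_gt hbad) i
      have h2 := hdile us hust i
      linarith
    have C3' : ∀ i (a : Fin n → ℤ), dotIZ x a = di i → ∀ u ∈ t, 0 ≤ ((g (nb u)) i).coeff (a - b u) := by
      intro i a hda u hu
      by_cases h0 : ((g (nb u)) i).coeff (a - b u) = 0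
      · rw [h0]
      have h1 : dotIZ x a ≤ d u i := hterm_le u i a h0
      have h2 : d u i ≤ di i := hdile u hu i
      have heq : d u i = di i := le_antisymm h2 (hda ▸ h1)
      have hgoodu := hgood u (Goodtop i u hu heq.ge)
      have hApos := hgoodu.1 i
      have hrd : dotIZ x (a - b u) = rdegv x ((g (nb u)) i) := by
        rw [dotIZ_sub]
        simp only [hd] at heq
        linarith [heq, hda]
      have hnn := hApos.2 (a - b u)
      rw [initv_apply' (hgz (nb u) i), if_pos hrd] at hnn
      exact hnn
    have C4 : ∀ i, ∃ a, dotIZ x a = di i ∧ 0 < (f i).coeff a := by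
      intro i
      obtain ⟨u₀, hu₀t, hu₀⟩ := Finset.exists_mem_eq_sup' (H := ⟨us, hust⟩) (fun u => d u i)
      have hdieq : di i = d u₀ i := by rw [hdi]; exact hu₀
      have hu₀good : dist x (u₀ : EuclideanSpace ℝ (Fin n)) < ρ/2 :=
        Goodtop i u₀ hu₀t hdieq.le
      have hApos := (hgood u₀ hu₀good).1 i
      obtain ⟨a₀, ha₀⟩ : ∃ a₀, (initv x ((g (nb u₀)) i)).coeff a₀ ≠ 0 := by
        by_contra h
        push_neg at h
        exact hApos.1 (AddMonoidAlgebra.ext (Finsupp.ext h))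
      have ha₀pos : 0 < (initv x ((g (nb u₀)) i)).coeff a₀ := lt_of_le_of_ne (hApos.2 a₀) (Ne.symm ha₀)
      have hda₀ : dotIZ x a₀ = rdegv x ((g (nb u₀)) i) := by
        by_contra h
        rw [initv_apply' (hgz (nb u₀) i), if_neg h] at ha₀
        exact ha₀ rfl
      have hga₀ : ((g (nb u₀)) i).coeff a₀ = (initv x ((g (nb u₀)) i)).coeff a₀ := by
        rw [initv_apply' (hgz (nb u₀) i), if_pos hda₀]
      have hdota : dotIZ x (a₀ + b u₀) = di i := by
        rw [dotIZ_add, hda₀, hdieq]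
        simp only [hd]
        ring
      refine ⟨a₀ + b u₀, hdota, ?_⟩
      rw [hcoef]
      apply Finset.sum_pos'
      · intro u hu
        exact C3' i (a₀ + b u₀) hdota u hu
      · refine ⟨u₀, hu₀t, ?_⟩
        rw [add_sub_cancel_right, hga₀]
        exact ha₀pos
    have hdeg : ∀ i, f i ≠ 0 ∧ rdegv x (f i) = di i := by
      intro i
      obtain ⟨a, hda, hpos⟩ := C4 i
      have hfz : f i ≠ 0 := by
        intro h
        rw [h] at hpos
        simp at hpos
      refine ⟨hfz, ?_⟩
      apply le_antisymm
      · obtain ⟨a', ha', hda'⟩ := exists_rdegv (v := (x : Fin n → ℝ)) hfz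
        rw [← hda']
        by_contra h
        exact absurd (C2 i a' (not_le.mp h)) (Finsupp.mem_support_iff.mp ha')
      · rw [← hda]
        exact dotIZ_le_rdegv hfz (Finsupp.mem_support_iff.mpr (ne_of_gt hpos))
    refine ⟨?_, ?_⟩
    · intro i
      obtain ⟨hfz, hrd⟩ := hdeg i
      refine ⟨initv_ne_zero hfz, ?_⟩
      intro a'
      rw [initv_apply' hfz]
      split
      case isTrue h =>
        rw [hcoef]
        apply Finset.sum_nonneg
        intro u hu
        exact C3' i a' (by rw [h, hrd]) u hu
      case isFalse h => exact le_refl 0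
    · intro ξ
      have husgood := hgood us (by linarith)
      obtain ⟨i', hi'⟩ := husgood.2 ξ
      have hi'I : i' ∈ I ξ := hi'.2.1
      set Sξ : Finset (Fin K) := Set.Finite.toFinset (Set.toFinite (I ξ)) with hSξ
      have hSmem : ∀ i'', i'' ∈ Sξ ↔ i'' ∈ I ξ := fun i'' => Set.Finite.mem_toFinset _
      set s : Finset (Metric.sphere (0 : EuclideanSpace ℝ (Fin n)) 1 × Fin K) := t ×ˢ Sξ with hs
      have hsne : s.Nonempty := ⟨(us, i'), Finset.mem_product.mpr ⟨hust, (hSmem i').mpr hi'I⟩⟩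
      obtain ⟨⟨u₀, i₀⟩, hmem, hmax⟩ := Finset.exists_max_image s (fun p => d p.1 p.2) hsne
      have hu₀t := (Finset.mem_product.mp hmem).1
      have hi₀I : i₀ ∈ I ξ := (hSmem i₀).mp (Finset.mem_product.mp hmem).2
      have hu₀good : dist x (u₀ : EuclideanSpace ℝ (Fin n)) < ρ/2 := by
        by_contra hbad
        have h1 := hdom u₀ hu₀t (le_of_not_gt hbad) i₀
        have h2 := hmax (us, i₀) (Finset.mem_product.mpr ⟨hust, (hSmem i₀).mpr hi₀I⟩)
        simp only at h2
        linarith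
      obtain ⟨i₁, hi₁⟩ := (hgood u₀ hu₀good).2 ξ
      refine ⟨i₁, hi₁.1, hi₁.2.1, ?_⟩
      intro i'' hi''
      obtain ⟨hfz'', hrd''⟩ := hdeg i''
      obtain ⟨hfz₁, hrd₁⟩ := hdeg i₁
      rw [degv_eq_coe (v := (x : Fin n → ℝ)) hfz'', degv_eq_coe (v := (x : Fin n → ℝ)) hfz₁,
        hrd'', hrd₁, WithBot.coe_le_coe]
      have step1 : di i'' ≤ d u₀ i₀ := by
        rw [hdi]
        apply Finset.sup'_le
        intro u hu
        exact hmax (u, i'') (Finset.mem_product.mpr ⟨hu, (hSmem i'').mpr hi''⟩)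
      have step2 : d u₀ i₀ ≤ d u₀ i₁ := by
        have hle := hi₁.2.2 i₀ hi₀I
        rw [degv_eq_coe (v := (x : Fin n → ℝ)) (hgz (nb u₀) i₀),
          degv_eq_coe (v := (x : Fin n → ℝ)) (hgz (nb u₀) i₁), WithBot.coe_le_coe] at hle
        simp only [hd]
        linarith
      have step3 : d u₀ i₁ ≤ di i₁ := hdile u₀ hu₀t i₁
      linarith
  -- conclude by scaling
  have scale : ∀ v : Fin n → ℝ, v ≠ 0 → ∃ c : ℝ, 0 < c ∧
      ∃ u : EuclideanSpace ℝ (Fin n), ‖u‖ = 1 ∧ v = c • (fun k => u k : Fin n → ℝ) := by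
    intro v hv
    have hxe : (WithLp.equiv 2 (Fin n → ℝ)).symm v ≠ 0 := by
      intro h
      apply hv
      funext k
      exact congrArg (fun z : EuclideanSpace ℝ (Fin n) => z k) h
    have hc : 0 < ‖(WithLp.equiv 2 (Fin n → ℝ)).symm v‖ := norm_pos_iff.mpr hxe
    refine ⟨_, hc,
      (‖(WithLp.equiv 2 (Fin n → ℝ)).symm v‖⁻¹ : ℝ) • (WithLp.equiv 2 (Fin n → ℝ)).symm v,
      norm_smul_inv_norm (𝕜 := ℝ) hxe, ?_⟩
    funext k
    rw [Pi.smul_apply, PiLp.smul_apply, smul_eq_mul, smul_eq_mul, ← mul_assoc,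
      mul_inv_cancel₀ (ne_of_gt hc), one_mul]
    rfl
  refine ⟨f, hfM, ?_, ?_⟩
  · intro v hv i
    obtain ⟨c, hc, u, hu1, hveq⟩ := scale v hv
    have hmain := main u hu1
    rw [hveq, initv_smul hc]
    exact hmain.1 i
  · intro v hv ξ
    obtain ⟨c, hc, u, hu1, hveq⟩ := scale v hv
    have hmain := main u hu1
    rw [hveq, Ov_smul (ne_of_gt hc), Mv_smul hc]
    exact hmain.2 ξ
end
end

section
/- Let g₁,…,g_m ∈ 𝔸^K be tuples of Laurent polynomials all of whose coefficients are integers. Suppose there exist h₁,…,h_m ∈ 𝔸 such that the tuple f := Σ_{j=1}^m h_j·g_j has every component f_i nonzero with all coefficients ≥ 0. Then there exist h̃₁,…,h̃_m ∈ 𝔸 with all coefficients integers such that the tuple f̃ := Σ_{j=1}^m h̃_j·g_j has every component f̃_i with all coefficients nonnegative integers, and moreover the support of f̃_i (the set of a ∈ ℤⁿ with nonzero coefficient) equals the support of f_i for each i = 1,…,K; in particular each f̃_i is nonzero. -/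
noncomputable section

lemma denclear (q : ℚ) (N : ℕ) (hd : q.den ∣ N) : ∃ z : ℤ, (N : ℚ) * q = (z : ℚ) := by
  obtain ⟨k, hk⟩ := hd
  refine ⟨q.num * k, ?_⟩
  subst hk
  push_cast
  rw [mul_comm (q.den : ℚ) (k : ℚ), mul_assoc, mul_comm (q.den : ℚ) q, Rat.mul_den_eq_num]
  ring

lemma exists_rat_functional (V : Submodule ℚ ℝ) [FiniteDimensional ℚ V] (X : Finset ℝ)
    (hX : ∀ x ∈ X, x ∈ V) (hposX : ∀ x ∈ X, 0 < x) :
    ∃ (φ : ℝ →ₗ[ℚ] ℝ) (ρ : ℝ → ℚ), (∀ x, φ x = (ρ x : ℝ)) ∧ (∀ x ∈ X, 0 < φ x) := by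
  classical
  rcases X.eq_empty_or_nonempty with rfl | hne
  · exact ⟨0, 0, by simp, by simp⟩
  obtain ⟨W, hW⟩ := Submodule.exists_isCompl V
  set d := Module.finrank ℚ V with hd
  let b : Module.Basis (Fin d) ℚ V := Module.finBasis ℚ V
  set π : ℝ →ₗ[ℚ] V := Submodule.projectionOnto V W hW with hπ
  -- bound
  set M : ℝ := 1 + ∑ x ∈ X.attach, ∑ t, |((b.repr ⟨x.1, hX x.1 x.2⟩ t : ℚ) : ℝ)| with hM
  have hMpos : 0 < M := by
    have : (0:ℝ) ≤ ∑ x ∈ X.attach, ∑ t, |((b.repr ⟨x.1, hX x.1 x.2⟩ t : ℚ) : ℝ)| := by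
      positivity
    linarith
  set μ : ℝ := X.min' hne with hμ
  have hμpos : 0 < μ := hposX _ (X.min'_mem hne)
  set ε : ℝ := μ / M with hε
  have hεpos : 0 < ε := div_pos hμpos hMpos
  have hq : ∀ t : Fin d, ∃ q : ℚ, |((b t : ℝ)) - q| < ε := fun t => exists_rat_near _ hεpos
  choose q hqq using hq
  -- the linear functional on V
  let L2 : (Fin d →₀ ℚ) →ₗ[ℚ] ℚ :=
    { toFun := fun c => ∑ t, c t * q t
      map_add' := by intro c₁ c₂; simp [Finsupp.add_apply, add_mul, Finset.sum_add_distrib]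
      map_smul' := by intro r c; simp [Finsupp.smul_apply, smul_eq_mul, Finset.mul_sum, mul_assoc] }
  let φV : V →ₗ[ℚ] ℚ := L2 ∘ₗ (b.repr : V →ₗ[ℚ] (Fin d →₀ ℚ))
  let ρ : ℝ → ℚ := fun x => φV (π x)
  let φ : ℝ →ₗ[ℚ] ℝ := (Algebra.linearMap ℚ ℝ) ∘ₗ φV ∘ₗ π
  have hφρ : ∀ x, φ x = (ρ x : ℝ) := fun x => rfl
  refine ⟨φ, ρ, hφρ, ?_⟩
  intro x hx
  have hxV : x ∈ V := hX x hx
  set c : Fin d →₀ ℚ := b.repr ⟨x, hxV⟩ with hc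
  have hπx : π x = ⟨x, hxV⟩ := Submodule.projectionOnto_apply_left hW ⟨x, hxV⟩
  have hφx : φ x = ∑ t, (c t : ℝ) * (q t : ℝ) := by
    show ((φV (π x) : ℚ) : ℝ) = _
    rw [hπx]
    show ((∑ t, c t * q t : ℚ) : ℝ) = _
    push_cast
    rfl
  have hxsum : x = ∑ t, (c t : ℝ) * ((b t : ℝ)) := by
    conv_lhs => rw [show x = ((⟨x, hxV⟩ : V) : ℝ) from rfl, ← b.sum_repr ⟨x, hxV⟩]
    push_cast [Submodule.coe_sum]
    refine Finset.sum_congr rfl fun t _ => ?_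
    rw [Rat.smul_def]
  have hdiff : |x - φ x| ≤ (M - 1) * ε := by
    rw [hφx, hxsum, ← Finset.sum_sub_distrib]
    calc |∑ t, ((c t : ℝ) * (b t : ℝ) - (c t : ℝ) * (q t : ℝ))|
        ≤ ∑ t, |(c t : ℝ) * (b t : ℝ) - (c t : ℝ) * (q t : ℝ)| := Finset.abs_sum_le_sum_abs _ _
      _ ≤ ∑ t, |(c t : ℝ)| * ε := by
          refine Finset.sum_le_sum fun t _ => ?_
          rw [← mul_sub, abs_mul]
          exact mul_le_mul_of_nonneg_left (le_of_lt (hqq t)) (abs_nonneg _)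
      _ = (∑ t, |(c t : ℝ)|) * ε := by rw [Finset.sum_mul]
      _ ≤ (M - 1) * ε := by
          refine mul_le_mul_of_nonneg_right ?_ (le_of_lt hεpos)
          have key : ∀ x' ∈ X.attach, (0:ℝ) ≤ ∑ t, |((b.repr ⟨x'.1, hX x'.1 x'.2⟩ t : ℚ) : ℝ)| :=
            fun x' _ => Finset.sum_nonneg fun t _ => abs_nonneg _
          have h1 := Finset.single_le_sum key (Finset.mem_attach _ ⟨x, hx⟩)
          have h2 : ∑ t, |(c t : ℝ)| = ∑ t, |((b.repr ⟨(⟨x, hx⟩ : {y // y ∈ X}).1, hX _ (⟨x, hx⟩ : {y // y ∈ X}).2⟩ t : ℚ) : ℝ)| := rfl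
          rw [hM, h2]
          linarith
  have hlt : (M - 1) * ε < μ := by
    rw [hε]
    have : (M - 1) * (μ / M) < M * (μ / M) := by
      apply mul_lt_mul_of_pos_right (by linarith) (div_pos hμpos hMpos)
    rw [mul_div_cancel₀ μ (ne_of_gt hMpos)] at this
    linarith
  have hxμ : μ ≤ x := X.min'_le x hx
  have := abs_sub_lt_iff.mp (lt_of_le_of_lt hdiff hlt)
  linarith [this.1]


def mapC {n : ℕ} (Φ : ℝ →ₗ[ℚ] ℝ) (p : LaurentA n) : LaurentA n :=
  AddMonoidAlgebra.ofCoeff (Finsupp.mapRange Φ Φ.map_zero p.coeff)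

lemma mapC_apply {n : ℕ} (Φ : ℝ →ₗ[ℚ] ℝ) (p : LaurentA n) (a : Fin n → ℤ) :
    (mapC Φ p).coeff a = Φ (p.coeff a) := rfl

lemma mapRange_mul_apply {n : ℕ} (Φ : ℝ →ₗ[ℚ] ℝ) (p q : LaurentA n)
    (hq : ∀ a, ∃ z : ℤ, q.coeff a = (z : ℝ)) (x : Fin n → ℤ) :
    (mapC Φ p * q).coeff x = Φ ((p * q).coeff x) := by
  classical
  rw [AddMonoidAlgebra.coeff_mul, AddMonoidAlgebra.coeff_mul]
  show (Finsupp.mapRange Φ Φ.map_zero p.coeff).sum _ = _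
  rw [Finsupp.sum_mapRange_index (by intro b; simp)]
  rw [map_finsuppSum]
  refine Finsupp.sum_congr fun b _ => ?_
  rw [map_finsuppSum]
  refine Finsupp.sum_congr fun c _ => ?_
  split_ifs with hbc
  · obtain ⟨z, hz⟩ := hq c
    rw [hz]
    have h1 : p.coeff b * (z : ℝ) = (z : ℚ) • p.coeff b := by
      rw [Rat.smul_def]; push_cast; ring
    rw [h1, map_smul, Rat.smul_def]
    push_cast; ring
  · exact (map_zero Φ).symm

open LaurentA in
/-- If `g₁,…,g_m ∈ 𝔸^K` have integer coefficients and some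
`𝔸`-combination `f = Σ h_j·g_j` has every component nonzero with nonnegative
coefficients, then there is an integer-coefficient combination `f̃ = Σ h̃_j·g_j` whose
components have nonnegative integer coefficients and the same supports as those of `f`. -/
theorem integer_combination_with_same_support
    {n K : ℕ} (hn : 1 ≤ n) (hK : 1 ≤ K) {m : ℕ}
    (g : Fin m → Fin K → LaurentA n)
    (hg : ∀ j i a, ∃ z : ℤ, (g j i).coeff a = (z : ℝ))
    (h : Fin m → LaurentA n)
    (hpos : ∀ i, (∑ j, h j * g j i) ≠ 0 ∧ ∀ a, 0 ≤ (∑ j, h j * g j i).coeff a) :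
    ∃ h' : Fin m → LaurentA n,
      (∀ j a, ∃ z : ℤ, (h' j).coeff a = (z : ℝ)) ∧
      (∀ i a, ∃ z : ℕ, (∑ j, h' j * g j i).coeff a = (z : ℝ)) ∧
      (∀ i, (∑ j, h' j * g j i).coeff.support = (∑ j, h j * g j i).coeff.support) := by

  classical
  set f : Fin K → LaurentA n := fun i => ∑ j, h j * g j i with hfdef
  let X : Finset ℝ := Finset.univ.biUnion fun i => (f i).coeff.support.image (f i).coeff
  have hXpos : ∀ x ∈ X, 0 < x := by
    intro x hx
    simp only [X, Finset.mem_biUnion, Finset.mem_image, Finset.mem_univ, true_and] at hx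
    obtain ⟨i, a, ha, rfl⟩ := hx
    exact lt_of_le_of_ne ((hpos i).2 a) (Ne.symm (Finsupp.mem_support_iff.mp ha))
  have hmemX : ∀ i, ∀ a ∈ (f i).coeff.support, (f i).coeff a ∈ X := by
    intro i a ha
    simp only [X, Finset.mem_biUnion, Finset.mem_image, Finset.mem_univ, true_and]
    exact ⟨i, a, ha, rfl⟩
  set V := Submodule.span ℚ (X : Set ℝ) with hV
  have : FiniteDimensional ℚ V := FiniteDimensional.span_of_finite ℚ X.finite_toSet
  obtain ⟨φ, ρ, hφρ, hφpos⟩ :=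
    exists_rat_functional V X (fun x hx => Submodule.subset_span hx) hXpos
  -- common denominator
  set N : ℕ := (∏ j, ∏ b ∈ (h j).coeff.support, (ρ ((h j).coeff b)).den) *
      (∏ i, ∏ a ∈ (f i).coeff.support, (ρ ((f i).coeff a)).den) with hN
  have hNpos : 0 < N := by
    apply Nat.mul_pos <;>
      exact Finset.prod_pos fun _ _ => Finset.prod_pos fun _ _ => Rat.den_pos _
  set Ψ : ℝ →ₗ[ℚ] ℝ := (N : ℚ) • φ with hΨ
  have hΨval : ∀ x, Ψ x = ((N : ℚ) * ρ x : ℚ) := by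
    intro x
    rw [hΨ]
    simp only [LinearMap.smul_apply, Rat.smul_def, hφρ x]
    push_cast
    ring
  refine ⟨fun j => mapC Ψ (h j), ?_, ?_, ?_⟩
  · -- integer coefficients of h'
    intro j a
    rw [mapC_apply]
    by_cases ha : a ∈ (h j).coeff.support
    · have hdvd : (ρ ((h j).coeff a)).den ∣ N := by
        rw [hN]
        refine dvd_mul_of_dvd_left ?_ _
        exact dvd_trans (Finset.dvd_prod_of_mem (fun b => (ρ ((h j).coeff b)).den) ha)
          (Finset.dvd_prod_of_mem (fun j' => ∏ b ∈ (h j').coeff.support, (ρ ((h j').coeff b)).den)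
            (Finset.mem_univ j))
      obtain ⟨z, hz⟩ := denclear _ N hdvd
      refine ⟨z, ?_⟩
      rw [hΨval]
      exact_mod_cast congrArg (fun r : ℚ => (r : ℝ)) hz
    · refine ⟨0, ?_⟩
      rw [Finsupp.notMem_support_iff.mp ha, map_zero]
      simp
  · -- nonneg integer coefficients of f'
    intro i a
    have hkey : (∑ j, mapC Ψ (h j) * g j i).coeff a = Ψ ((f i).coeff a) := by
      rw [AddMonoidAlgebra.coeff_sum, Finsupp.finset_sum_apply]
      have : ∀ j ∈ Finset.univ, (mapC Ψ (h j) * g j i).coeff a = Ψ ((h j * g j i).coeff a) :=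
        fun j _ => mapRange_mul_apply Ψ (h j) (g j i) (hg j i) a
      rw [Finset.sum_congr rfl this, ← map_sum, hfdef]
      congr 1
      simp only [AddMonoidAlgebra.coeff_sum, Finsupp.finset_sum_apply]
    by_cases ha : a ∈ (f i).coeff.support
    · have hdvd : (ρ ((f i).coeff a)).den ∣ N := by
        rw [hN]
        exact Dvd.dvd.mul_left
          (dvd_trans (Finset.dvd_prod_of_mem _ ha) (Finset.dvd_prod_of_mem _ (Finset.mem_univ i))) _
      obtain ⟨z, hz⟩ := denclear _ N hdvd
      have hval : (∑ j, mapC Ψ (h j) * g j i).coeff a = (z : ℝ) := by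
        rw [hkey, hΨval]
        exact_mod_cast congrArg (fun r : ℚ => (r : ℝ)) hz
      have h1 := hφpos _ (hmemX i a ha)
      rw [hφρ] at h1
      have hρpos : 0 < ρ ((f i).coeff a) := by exact_mod_cast h1
      have hzpos : (0:ℚ) < (z:ℚ) := hz ▸ mul_pos (by exact_mod_cast hNpos) hρpos
      have hzle : (0:ℤ) ≤ z := by exact_mod_cast hzpos.le
      refine ⟨z.toNat, ?_⟩
      rw [hval]
      norm_cast
      omega
    · refine ⟨0, ?_⟩
      rw [hkey, Finsupp.notMem_support_iff.mp ha, map_zero]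
      simp
  · -- same support
    intro i
    ext a
    have hkey : (∑ j, mapC Ψ (h j) * g j i).coeff a = Ψ ((f i).coeff a) := by
      rw [AddMonoidAlgebra.coeff_sum, Finsupp.finset_sum_apply]
      have : ∀ j ∈ Finset.univ, (mapC Ψ (h j) * g j i).coeff a = Ψ ((h j * g j i).coeff a) :=
        fun j _ => mapRange_mul_apply Ψ (h j) (g j i) (hg j i) a
      rw [Finset.sum_congr rfl this, ← map_sum, hfdef]
      congr 1
      simp only [AddMonoidAlgebra.coeff_sum, Finsupp.finset_sum_apply]
    simp only [Finsupp.mem_support_iff]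
    constructor
    · intro hne hc
      apply hne
      show (∑ j, mapC Ψ (h j) * g j i).coeff a = 0
      rw [hkey]
      show Ψ ((f i).coeff a) = 0
      have : (f i).coeff a = 0 := hc
      rw [this, map_zero]
    · intro hne
      have hpos' : 0 < Ψ ((f i).coeff a) := by
        rw [hΨval]
        have h1 := hφpos _ (hmemX i a (Finsupp.mem_support_iff.mpr hne))
        rw [hφρ] at h1
        have hρpos : 0 < ρ ((f i).coeff a) := by exact_mod_cast h1
        have : (0:ℚ) < (N:ℚ) * ρ ((f i).coeff a) := mul_pos (by exact_mod_cast hNpos) hρpos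
        exact_mod_cast this
      show (∑ j, mapC Ψ (h j) * g j i).coeff a ≠ 0
      rw [hkey]
      exact ne_of_gt hpos'
end
end

section
/- Let G be a group and A a trim automaton over G. Then ev(A) is a group (i.e., ev(A) is nonempty and closed under taking inverses in G) if and only if A admits an Identity Traversal, that is, an accepting run that uses every transition of A at least once and whose evaluation is the identity element of G. -/
/-- An automaton over a group `G`: finitely many states `Q` with a distinguished state
`q₁` (both initial and accepting), finitely many transitions `ι` with source, target and
evaluation maps. -/
structure GAutomaton (G Q ι : Type*) where
  q1 : Q
  src : ι → Q
  tgt : ι → Q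
  ev : ι → G

namespace GAutomaton

variable {G Q ι : Type*}

/-- An accepting run: a nonempty composable sequence of transitions starting and
ending at `q₁`. -/
def IsAccepting (A : GAutomaton G Q ι) (w : List ι) : Prop :=
  w ≠ [] ∧ w.Chain' (fun x y => A.tgt x = A.src y) ∧
    (∀ x ∈ w.head?, A.src x = A.q1) ∧ (∀ x ∈ w.getLast?, A.tgt x = A.q1)

/-- `ev(A)`: the set of evaluations of accepting runs. -/
def evSet [Monoid G] (A : GAutomaton G Q ι) : Set G :=
  {g | ∃ w : List ι, A.IsAccepting w ∧ (w.map A.ev).prod = g}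

/-- Trim: every state is the source of some transition and every transition occurs in
some accepting run. -/
def Trim (A : GAutomaton G Q ι) : Prop :=
  (∀ q : Q, ∃ ℓ : ι, A.src ℓ = q) ∧ ∀ ℓ : ι, ∃ w, A.IsAccepting w ∧ ℓ ∈ w

end GAutomaton

namespace GAutomaton

variable {G Q ι : Type*}

/-- A (possibly empty) composable run from `s` to `t`. -/
def RunFT (A : GAutomaton G Q ι) (v : List ι) (s t : Q) : Prop :=
  v.Chain' (fun x y => A.tgt x = A.src y) ∧ (v = [] → s = t) ∧
  (∀ x ∈ v.head?, A.src x = s) ∧ (∀ x ∈ v.getLast?, A.tgt x = t)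

lemma mem_getLast?_cons {α : Type*} {x h : α} {t : List α} (hx : x ∈ t.getLast?) :
    x ∈ (h :: t).getLast? := by
  cases t with
  | nil => simp at hx
  | cons a t => rwa [List.getLast?_cons_cons]

lemma isAccepting_iff {A : GAutomaton G Q ι} {w : List ι} :
    A.IsAccepting w ↔ w ≠ [] ∧ A.RunFT w A.q1 A.q1 := by
  unfold IsAccepting RunFT
  refine ⟨fun ⟨h1, h2, h3, h4⟩ => ⟨h1, h2, fun _ => rfl, h3, h4⟩,
    fun ⟨h1, h2, _, h3, h4⟩ => ⟨h1, h2, h3, h4⟩⟩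

lemma RunFT.append {A : GAutomaton G Q ι} {v₁ v₂ : List ι} {s m t : Q}
    (h₁ : A.RunFT v₁ s m) (h₂ : A.RunFT v₂ m t) : A.RunFT (v₁ ++ v₂) s t := by
  obtain ⟨c₁, e₁, hh₁, hl₁⟩ := h₁
  obtain ⟨c₂, e₂, hh₂, hl₂⟩ := h₂
  rcases v₁ with _ | ⟨a, v₁⟩
  · rw [e₁ rfl]; exact ⟨c₂, e₂, hh₂, hl₂⟩
  rcases v₂ with _ | ⟨b, v₂⟩
  · rw [List.append_nil]
    exact ⟨c₁, fun h => by simp at h, hh₁, fun x hx => e₂ rfl ▸ hl₁ x hx⟩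
  refine ⟨List.isChain_append.mpr ⟨c₁, c₂, fun x hx y hy => by rw [hl₁ x hx, hh₂ y hy]⟩,
    fun h => by simp at h, ?_, ?_⟩
  · intro x hx
    rw [List.cons_append, List.head?_cons, Option.mem_some_iff] at hx
    exact hx ▸ hh₁ a (by simp)
  · intro x hx
    apply hl₂ x
    rw [List.getLast?_append] at hx
    rcases h3 : (b :: v₂).getLast? with _ | y
    · simp [List.getLast?_eq_none_iff] at h3
    · rw [h3] at hx; simpa using hx

lemma IsAccepting.append {A : GAutomaton G Q ι} {w v : List ι}
    (hw : A.IsAccepting w) (hv : A.IsAccepting v) : A.IsAccepting (w ++ v) := by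
  rw [isAccepting_iff] at *
  exact ⟨by simp [hw.1], hw.2.append hv.2⟩

lemma decomp {A : GAutomaton G Q ι} {a b : List ι} {ℓ : ι}
    (hw : A.IsAccepting (a ++ ℓ :: b)) :
    A.RunFT a A.q1 (A.src ℓ) ∧ A.RunFT b (A.tgt ℓ) A.q1 := by
  obtain ⟨hne, hc, hh, hl⟩ := hw
  rw [List.Chain', List.isChain_append, List.isChain_cons] at hc
  obtain ⟨ca, ⟨hbh, cb⟩, hbd⟩ := hc
  constructor
  · refine ⟨ca, fun h => ?_, fun x hx => ?_, fun x hx => hbd x hx ℓ (by simp)⟩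
    · subst h; exact (hh ℓ (by simp)).symm
    · apply hh x
      rw [List.head?_append, Option.mem_def] at *
      rw [hx]; rfl
  · refine ⟨cb, fun h => ?_, fun y hy => (hbh y hy).symm, fun x hx => ?_⟩
    · subst h; exact hl ℓ (by simp)
    · exact hl x (by rw [List.getLast?_append]; exact Option.mem_def.mpr (by
        rw [Option.or_eq_some_iff]; left
        exact Option.mem_def.mp (mem_getLast?_cons hx)))

lemma inv_run [Group G] {A : GAutomaton G Q ι}
    (hdec : ∀ ℓ : ι, ∃ a b, A.RunFT a A.q1 (A.src ℓ) ∧ A.RunFT b (A.tgt ℓ) A.q1 ∧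
      (b.map A.ev).prod * (a.map A.ev).prod = (A.ev ℓ)⁻¹) :
    ∀ (u : List ι) (s : Q), A.RunFT u s A.q1 →
      ∃ v, A.RunFT v A.q1 s ∧ (v.map A.ev).prod = ((u.map A.ev).prod)⁻¹ := by
  intro u
  induction u with
  | nil =>
    intro s h
    exact ⟨[], by rw [h.2.1 rfl]; exact ⟨List.isChain_nil, fun _ => rfl, by simp, by simp⟩, by simp⟩
  | cons ℓ u' ih =>
    intro s h
    obtain ⟨hc, -, hh, hl⟩ := h
    rw [List.Chain', List.isChain_cons] at hc
    have hs : A.src ℓ = s := hh ℓ (by simp)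
    have hu' : A.RunFT u' (A.tgt ℓ) A.q1 := by
      refine ⟨hc.2, fun hn => ?_, fun y hy => (hc.1 y hy).symm, fun x hx => hl x (mem_getLast?_cons hx)⟩
      · subst hn; exact hl ℓ (by simp)
    obtain ⟨v', hv', hpv'⟩ := ih (A.tgt ℓ) hu'
    obtain ⟨a, b, ha, hb, hab⟩ := hdec ℓ
    refine ⟨v' ++ (b ++ a), hs ▸ hv'.append (hb.append ha), ?_⟩
    rw [List.map_append, List.prod_append, List.map_append, List.prod_append, hpv', hab,
      List.map_cons, List.prod_cons, mul_inv_rev]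

lemma cover {A : GAutomaton G Q ι}
    (h : ∀ ℓ : ι, ∃ w, A.IsAccepting w ∧ ℓ ∈ w) :
    ∀ L : List ι, L ≠ [] → ∃ W, A.IsAccepting W ∧ ∀ ℓ ∈ L, ℓ ∈ W := by
  intro L
  induction L with
  | nil => intro h; exact absurd rfl h
  | cons ℓ L' ih =>
    intro _
    obtain ⟨w, hw, hmem⟩ := h ℓ
    rcases eq_or_ne L' [] with rfl | hL'
    · exact ⟨w, hw, by simpa using hmem⟩
    · obtain ⟨W', hW', hmem'⟩ := ih hL'
      exact ⟨w ++ W', hw.append hW', by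
        intro x hx
        rcases List.mem_cons.mp hx with rfl | hx
        · exact List.mem_append_left _ hmem
        · exact List.mem_append_right _ (hmem' x hx)⟩

end GAutomaton

/-- For a trim automaton `A` over a group `G`, the subsemigroup `ev(A)`
is a group (nonempty and closed under inverses) iff `A` admits an Identity Traversal:
an accepting run using every transition at least once and evaluating to `1`. -/
theorem evSet_group_iff_identity_traversal
    {G Q ι : Type*} [Group G] [Fintype Q] [Fintype ι]
    (A : GAutomaton G Q ι) (htrim : A.Trim) :
    ((A.evSet.Nonempty) ∧ ∀ g ∈ A.evSet, g⁻¹ ∈ A.evSet) ↔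
      ∃ w : List ι, A.IsAccepting w ∧ (∀ ℓ : ι, ℓ ∈ w) ∧ (w.map A.ev).prod = 1 := by
  constructor
  · rintro ⟨⟨g0, u0, hu0, -⟩, hinv⟩
    rcases u0 with _ | ⟨x, _⟩
    · exact absurd rfl hu0.1
    have hL : (Finset.univ : Finset ι).toList ≠ [] := by
      intro h
      have := Finset.mem_toList.mpr (Finset.mem_univ x)
      rw [h] at this; simp at this
    obtain ⟨W, hW, hWmem⟩ := GAutomaton.cover htrim.2 _ hL
    have hWev : (W.map A.ev).prod ∈ A.evSet := ⟨W, hW, rfl⟩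
    obtain ⟨V, hV, hVev⟩ := hinv _ hWev
    refine ⟨W ++ V, hW.append hV, fun ℓ => List.mem_append_left _
      (hWmem ℓ (Finset.mem_toList.mpr (Finset.mem_univ ℓ))), ?_⟩
    rw [List.map_append, List.prod_append, hVev, mul_inv_cancel]
  · rintro ⟨w, hw, hall, hprod⟩
    refine ⟨⟨1, w, hw, hprod⟩, ?_⟩
    rintro g ⟨u, hu, rfl⟩
    have hdec : ∀ ℓ : ι, ∃ a b, A.RunFT a A.q1 (A.src ℓ) ∧ A.RunFT b (A.tgt ℓ) A.q1 ∧
        (b.map A.ev).prod * (a.map A.ev).prod = (A.ev ℓ)⁻¹ := by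
      intro ℓ
      obtain ⟨a, b, hab⟩ := List.append_of_mem (hall ℓ)
      subst hab
      obtain ⟨ha, hb⟩ := GAutomaton.decomp hw
      refine ⟨a, b, ha, hb, ?_⟩
      have h1 : (a.map A.ev).prod * (A.ev ℓ * (b.map A.ev).prod) = 1 := by
        simpa [List.map_append, List.prod_append] using hprod
      have h2 : (A.ev ℓ * (b.map A.ev).prod) * (a.map A.ev).prod = 1 := by
        rw [mul_eq_one_iff_inv_eq] at h1
        rw [← h1, inv_mul_cancel]
      rw [mul_assoc] at h2
      exact eq_inv_of_mul_eq_one_right h2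
    obtain ⟨v, hv, hpv⟩ := GAutomaton.inv_run hdec u A.q1 (GAutomaton.isAccepting_iff.mp hu).2
    refine ⟨w ++ v, GAutomaton.isAccepting_iff.mpr ⟨by simp [hw.1], ?_⟩, ?_⟩
    · exact (GAutomaton.isAccepting_iff.mp hw).2.append hv
    · rw [List.map_append, List.prod_append, hprod, one_mul, hpv]
end

section
/- Let G be a group and X a finite subset of G. The subsemigroup of G generated by X contains the identity element of G if and only if there exists a nonempty subset Y ⊆ X such that the subsemigroup generated by Y is a group, i.e., is closed under taking inverses in G. -/
private lemma list_prod_mem_closure' {G : Type*} [Group G] {s : Set G} :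
    ∀ l : List G, l ≠ [] → (∀ x ∈ l, x ∈ s) → l.prod ∈ Subsemigroup.closure s := by
  intro l
  induction l with
  | nil => intro h; exact absurd rfl h
  | cons a t ih =>
    intro _ hmem
    rcases eq_or_ne t [] with rfl | ht
    · simpa using Subsemigroup.subset_closure (hmem a (by simp))
    · rw [List.prod_cons]
      exact mul_mem (Subsemigroup.subset_closure (hmem a (by simp)))
        (ih ht fun x hx => hmem x (List.mem_cons_of_mem _ hx))

private lemma exists_list_of_mem_closure' {G : Type*} [Group G] {s : Set G} {x : G}
    (hx : x ∈ Subsemigroup.closure s) :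
    ∃ l : List G, l ≠ [] ∧ (∀ y ∈ l, y ∈ s) ∧ l.prod = x := by
  induction hx using Subsemigroup.closure_induction with
  | mem y hy => exact ⟨[y], by simp, by simpa using hy, by simp⟩
  | mul a b ha hb iha ihb =>
    obtain ⟨l1, h1, hm1, hp1⟩ := iha
    obtain ⟨l2, h2, hm2, hp2⟩ := ihb
    exact ⟨l1 ++ l2, by simp [h1], by
      intro y hy; rcases List.mem_append.1 hy with h | h
      exacts [hm1 y h, hm2 y h], by simp [hp1, hp2]⟩

/-- For a finite subset `X` of a group `G`, the subsemigroup generated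
by `X` contains the identity iff some nonempty subset `Y ⊆ X` generates a subsemigroup
closed under taking inverses (hence a group). -/
theorem one_mem_closure_iff_subset_group
    {G : Type*} [Group G] (X : Finset G) :
    (1 : G) ∈ Subsemigroup.closure (X : Set G) ↔
      ∃ Y : Finset G, Y ⊆ X ∧ Y.Nonempty ∧
        ∀ g ∈ Subsemigroup.closure (Y : Set G),
          g⁻¹ ∈ Subsemigroup.closure (Y : Set G) := by
  constructor
  · intro h1
    classical
    obtain ⟨l, hne, hmem, hprod⟩ := exists_list_of_mem_closure' h1
    refine ⟨l.toFinset, ?_, by simpa [Finset.Nonempty] using List.exists_mem_of_ne_nil l hne, ?_⟩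
    · intro x hx; exact hmem x (List.mem_toFinset.1 hx)
    · -- key: every y ∈ l has y⁻¹ ∈ closure l.toFinset
      have hYmem : ∀ x ∈ l, x ∈ ((l.toFinset : Set G)) := by
        intro x hx; simpa using hx
      have key : ∀ y ∈ l, y⁻¹ ∈ Subsemigroup.closure ((l.toFinset : Set G)) := by
        intro y hy
        obtain ⟨a, b, hsplit⟩ := List.append_of_mem hy
        have hps' : a.prod * (y * b.prod) = 1 := by
          rw [← List.prod_cons, ← List.prod_append, ← hsplit]; exact hprod
        have h4 : (l ++ a).prod * (y * (b ++ l).prod) = 1 := by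
          simp only [List.prod_append]
          rw [hprod]
          have h6 : (1 : G) * a.prod * (y * (b.prod * 1)) = a.prod * (y * b.prod) := by group
          rw [h6, hps']
        have h5 : (l ++ a).prod = (y * (b ++ l).prod)⁻¹ := eq_inv_of_mul_eq_one_left h4
        have hinv : y⁻¹ = (b ++ l).prod * (l ++ a).prod := by
          rw [h5, mul_inv_rev, ← mul_assoc, mul_inv_cancel, one_mul]
        rw [hinv]
        have hm1 : ∀ x ∈ b ++ l, x ∈ ((l.toFinset : Set G)) := by
          intro x hx; rcases List.mem_append.1 hx with h | h
          · exact hYmem x (by rw [hsplit]; simp [h])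
          · exact hYmem x h
        have hm2 : ∀ x ∈ l ++ a, x ∈ ((l.toFinset : Set G)) := by
          intro x hx; rcases List.mem_append.1 hx with h | h
          · exact hYmem x h
          · exact hYmem x (by rw [hsplit]; simp [h])
        exact mul_mem (list_prod_mem_closure' _ (by simp [hne]) hm1)
          (list_prod_mem_closure' _ (by simp [hne]) hm2)
      intro g hg
      induction hg using Subsemigroup.closure_induction with
      | mem y hy => exact key y (List.mem_toFinset.1 hy)
      | mul a b ha hb iha ihb => rw [mul_inv_rev]; exact mul_mem ihb iha
  · rintro ⟨Y, hYX, ⟨y, hy⟩, hinv⟩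
    have hyY : y ∈ Subsemigroup.closure (Y : Set G) := Subsemigroup.subset_closure (by simpa using hy)
    have := mul_mem hyY (hinv y hyY)
    rw [mul_inv_cancel] at this
    exact Subsemigroup.closure_mono (by exact_mod_cast hYX) this
end

section
/- Let G be a group generated, as a group, by elements A₁,…,A_m (m ≥ 1), and let T be a normal subgroup of G of finite index. Then the subsemigroup ⟨A₁,…,A_m⟩ generated by A₁,…,A_m is a group (nonempty and closed under taking inverses) if and only if ⟨A₁,…,A_m⟩ ∩ T is a group (nonempty and closed under taking inverses). -/
/-- Let `G` be a group generated (as a group) by `A₁,…,A_m` (`m ≥ 1`),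
and `T` a normal subgroup of finite index. Then the subsemigroup `⟨A₁,…,A_m⟩` is a group
(nonempty and closed under inverses) iff `⟨A₁,…,A_m⟩ ∩ T` is a group (nonempty and
closed under inverses). -/
theorem semigroup_group_iff_inter_finite_index_group
    {G : Type*} [Group G] {m : ℕ} (hm : 1 ≤ m) (A : Fin m → G)
    (hgen : Subgroup.closure (Set.range A) = ⊤)
    (T : Subgroup G) [T.Normal] [T.FiniteIndex] :
    ((Subsemigroup.closure (Set.range A) : Set G).Nonempty ∧
        ∀ g ∈ Subsemigroup.closure (Set.range A),
          g⁻¹ ∈ Subsemigroup.closure (Set.range A)) ↔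
      (((Subsemigroup.closure (Set.range A) : Set G) ∩ (T : Set G)).Nonempty ∧
        ∀ g ∈ (Subsemigroup.closure (Set.range A) : Set G) ∩ (T : Set G),
          g⁻¹ ∈ (Subsemigroup.closure (Set.range A) : Set G) ∩ (T : Set G)) := by
  set S := Subsemigroup.closure (Set.range A) with hS
  constructor
  · rintro ⟨⟨s, hs⟩, hinv⟩
    -- S is a subgroup, hence everything.
    have hone : (1 : G) ∈ S := by
      have := S.mul_mem hs (hinv s hs)
      simpa using this
    have Htop : ∀ g : G, g ∈ S := by
      let H : Subgroup G :=
        { carrier := (S : Set G)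
          mul_mem' := fun ha hb => S.mul_mem ha hb
          one_mem' := hone
          inv_mem' := fun ha => hinv _ ha }
      intro g
      have : Subgroup.closure (Set.range A) ≤ H :=
        (Subgroup.closure_le H).2 Subsemigroup.subset_closure
      exact this (by rw [hgen]; trivial)
    refine ⟨⟨1, Htop 1, T.one_mem⟩, ?_⟩
    rintro g ⟨-, hgT⟩
    exact ⟨Htop g⁻¹, T.inv_mem hgT⟩
  · rintro ⟨⟨s, hsS, hsT⟩, hinv⟩
    have hA0 : A ⟨0, hm⟩ ∈ S := Subsemigroup.subset_closure ⟨⟨0, hm⟩, rfl⟩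
    refine ⟨⟨_, hA0⟩, ?_⟩
    intro g hg
    set n := T.index with hn
    have hn0 : n ≠ 0 := T.index_ne_zero_of_finite
    have hpowS : ∀ k : ℕ, k ≠ 0 → g ^ k ∈ S := by
      intro k hk
      induction k with
      | zero => exact absurd rfl hk
      | succ j ih =>
        rcases Nat.eq_zero_or_pos j with hj | hj
        · subst hj; simpa using hg
        · have := S.mul_mem (ih hj.ne') hg
          simpa [pow_succ] using this
    obtain ⟨k, hk⟩ : ∃ k, n = k + 1 := ⟨n - 1, by omega⟩
    have hgn : g ^ n ∈ (S : Set G) ∩ (T : Set G) :=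
      ⟨hpowS n hn0, Subgroup.pow_index_mem T g⟩
    have hginv : (g ^ n)⁻¹ ∈ (S : Set G) ∩ (T : Set G) := hinv _ hgn
    rcases Nat.eq_zero_or_pos k with h1 | h1
    · have hn1 : n = 1 := by omega
      simpa [hn1] using hginv.1
    · have hmem : g ^ k * (g ^ n)⁻¹ ∈ S := S.mul_mem (hpowS _ h1.ne') hginv.1
      have heq : g ^ k * (g ^ n)⁻¹ = g⁻¹ := by
        rw [hk]; group
      rwa [heq] at hmem
end

section
/- Let G be a group, T a normal subgroup of G of finite index, and A₁,…,A_m ∈ G. Then the set S := ⟨A₁,…,A_m⟩ ∩ T (the intersection of the subsemigroup generated by A₁,…,A_m with T) is a rational subset of T: there exist a finite alphabet β, a map ψ : β → T, and a regular language L' over β such that S = { ψ(u₁)·ψ(u₂)⋯ψ(u_q) : u₁u₂⋯u_q ∈ L', q ≥ 1 }. -/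
/-- Let `T` be a normal subgroup of finite index in a group `G` and
`A₁,…,A_m ∈ G`. Then `S := ⟨A₁,…,A_m⟩ ∩ T` is a rational subset of `T`: there are a
finite alphabet `β`, a map `ψ : β → T` and a regular language `L'` over `β` such that
`S = { ψ(u₁)⋯ψ(u_q) : u₁⋯u_q ∈ L', q ≥ 1 }`. -/
theorem semigroup_inter_finite_index_is_rational
    {G : Type*} [Group G] {m : ℕ} (A : Fin m → G)
    (T : Subgroup G) [T.Normal] [T.FiniteIndex] :
    ∃ (β : Type) (_ : Finite β) (ψ : β → T) (L' : Language β),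
      L'.IsRegular ∧
      (Subsemigroup.closure (Set.range A) : Set G) ∩ (T : Set G) =
        {g : G | ∃ w ∈ L', w ≠ [] ∧ (w.map fun b => ((ψ b : T) : G)).prod = g} := by
  classical
  have hcard : Nat.card (G ⧸ T) ≠ 0 := Nat.card_ne_zero.mpr ⟨⟨1⟩, inferInstance⟩
  set n := Nat.card (G ⧸ T) with hn
  let e : (G ⧸ T) ≃ Fin n := Nat.equivFinOfCardPos hcard
  let mk : G → G ⧸ T := QuotientGroup.mk
  have hmk_mul : ∀ x y : G, mk (x * y) = mk x * mk y := fun _ _ => rfl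
  let r : (G ⧸ T) → G := fun q => if q = 1 then 1 else Quotient.out q
  have hr : ∀ q, mk (r q) = q := by
    intro q
    by_cases h : q = 1
    · simp [r, h, mk]
    · simp only [r, if_neg h]
      exact QuotientGroup.out_eq' q
  have hr1 : r 1 = 1 := by simp [r]
  let β : Type := Fin n × Fin m
  let ψg : β → G := fun b => r (e.symm b.1) * A b.2 * (r (e.symm b.1 * mk (A b.2)))⁻¹
  have hψT : ∀ b, ψg b ∈ T := by
    intro b
    rw [← QuotientGroup.eq_one_iff]
    show mk (ψg b) = 1
    have : mk (ψg b) = mk (r (e.symm b.1)) * mk (A b.2) * (mk (r (e.symm b.1 * mk (A b.2))))⁻¹ := by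
      simp [ψg, hmk_mul, mk, QuotientGroup.mk_inv]
    rw [this, hr, hr]
    group
  let ψ : β → T := fun b => ⟨ψg b, hψT b⟩
  let M : DFA β (Option (Fin n)) :=
    { step := fun s b => match s with
        | none => none
        | some s => if b.1 = s then some (e (e.symm s * mk (A b.2))) else none
      start := some (e 1)
      accept := {some (e 1)} }
  have hdead : ∀ w : List β, M.evalFrom none w = none := by
    intro w
    induction w with
    | nil => rfl
    | cons b w ih => simpa [DFA.evalFrom, List.foldl_cons, M] using ih
  have hstep : ∀ (t : G ⧸ T) (b : β), b.1 = e t →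
      M.step (some (e t)) b = some (e (t * mk (A b.2))) := by
    intro t b hb
    simp [M, hb]
  -- completeness
  have complete : ∀ (l : List (Fin m)) (t : G ⧸ T),
      ∃ w : List β, w.length = l.length ∧
        M.evalFrom (some (e t)) w = some (e (t * mk ((l.map A).prod))) ∧
        (w.map ψg).prod = r t * (l.map A).prod * (r (t * mk ((l.map A).prod)))⁻¹ := by
    intro l
    induction l with
    | nil =>
      intro t
      refine ⟨[], rfl, by simp [mk], by simp [mk]⟩
    | cons i l ih =>
      intro t
      obtain ⟨w, hlen, heval, hprod⟩ := ih (t * mk (A i))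
      refine ⟨(e t, i) :: w, by simp [hlen], ?_, ?_⟩
      · have h1 : M.evalFrom (some (e t)) ((e t, i) :: w)
            = M.evalFrom (some (e (t * mk (A i)))) w := by
          rw [show M.evalFrom (some (e t)) ((e t, i) :: w)
              = M.evalFrom (M.step (some (e t)) (e t, i)) w from rfl, hstep t (e t, i) rfl]
        rw [h1, heval]
        congr 2
        simp only [List.map_cons, List.prod_cons, hmk_mul, mul_assoc]
      · have hb : ψg (e t, i) = r t * A i * (r (t * mk (A i)))⁻¹ := by
          simp [ψg]
        have hassoc : t * mk (A i) * mk ((l.map A).prod)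
            = t * mk (A i * (l.map A).prod) := by
          rw [hmk_mul, mul_assoc]
        simp only [List.map_cons, List.prod_cons]
        rw [hprod, hb, ← hassoc]
        group
  -- soundness
  have sound : ∀ (w : List β) (t : G ⧸ T), w ≠ [] →
      M.evalFrom (some (e t)) w = some (e 1) →
      ∃ l : List (Fin m), l ≠ [] ∧ (w.map ψg).prod = r t * (l.map A).prod ∧
        t * mk ((l.map A).prod) = 1 := by
    intro w
    induction w with
    | nil => simp
    | cons b w ih =>
      intro t _ heval
      by_cases hq : b.1 = e t
      · have h1 : M.evalFrom (some (e t)) (b :: w)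
            = M.evalFrom (some (e (t * mk (A b.2)))) w := by
          rw [show M.evalFrom (some (e t)) (b :: w)
              = M.evalFrom (M.step (some (e t)) b) w from rfl, hstep t b hq]
        rw [h1] at heval
        have hb : ψg b = r t * A b.2 * (r (t * mk (A b.2)))⁻¹ := by
          simp [ψg, hq]
        rcases eq_or_ne w [] with rfl | hw
        · have ht : t * mk (A b.2) = 1 := e.injective (Option.some_injective _ heval)
          refine ⟨[b.2], by simp, ?_, by simpa using ht⟩
          simp [hb, ht, hr1]
        · obtain ⟨l, hl, hprod, hfin⟩ := ih (t * mk (A b.2)) hw heval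
          refine ⟨b.2 :: l, by simp, ?_, ?_⟩
          · simp only [List.map_cons, List.prod_cons]
            rw [hprod, hb]
            group
          · simp only [List.map_cons, List.prod_cons]
            rw [hmk_mul, ← mul_assoc]
            exact hfin
      · have h0 : M.step (some (e t)) b = none := by simp [M, hq]
        rw [show M.evalFrom (some (e t)) (b :: w) = M.evalFrom (M.step (some (e t)) b) w from rfl,
          h0, hdead] at heval
        exact absurd heval (by simp)
  refine ⟨β, inferInstance, ψ, M.accepts, ⟨Option (Fin n), inferInstance, M, rfl⟩, ?_⟩
  have hψψg : ∀ w : List β, (w.map fun b => ((ψ b : T) : G)) = w.map ψg := fun w => rfl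
  ext g
  constructor
  · have hlistAll : ∀ x ∈ Subsemigroup.closure (Set.range A),
        ∃ l : List (Fin m), l ≠ [] ∧ (l.map A).prod = x := by
      intro x hx
      induction hx using Subsemigroup.closure_induction with
      | mem x hx =>
        obtain ⟨i, rfl⟩ := hx
        exact ⟨[i], by simp, by simp⟩
      | mul x y _ _ hx hy =>
        obtain ⟨l1, hl1, h1⟩ := hx
        obtain ⟨l2, hl2, h2⟩ := hy
        exact ⟨l1 ++ l2, by simp [hl1], by simp [h1, h2]⟩
    rintro ⟨hgC, hgT⟩
    obtain ⟨l, hl, hg⟩ := hlistAll g hgC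
    obtain ⟨w, hlen, heval, hprod⟩ := complete l 1
    have hmkg : mk ((l.map A).prod) = 1 := by
      rw [hg]; exact (QuotientGroup.eq_one_iff g).mpr hgT
    refine ⟨w, ?_, ?_, ?_⟩
    · show M.evalFrom M.start w ∈ M.accept
      show M.evalFrom (some (e 1)) w ∈ ({some (e 1)} : Set (Option (Fin n)))
      rw [heval, hmkg, mul_one]
      exact rfl
    · intro h
      rw [h] at hlen
      exact hl (List.eq_nil_of_length_eq_zero hlen.symm)
    · rw [hψψg, hprod, hmkg, mul_one, hr1, hg]
      group
  · rintro ⟨w, hwL, hw, hprod⟩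
    have heval : M.evalFrom (some (e 1)) w = some (e 1) := hwL
    obtain ⟨l, hl, hp, hfin⟩ := sound w 1 hw heval
    rw [hψψg] at hprod
    rw [hr1, one_mul] at hp
    have hprodT : (l.map A).prod ∈ T := by
      have h2 : mk ((l.map A).prod) = 1 := by simpa using hfin
      exact (QuotientGroup.eq_one_iff _).mp h2
    have hprodC : (l.map A).prod ∈ Subsemigroup.closure (Set.range A) := by
      clear hp hfin hprodT
      induction l with
      | nil => exact absurd rfl hl
      | cons i l ih =>
        rcases eq_or_ne l [] with rfl | hl2
        · simpa using Subsemigroup.subset_closure (Set.mem_range_self i)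
        · rw [List.map_cons, List.prod_cons]
          exact mul_mem (Subsemigroup.subset_closure (Set.mem_range_self i)) (ih hl2)
    rw [← hprod, hp]
    exact ⟨hprodC, hprodT⟩
end

section
/- Let G be a group, α a finite alphabet, φ : α → G a map, and L a regular language over α. Let S = { φ(w₁)·φ(w₂)⋯φ(w_p) : the word w₁w₂⋯w_p belongs to L } ⊆ G be the set of products of the images of letters along words of L. Then the subgroup of G generated by S is finitely generated. -/
open Classical in
/-- Let `G` be a group, `α` a finite alphabet, `φ : α → G`, and `L` a
regular language over `α`. Then the subgroup of `G` generated by the set of products of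
the images of the letters along words of `L` is finitely generated. -/
theorem subgroup_closure_of_rational_set_fg
    {G : Type*} [Group G] {α : Type} [Finite α] (φ : α → G)
    (L : Language α) (hL : L.IsRegular) :
    (Subgroup.closure {g : G | ∃ w ∈ L, (w.map φ).prod = g}).FG := by
  obtain ⟨σ, _, M, rfl⟩ := hL
  set S : Set G := {g : G | ∃ w ∈ M.accepts, (w.map φ).prod = g} with hS
  -- reachable and co-reachable states
  set Rch : σ → Prop := fun q => ∃ u, M.evalFrom M.start u = q with hRch
  set CoR : σ → Prop := fun q => ∃ v, M.evalFrom q v ∈ M.accept with hCoR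
  -- chosen witness word for each reachable state, with `[]` chosen for the start state
  set u : σ → List α := fun q =>
    if q = M.start then [] else if h : Rch q then h.choose else [] with hu
  have hu_spec : ∀ q, Rch q → M.evalFrom M.start (u q) = q := by
    intro q hq
    by_cases h : q = M.start
    · subst h; simp [hu]
    · simp only [hu, h, if_false, dif_pos hq]
      exact hq.choose_spec
  set g : σ → G := fun q => ((u q).map φ).prod with hg
  have hgstart : g M.start = 1 := by simp [hg, hu]
  -- the finite generating set
  set T : Set G :=
    (Set.range fun p : σ × α => if Rch p.1 ∧ CoR (M.step p.1 p.2)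
        then g p.1 * φ p.2 * (g (M.step p.1 p.2))⁻¹ else 1) ∪
    (Set.range fun q : σ => if Rch q ∧ q ∈ M.accept then g q else 1) with hT
  have hTfin : T.Finite := (Set.finite_range _).union (Set.finite_range _)
  rw [Subgroup.fg_iff]
  refine ⟨T, le_antisymm ?_ ?_, hTfin⟩
  · -- closure T ≤ closure S
    rw [Subgroup.closure_le]
    rintro x (⟨⟨q, a⟩, rfl⟩ | ⟨q, rfl⟩) <;> dsimp only
    · by_cases h : Rch q ∧ CoR (M.step q a)
      · rw [if_pos h]
        obtain ⟨hq, v, hv⟩ := h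
        have hq' : Rch (M.step q a) := ⟨u q ++ [a], by
          rw [M.evalFrom_append_singleton, hu_spec q hq]⟩
        -- word 1 : u q ++ [a] ++ v ∈ accepts
        have hw1 : (u q ++ [a] ++ v) ∈ M.accepts := by
          rw [DFA.mem_accepts]
          show M.evalFrom M.start _ ∈ M.accept
          rw [M.evalFrom_of_append, M.evalFrom_append_singleton, hu_spec q hq]
          exact hv
        -- word 2 : u (step q a) ++ v ∈ accepts
        have hw2 : (u (M.step q a) ++ v) ∈ M.accepts := by
          rw [DFA.mem_accepts]
          show M.evalFrom M.start _ ∈ M.accept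
          rw [M.evalFrom_of_append, hu_spec _ hq']
          exact hv
        have h1 : ((u q ++ [a] ++ v).map φ).prod ∈ S := ⟨_, hw1, rfl⟩
        have h2 : ((u (M.step q a) ++ v).map φ).prod ∈ S := ⟨_, hw2, rfl⟩
        have : g q * φ a * (g (M.step q a))⁻¹ =
            ((u q ++ [a] ++ v).map φ).prod * (((u (M.step q a) ++ v).map φ).prod)⁻¹ := by
          simp [hg, mul_assoc]
        rw [this]
        exact mul_mem (Subgroup.subset_closure h1)
          (inv_mem (Subgroup.subset_closure h2))
      · rw [if_neg h]; exact one_mem _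
    · by_cases h : Rch q ∧ q ∈ M.accept
      · rw [if_pos h]
        obtain ⟨hq, hacc⟩ := h
        refine Subgroup.subset_closure ⟨u q, ?_, rfl⟩
        rw [DFA.mem_accepts]
        show M.evalFrom M.start _ ∈ M.accept
        rw [hu_spec q hq]; exact hacc
      · rw [if_neg h]; exact one_mem _
  · -- closure S ≤ closure T
    rw [Subgroup.closure_le]
    rintro x ⟨w, hw, rfl⟩
    -- key induction: for any word with coreachable end state, the twisted product lies in T
    have key : ∀ w : List α, CoR (M.evalFrom M.start w) →
        (w.map φ).prod * (g (M.evalFrom M.start w))⁻¹ ∈ Subgroup.closure T := by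
      intro w
      induction w using List.reverseRecOn with
      | nil =>
        intro _
        simp only [List.map_nil, List.prod_nil, DFA.evalFrom_nil, hgstart, inv_one, mul_one]
        exact one_mem _
      | append_singleton w a ih =>
        intro hcor
        rw [M.evalFrom_append_singleton] at hcor ⊢
        set q := M.evalFrom M.start w with hqdef
        have hqr : Rch q := ⟨w, rfl⟩
        have hqcor : CoR q := by
          obtain ⟨v, hv⟩ := hcor
          exact ⟨a :: v, hv⟩
        have ht : g q * φ a * (g (M.step q a))⁻¹ ∈ Subgroup.closure T := by
          refine Subgroup.subset_closure (Or.inl ⟨(q, a), ?_⟩)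
          dsimp only
          rw [if_pos ⟨hqr, hcor⟩]
        have := mul_mem (ih hqcor) ht
        simpa [mul_assoc] using this
    rw [DFA.mem_accepts] at hw
    have hcor : CoR (M.evalFrom M.start w) := ⟨[], hw⟩
    have h1 := key w hcor
    have h2 : g (M.evalFrom M.start w) ∈ Subgroup.closure T := by
      refine Subgroup.subset_closure (Or.inr ⟨M.evalFrom M.start w, ?_⟩)
      dsimp only
      rw [if_pos ⟨⟨w, rfl⟩, hw⟩]
    simpa [mul_assoc] using mul_mem h1 h2
end

section
/- Let G be a group and H a finitely generated subgroup of G every element of which commutes with every element of G (i.e., H is contained in the center of G). Let π : G → G/H be the quotient homomorphism. Let α be a finite alphabet, φ : α → G/H a map, and L a regular language over α, and set S = { φ(w₁)⋯φ(w_p) : w₁⋯w_p ∈ L, p ≥ 1 } ⊆ G/H. Then the full preimage π⁻¹(S) ⊆ G is again of this form: there exist a finite alphabet β, a map ψ : β → G, and a regular language L' over β such that π⁻¹(S) = { ψ(u₁)⋯ψ(u_q) : u₁⋯u_q ∈ L', q ≥ 1 }. -/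
open Classical in
/-- Auxiliary DFA: accepts words of the form `w.map Sum.inl ++ v.map Sum.inr` where
`w` is a nonempty word accepted by `M` and `v` is arbitrary. -/
noncomputable def tailDFA {α γ σ : Type*} (M : DFA α σ) :
    DFA (α ⊕ γ) ((σ × Bool) ⊕ Bool) where
  step q c :=
    match q, c with
    | Sum.inl (s, _), Sum.inl a => Sum.inl (M.step s a, true)
    | Sum.inl (s, b), Sum.inr _ =>
        if b = true ∧ s ∈ M.accept then Sum.inr true else Sum.inr false
    | Sum.inr t, Sum.inl _ => Sum.inr false
    | Sum.inr t, Sum.inr _ => Sum.inr t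
  start := Sum.inl (M.start, false)
  accept := {q | match q with
    | Sum.inl (s, b) => b = true ∧ s ∈ M.accept
    | Sum.inr t => t = true}

theorem tailDFA_evalFrom_inl {α γ σ : Type*} (M : DFA α σ) (w : List α) :
    ∀ (s : σ) (b : Bool),
      (tailDFA (γ := γ) M).evalFrom (Sum.inl (s, b)) (w.map Sum.inl) =
        Sum.inl (M.evalFrom s w, b || !w.isEmpty) := by
  induction w with
  | nil => intro s b; simp [DFA.evalFrom]
  | cons a w ih =>
      intro s b
      simp only [List.map_cons, DFA.evalFrom, List.foldl_cons] at *
      rw [show (tailDFA (γ := γ) M).step (Sum.inl (s, b)) (Sum.inl a)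
            = Sum.inl (M.step s a, true) from rfl, ih]
      simp

theorem tailDFA_evalFrom_inr {α γ σ : Type*} (M : DFA α σ) (v : List γ) :
    ∀ t : Bool, (tailDFA (γ := γ) M).evalFrom (Sum.inr t) (v.map Sum.inr) = Sum.inr t := by
  induction v with
  | nil => intro t; simp [DFA.evalFrom]
  | cons u v ih =>
      intro t
      simp only [List.map_cons, DFA.evalFrom, List.foldl_cons] at *
      rw [show (tailDFA (γ := γ) M).step (Sum.inr t) (Sum.inr u) = Sum.inr t from rfl, ih]

theorem tailDFA_eval_spec {α γ σ : Type*} (M : DFA α σ) (x : List (α ⊕ γ)) :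
    (tailDFA (γ := γ) M).eval x = Sum.inr false ∨
    (∃ w : List α, x = w.map Sum.inl ∧
      (tailDFA (γ := γ) M).eval x = Sum.inl (M.eval w, !w.isEmpty)) ∨
    (∃ (w : List α) (v : List γ), x = w.map Sum.inl ++ v.map Sum.inr ∧
      w ∈ M.accepts ∧ w ≠ [] ∧ (tailDFA (γ := γ) M).eval x = Sum.inr true) := by
  classical
  induction x using List.reverseRecOn with
  | nil =>
      refine Or.inr (Or.inl ⟨[], by simp, ?_⟩)
      simp [DFA.eval, DFA.evalFrom, tailDFA]
  | append_singleton x c ih =>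
      have hstep : (tailDFA (γ := γ) M).eval (x ++ [c])
          = (tailDFA (γ := γ) M).step ((tailDFA (γ := γ) M).eval x) c :=
        DFA.eval_append_singleton _ _ _
      rcases ih with h | ⟨w, hx, h⟩ | ⟨w, v, hx, hwL, hwne, h⟩
      · left
        rw [hstep, h]
        cases c <;> rfl
      · cases c with
        | inl a =>
            refine Or.inr (Or.inl ⟨w ++ [a], by simp [hx], ?_⟩)
            rw [hstep, h]
            show Sum.inl (M.step (M.eval w) a, true) = _
            simp [DFA.eval_append_singleton]
        | inr u =>
            rw [hstep, h]
            show (if (!w.isEmpty) = true ∧ M.eval w ∈ M.accept then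
                (Sum.inr true : (σ × Bool) ⊕ Bool) else Sum.inr false) = _ ∨ _
            by_cases hc : (!w.isEmpty) = true ∧ M.eval w ∈ M.accept
            · refine Or.inr (Or.inr ⟨w, [u], by simp [hx], hc.2, ?_, if_pos hc⟩)
              simpa using hc.1
            · exact Or.inl (if_neg hc)
      · cases c with
        | inl a =>
            left
            rw [hstep, h]
            rfl
        | inr u =>
            refine Or.inr (Or.inr ⟨w, v ++ [u], by simp [hx], hwL, hwne, ?_⟩)
            rw [hstep, h]
            rfl

/-- Let `H` be a finitely generated central subgroup of `G`, with
quotient map `π : G → G/H`. If `S ⊆ G/H` is the set of products of images of letters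
along nonempty words of a regular language, then its full preimage `π⁻¹(S) ⊆ G` is
again of this form. -/
theorem preimage_of_rational_semigroup_rational
    {G : Type*} [Group G] (H : Subgroup G) [H.Normal]
    (hHc : H ≤ Subgroup.center G) (hHfg : H.FG)
    {α : Type} [Finite α] (φ : α → G ⧸ H)
    (L : Language α) (hL : L.IsRegular)
    (S : Set (G ⧸ H))
    (hS : S = {g : G ⧸ H | ∃ w ∈ L, w ≠ [] ∧ (w.map φ).prod = g}) :
    ∃ (β : Type) (_ : Finite β) (ψ : β → G) (L' : Language β),
      L'.IsRegular ∧
      (QuotientGroup.mk' H) ⁻¹' S =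
        {g : G | ∃ w ∈ L', w ≠ [] ∧ (w.map ψ).prod = g} := by
  classical
  obtain ⟨T, hT⟩ := hHfg
  obtain ⟨σ, fσ, M, hM⟩ := hL
  -- the list of generators of `H` together with their inverses
  set elems : List G := T.toList ++ T.toList.map (·⁻¹) with helems
  have helemsH : ∀ y ∈ elems, y ∈ H := by
    intro y hy
    rw [helems, List.mem_append] at hy
    rcases hy with hy | hy
    · exact hT ▸ Subgroup.subset_closure (by simpa using hy)
    · obtain ⟨z, hz, rfl⟩ := List.mem_map.mp hy
      exact inv_mem (hT ▸ Subgroup.subset_closure (by simpa using hz))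
  set n := elems.length with hn
  -- alphabet and letter map
  refine ⟨α ⊕ Fin n, inferInstance,
    Sum.elim (fun a => Quotient.out (φ a)) (fun i => elems.get i),
    (tailDFA (γ := Fin n) M).accepts, ⟨_, inferInstance, _, rfl⟩, ?_⟩
  set f : α → G := fun a => Quotient.out (φ a) with hf
  have hπf : ∀ a, (QuotientGroup.mk' H) (f a) = φ a := fun a => QuotientGroup.out_eq' (φ a)
  set ψ : α ⊕ Fin n → G := Sum.elim f (fun i => elems.get i) with hψ
  have hπprod : ∀ w : List α, (QuotientGroup.mk' H) ((w.map f).prod) = (w.map φ).prod := by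
    intro w
    rw [map_list_prod (QuotientGroup.mk' H), List.map_map]
    congr 1
    exact List.map_congr_left fun a _ => hπf a
  ext g
  simp only [Set.mem_preimage, hS, Set.mem_setOf_eq]
  constructor
  · rintro ⟨w, hwL, hwne, hwprod⟩
    -- `g = (w.map f).prod * h` with `h ∈ H`
    set p := (w.map f).prod with hp
    have hpg : ((p : G) : G ⧸ H) = ((g : G) : G ⧸ H) := by
      rw [← QuotientGroup.mk'_apply, ← QuotientGroup.mk'_apply, hπprod, hwprod]
    have hmem : p⁻¹ * g ∈ H := QuotientGroup.eq.mp hpg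
    -- write `h` as a product of elements of `elems`
    have hmem' : p⁻¹ * g ∈ Submonoid.closure (↑T ∪ (↑T : Set G)⁻¹) := by
      rw [← Subgroup.closure_toSubmonoid]
      exact hT ▸ hmem
    obtain ⟨l, hl, hlprod⟩ := Submonoid.exists_list_of_mem_closure hmem'
    have hlelems : ∀ y ∈ l, y ∈ elems := by
      intro y hy
      rcases hl y hy with h | h
      · exact List.mem_append_left _ (by simpa using h)
      · refine List.mem_append_right _ (List.mem_map.mpr ⟨y⁻¹, by simpa using h, by simp⟩)
    -- convert `l` into a word over `Fin n`
    have hconv : ∀ l' : List G, (∀ y ∈ l', y ∈ elems) →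
        ∃ v : List (Fin n), v.map elems.get = l' := by
      intro l' hl'
      induction l' with
      | nil => exact ⟨[], rfl⟩
      | cons y l' ih =>
          obtain ⟨i, hi⟩ := List.mem_iff_get.mp (hl' y (List.mem_cons_self))
          obtain ⟨v, hv⟩ := ih fun z hz => hl' z (List.mem_cons_of_mem _ hz)
          exact ⟨i :: v, by simp [hv, ← hi]⟩
    obtain ⟨v, hv⟩ := hconv l hlelems
    refine ⟨w.map Sum.inl ++ v.map Sum.inr, ?_, by simp [hwne], ?_⟩
    · -- acceptance
      rw [DFA.mem_accepts, DFA.eval, DFA.evalFrom_of_append]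
      have h1 := tailDFA_evalFrom_inl (γ := Fin n) M w M.start false
      rw [show (tailDFA (γ := Fin n) M).start = Sum.inl (M.start, false) from rfl, h1]
      have hb : (false || !w.isEmpty) = true := by simpa using hwne
      cases v with
      | nil =>
          simp only [List.map_nil, DFA.evalFrom_nil]
          have hwacc : w ∈ M.accepts := by rw [hM]; exact hwL
          exact ⟨hb, (DFA.mem_accepts (M := M)).mp hwacc⟩
      | cons u v' =>
          simp only [List.map_cons]
          rw [show ((Sum.inr u : α ⊕ Fin n) :: v'.map Sum.inr)
              = [Sum.inr u] ++ v'.map Sum.inr from rfl, DFA.evalFrom_of_append]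
          have hstep : (tailDFA (γ := Fin n) M).evalFrom
              (Sum.inl (M.evalFrom M.start w, false || !w.isEmpty)) [Sum.inr u]
              = Sum.inr true := by
            show (tailDFA (γ := Fin n) M).step _ _ = _
            show (if (false || !w.isEmpty) = true ∧ M.evalFrom M.start w ∈ M.accept
                then (Sum.inr true : (σ × Bool) ⊕ Bool) else Sum.inr false) = _
            have hwacc : w ∈ M.accepts := by rw [hM]; exact hwL
            rw [if_pos ⟨hb, (DFA.mem_accepts (M := M)).mp hwacc⟩]
          rw [hstep, tailDFA_evalFrom_inr]
          exact rfl
    · -- the product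
      rw [List.map_append, List.prod_append, List.map_map, List.map_map]
      have h1 : (w.map (ψ ∘ Sum.inl)).prod = p := by
        simp [hψ, hp, Function.comp]
      have h2 : (v.map (ψ ∘ Sum.inr)).prod = l.prod := by
        rw [← hv]
        congr 1
      rw [h1, h2, hlprod]
      group
  · rintro ⟨x, hxL, hxne, hxprod⟩
    rcases tailDFA_eval_spec (γ := Fin n) M x with h | ⟨w, hx, h⟩ | ⟨w, v, hx, hwL, hwne, h⟩
    · rw [DFA.mem_accepts] at hxL
      rw [h] at hxL
      exact absurd hxL (by simp [tailDFA])
    · -- pure `inl` word, accepted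
      rw [DFA.mem_accepts, h] at hxL
      obtain ⟨hb, hacc⟩ : (!w.isEmpty) = true ∧ M.eval w ∈ M.accept := hxL
      refine ⟨w, by rw [← hM]; exact (DFA.mem_accepts (M := M)).mpr hacc, by simpa using hb, ?_⟩
      rw [← hxprod, hx, List.map_map, ← hπprod]
      congr 1
    · -- word with a tail of generators
      refine ⟨w, hM ▸ hwL, hwne, ?_⟩

      rw [← hxprod, hx, List.map_append, List.prod_append, map_mul,
        List.map_map, List.map_map]
      have h2 : (QuotientGroup.mk' H) ((v.map (ψ ∘ Sum.inr)).prod) = 1 := by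
        rw [QuotientGroup.mk'_apply, QuotientGroup.eq_one_iff]
        refine Subgroup.list_prod_mem _ ?_
        intro y hy
        obtain ⟨i, _, rfl⟩ := List.mem_map.mp hy
        have hgi : (ψ ∘ Sum.inr) i = elems.get i := by simp [hψ]
        rw [hgi]
        exact helemsH _ (List.get_mem _ _)
      rw [h2, mul_one, ← hπprod]
      congr 1
end

section
/- Let K be an algebraic number field and let m = [K : ℚ] be its degree over ℚ. Let d ≥ 1. Then every finitely generated subgroup H of GL(d, K) all of whose elements are upper unitriangular matrices can be generated by at most m·d(d−1)/2 elements (i.e., the Prüfer rank of the unitriangular group UT(d, K) is at most [K:ℚ]·binom(d,2)). -/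
open Matrix Finset

namespace UTaux

variable {K : Type*} [Field K] {d : ℕ}

def UTlvl (M : Submodule ℤ K) (k : ℕ) (g : GL (Fin d) K) : Prop :=
  (∀ i j : Fin d, j < i → (g : Matrix (Fin d) (Fin d) K) i j = 0) ∧
  (∀ i : Fin d, (g : Matrix (Fin d) (Fin d) K) i i = 1) ∧
  (∀ i j : Fin d, (i : ℕ) < (j : ℕ) → (g : Matrix (Fin d) (Fin d) K) i j ∈ M) ∧
  (∀ i j : Fin d, (i : ℕ) < (j : ℕ) → (j : ℕ) ≤ (i : ℕ) + k →
    (g : Matrix (Fin d) (Fin d) K) i j = 0)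

def tau (k : ℕ) (g : GL (Fin d) K) : {i : Fin d // (i : ℕ) + k + 1 < d} → K :=
  fun i => (g : Matrix (Fin d) (Fin d) K) i.1 ⟨(i : ℕ) + k + 1, i.2⟩

lemma tau_one (k : ℕ) : tau (d := d) (K := K) k 1 = 0 := by
  funext i
  show ((1 : GL (Fin d) K) : Matrix (Fin d) (Fin d) K) i.1 ⟨(i : ℕ) + k + 1, i.2⟩ = 0
  rw [Units.val_one]
  exact Matrix.one_apply_ne (by intro h; have := congrArg Fin.val h; simp at this; omega)

lemma tau_mul {M : Submodule ℤ K} {k : ℕ} {g h : GL (Fin d) K}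
    (hg : UTlvl M k g) (hh : UTlvl M k h) :
    tau k (g * h) = tau k g + tau k h := by
  funext i
  set i0 : Fin d := i.1 with hi0
  set j0 : Fin d := ⟨(i : ℕ) + k + 1, i.2⟩ with hj0
  have hij : i0 ≠ j0 := by
    intro h; have := congrArg Fin.val h; simp [hi0, hj0] at this; omega
  have hmul : ((g * h : GL (Fin d) K) : Matrix (Fin d) (Fin d) K) i0 j0
      = ∑ l : Fin d, (g : Matrix (Fin d) (Fin d) K) i0 l * (h : Matrix (Fin d) (Fin d) K) l j0 := by
    rw [Units.val_mul, Matrix.mul_apply]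
  have hvanish : ∀ l ∈ (Finset.univ : Finset (Fin d)), l ∉ ({i0, j0} : Finset (Fin d)) →
      (g : Matrix (Fin d) (Fin d) K) i0 l * (h : Matrix (Fin d) (Fin d) K) l j0 = 0 := by
    intro l _ hl
    simp only [Finset.mem_insert, Finset.mem_singleton, not_or] at hl
    rcases lt_trichotomy (l : ℕ) (i0 : ℕ) with hc | hc | hc
    · rw [hg.1 i0 l (by exact hc), zero_mul]
    · exact absurd (Fin.ext hc) hl.1
    · rcases lt_trichotomy (l : ℕ) (j0 : ℕ) with hc2 | hc2 | hc2
      · rw [hg.2.2.2 i0 l hc (by simp [hj0] at hc2 ⊢; omega), zero_mul]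
      · exact absurd (Fin.ext hc2) hl.2
      · rw [hh.1 l j0 (by exact hc2), mul_zero]
  have : tau k (g * h) i = (g : Matrix (Fin d) (Fin d) K) i0 i0
      * (h : Matrix (Fin d) (Fin d) K) i0 j0
      + (g : Matrix (Fin d) (Fin d) K) i0 j0 * (h : Matrix (Fin d) (Fin d) K) j0 j0 := by
    show ((g * h : GL (Fin d) K) : Matrix (Fin d) (Fin d) K) i0 j0 = _
    rw [hmul, ← Finset.sum_subset (Finset.subset_univ ({i0, j0} : Finset (Fin d))) hvanish,
      Finset.sum_pair hij]
  rw [this, hg.2.1 i0, hh.2.1 j0, one_mul, mul_one]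
  show _ = (g : Matrix (Fin d) (Fin d) K) i0 j0 + (h : Matrix (Fin d) (Fin d) K) i0 j0
  ring

lemma list_map_sum {α β : Type*} [AddCommMonoid β] (s : Finset α) (f : α → β) :
    (s.toList.map f).sum = ∑ j ∈ s, f j := by
  classical
  induction s using Finset.induction_on with
  | empty => simp
  | insert a s hx ih =>
    rw [Finset.sum_insert hx, ← ih]
    have hperm : (insert a s).toList.Perm (a :: s.toList) := Finset.toList_insert hx
    rw [(hperm.map f).sum_eq, List.map_cons, List.sum_cons]

lemma key [NumberField K] (M : Submodule ℤ K) (hM : M.FG) :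
    ∀ n k : ℕ, ∀ H : Subgroup (GL (Fin d) K), d - 1 - k ≤ n →
    (∀ g ∈ H, UTlvl M k g) →
    ∃ S : Finset (GL (Fin d) K),
      S.card ≤ Module.finrank ℚ K * (∑ l ∈ Finset.Ico (k + 1) d, (d - l)) ∧
      Subgroup.closure (S : Set (GL (Fin d) K)) = H := by
  intro n
  induction n with
  | zero =>
    intro k H hk hU
    refine ⟨∅, by simp, ?_⟩
    rw [Finset.coe_empty, Subgroup.closure_empty]
    symm
    rw [eq_bot_iff]
    intro g hg
    rw [Subgroup.mem_bot]
    apply Units.ext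
    rw [Units.val_one]
    ext i j
    rcases lt_trichotomy (i : ℕ) (j : ℕ) with hc | hc | hc
    · rw [(hU g hg).2.2.2 i j hc (by omega), Matrix.one_apply_ne (by intro h; have := congrArg Fin.val h; omega)]
    · have : i = j := Fin.ext hc
      subst this
      rw [(hU g hg).2.1 i, Matrix.one_apply_eq]
    · rw [(hU g hg).1 i j (by exact hc), Matrix.one_apply_ne (by intro h; have := congrArg Fin.val h; omega)]
  | succ n IH =>
    intro k H hk hU
    by_cases hsmall : d - 1 - k ≤ n
    · exact IH k H hsmall hU
    have hdk : k + 1 < d := by omega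
    classical
    -- local abbreviations
    set V₀ := ({i : Fin d // (i : ℕ) + k + 1 < d} → K) with hV₀
    -- tau facts relative to H
    have tinv : ∀ g ∈ H, tau (d := d) k g⁻¹ = - tau k g := by
      intro g hg
      have h1 : tau (d := d) k (g * g⁻¹) = tau k g + tau k g⁻¹ :=
        tau_mul (hU g hg) (hU g⁻¹ (inv_mem hg))
      rw [mul_inv_cancel, tau_one] at h1
      linear_combination (norm := module) -h1
    have tzpow : ∀ g ∈ H, ∀ m : ℤ, tau (d := d) k (g ^ m) = m • tau k g := by
      intro g hg
      have hnat : ∀ m : ℕ, tau (d := d) k (g ^ m) = m • tau k g := by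
        intro m
        induction m with
        | zero => simp [tau_one]
        | succ m ih =>
          rw [pow_succ, tau_mul (hU _ (pow_mem hg m)) (hU g hg), ih, add_smul, one_smul]
      intro m
      rcases m with m | m
      · simpa using hnat m
      · rw [zpow_negSucc, tinv _ (pow_mem hg (m + 1)), hnat (m + 1)]
        simp only [Int.negSucc_eq, neg_smul]
        congr 1
        rw [← natCast_zsmul]
        norm_cast
    have tprod : ∀ L : List (GL (Fin d) K), (∀ g ∈ L, g ∈ H) →
        tau (d := d) k L.prod = (L.map (tau (d := d) k)).sum := by
      intro L
      induction L with
      | nil => intro _; simpa using tau_one k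
      | cons a L ih =>
        intro hL
        have haH : a ∈ H := hL a List.mem_cons_self
        have hLH : ∀ g ∈ L, g ∈ H := fun g hg => hL g (List.mem_cons_of_mem a hg)
        rw [List.prod_cons, tau_mul (hU a haH) (hU _ (Subgroup.list_prod_mem H hLH)),
          List.map_cons, List.sum_cons, ih hLH]
    -- the image of tau on H, as a subgroup / submodule
    let P : AddSubgroup V₀ :=
      { carrier := tau (d := d) k '' H
        add_mem' := by
          rintro _ _ ⟨g, hg, rfl⟩ ⟨h, hh, rfl⟩
          exact ⟨g * h, mul_mem hg hh, (tau_mul (hU g hg) (hU h hh)).symm ▸ rfl⟩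
        zero_mem' := ⟨1, one_mem H, tau_one k⟩
        neg_mem' := by
          rintro _ ⟨g, hg, rfl⟩
          exact ⟨g⁻¹, inv_mem hg, tinv g hg⟩ }
    let P' : Submodule ℤ V₀ := AddSubgroup.toIntSubmodule P
    have hmemP' : ∀ x, x ∈ P' ↔ ∃ g ∈ H, tau (d := d) k g = x := by
      intro x
      constructor
      · rintro ⟨g, hg, rfl⟩; exact ⟨g, hg, rfl⟩
      · rintro ⟨g, hg, rfl⟩; exact ⟨g, hg, rfl⟩
    -- P' is contained in a f.g. submodule
    let W₀ : Submodule ℤ V₀ := Submodule.pi Set.univ (fun _ => M)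
    have hW₀ : W₀.FG := Submodule.fg_pi (fun _ => hM)
    have hle : P' ≤ W₀ := by
      rintro x hx
      rcases (hmemP' x).mp hx with ⟨g, hg, rfl⟩
      intro i _
      exact (hU g hg).2.2.1 i.1 ⟨(i : ℕ) + k + 1, i.2⟩ (by simp)
    have hP'fg : P'.FG := by
      haveI : IsNoetherian ℤ W₀ := isNoetherian_of_fg_of_noetherian _ hW₀
      have h1 := (IsNoetherian.noetherian (P'.comap W₀.subtype)).map W₀.subtype
      rwa [Submodule.map_comap_subtype, inf_eq_right.mpr hle] at h1
    haveI : Module.Finite ℤ P' := Module.Finite.iff_fg.mpr hP'fg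
    haveI : NoZeroSMulDivisors ℤ V₀ := inferInstance
    haveI : Module.Free ℤ P' := Module.free_of_finite_type_torsion_free'
    let ι := Module.Free.ChooseBasisIndex ℤ P'
    let b : Module.Basis ι ℤ P' := Module.Free.chooseBasis ℤ P'
    haveI : Fintype ι := Module.Free.ChooseBasisIndex.fintype ℤ P'
    -- cardinality bound for the basis
    have hli : LinearIndependent ℤ (fun j : ι => ((b j : P') : V₀)) :=
      b.linearIndependent.map' P'.subtype (Submodule.ker_subtype P')
    have hliQ : LinearIndependent ℚ (fun j : ι => ((b j : P') : V₀)) :=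
      (LinearIndependent.iff_fractionRing ℤ ℚ).mp hli
    have hcardI : Fintype.card {i : Fin d // (i : ℕ) + k + 1 < d} ≤ d - (k + 1) := by
      have : Function.Injective (fun i : {i : Fin d // (i : ℕ) + k + 1 < d} =>
          (⟨(i : ℕ), by have := i.2; omega⟩ : Fin (d - (k + 1)))) := by
        intro a c h
        have := congrArg Fin.val h
        simp at this
        exact Subtype.ext (Fin.ext this)
      simpa using Fintype.card_le_of_injective _ this
    have hcard : Fintype.card ι ≤ Module.finrank ℚ K * (d - (k + 1)) := by
      have h1 := hliQ.fintype_card_le_finrank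
      have h2 : Module.finrank ℚ V₀ = Fintype.card {i : Fin d // (i : ℕ) + k + 1 < d}
          * Module.finrank ℚ K := by
        show Module.finrank ℚ ({i : Fin d // (i : ℕ) + k + 1 < d} → K) = _
        rw [Module.finrank_pi_fintype ℚ, Finset.sum_const, Finset.card_univ, smul_eq_mul]
      calc Fintype.card ι ≤ Module.finrank ℚ V₀ := h1
        _ = Fintype.card {i : Fin d // (i : ℕ) + k + 1 < d} * Module.finrank ℚ K := h2
        _ ≤ (d - (k + 1)) * Module.finrank ℚ K := Nat.mul_le_mul_right _ hcardI
        _ = Module.finrank ℚ K * (d - (k + 1)) := Nat.mul_comm _ _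
    -- choose preimages of the basis vectors
    have hbj : ∀ j : ι, ∃ g, g ∈ H ∧ tau (d := d) k g = ((b j : P') : V₀) := by
      intro j
      rcases (hmemP' _).mp (b j).2 with ⟨g, hg, hgt⟩
      exact ⟨g, hg, hgt⟩
    choose t ht1 ht2 using hbj
    let T : Finset (GL (Fin d) K) := Finset.image t Finset.univ
    have hTcard : T.card ≤ Module.finrank ℚ K * (d - (k + 1)) :=
      le_trans (le_trans Finset.card_image_le (le_of_eq Finset.card_univ)) hcard
    have hTsub : (T : Set (GL (Fin d) K)) ⊆ H := by
      intro g hg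
      simp only [T, Finset.coe_image, Set.mem_image] at hg
      rcases hg with ⟨j, _, rfl⟩
      exact ht1 j
    -- every element of H is matched modulo ker tau by an element of closure T
    have hsurj : ∀ g ∈ H, ∃ h, h ∈ Subgroup.closure (T : Set (GL (Fin d) K)) ∧ h ∈ H ∧
        tau (d := d) k h = tau k g := by
      intro g hg
      have hx : tau (d := d) k g ∈ P' := (hmemP' _).mpr ⟨g, hg, rfl⟩
      set c : ι → ℤ := fun j => b.repr ⟨tau (d := d) k g, hx⟩ j with hc
      have hrepr : ∑ j : ι, c j • ((b j : P') : V₀) = tau (d := d) k g := by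
        have h1 := b.sum_repr ⟨tau (d := d) k g, hx⟩
        have h2 := congrArg (P'.subtype) h1
        rw [map_sum] at h2
        simp only [_root_.map_smul, Submodule.subtype_apply] at h2
        exact h2
      have hmem : ∀ x ∈ (Finset.univ.toList.map (fun j : ι => t j ^ (c j))), x ∈ H := by
        intro x hx
        rcases List.mem_map.mp hx with ⟨j, _, rfl⟩
        exact zpow_mem (ht1 j) _
      refine ⟨((Finset.univ.toList.map (fun j : ι => t j ^ (c j)))).prod, ?_, ?_, ?_⟩
      · refine Subgroup.list_prod_mem _ (fun x hx => ?_)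
        rcases List.mem_map.mp hx with ⟨j, _, rfl⟩
        exact zpow_mem (Subgroup.subset_closure
          (Finset.mem_coe.mpr (Finset.mem_image_of_mem t (Finset.mem_univ j)))) _
      · exact Subgroup.list_prod_mem H hmem
      · rw [tprod _ hmem, List.map_map]
        have : (tau (d := d) k ∘ fun j : ι => t j ^ c j) = fun j : ι => c j • tau (d := d) k (t j) := by
          funext j
          exact tzpow (t j) (ht1 j) (c j)
        rw [this, list_map_sum]
        calc ∑ j : ι, c j • tau (d := d) k (t j)
            = ∑ j : ι, c j • ((b j : P') : V₀) := by
              refine Finset.sum_congr rfl (fun j _ => ?_)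
              rw [ht2 j]
          _ = tau (d := d) k g := hrepr
    -- the kernel subgroup
    let H' : Subgroup (GL (Fin d) K) :=
      { carrier := {g | g ∈ H ∧ tau (d := d) k g = 0}
        one_mem' := ⟨one_mem H, tau_one k⟩
        mul_mem' := by
          rintro a c ⟨ha, ha0⟩ ⟨hc, hc0⟩
          exact ⟨mul_mem ha hc, by rw [tau_mul (hU a ha) (hU c hc), ha0, hc0, add_zero]⟩
        inv_mem' := by
          rintro a ⟨ha, ha0⟩
          exact ⟨inv_mem ha, by rw [tinv a ha, ha0, neg_zero]⟩ }
    have hU' : ∀ g ∈ H', UTlvl M (k + 1) g := by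
      rintro g ⟨hg, hg0⟩
      obtain ⟨h1, h2, h3, h4⟩ := hU g hg
      refine ⟨h1, h2, h3, ?_⟩
      intro i j hij hj
      rcases Nat.lt_or_ge ((i : ℕ) + k + 1) d with hcase | hcase
      · rcases Nat.eq_or_lt_of_le hj with heq | hlt
        · have hjj : j = ⟨(i : ℕ) + k + 1, hcase⟩ :=
            Fin.ext (show (j : ℕ) = (i : ℕ) + k + 1 by omega)
          rw [hjj]
          exact congrFun hg0 ⟨i, hcase⟩
        · exact h4 i j hij (by omega)
      · exact h4 i j hij (by have := j.2; omega)
    obtain ⟨S', hS'card, hS'clo⟩ := IH (k + 1) H' (by omega) hU'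
    refine ⟨S' ∪ T, ?_, ?_⟩
    · have hsum : ∑ l ∈ Finset.Ico (k + 1) d, (d - l)
          = (d - (k + 1)) + ∑ l ∈ Finset.Ico (k + 2) d, (d - l) := by
        rw [Finset.sum_eq_sum_Ico_succ_bot hdk]
      calc (S' ∪ T).card ≤ S'.card + T.card := Finset.card_union_le _ _
        _ ≤ Module.finrank ℚ K * (∑ l ∈ Finset.Ico (k + 2) d, (d - l))
            + Module.finrank ℚ K * (d - (k + 1)) := Nat.add_le_add hS'card hTcard
        _ = Module.finrank ℚ K * (∑ l ∈ Finset.Ico (k + 1) d, (d - l)) := by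
            rw [hsum, Nat.mul_add]; omega
    · apply le_antisymm
      · rw [Subgroup.closure_le]
        rw [Finset.coe_union]
        apply Set.union_subset
        · intro g hg
          have : g ∈ H' := hS'clo ▸ Subgroup.subset_closure hg
          exact this.1
        · exact hTsub
      · intro g hg
        obtain ⟨h, hclo, hhH, htau⟩ := hsurj g hg
        have hker : g * h⁻¹ ∈ H' := by
          refine ⟨mul_mem hg (inv_mem hhH), ?_⟩
          rw [tau_mul (hU g hg) (hU h⁻¹ (inv_mem hhH)), tinv h hhH, htau]
          exact add_neg_cancel _
        have hsub1 : Subgroup.closure (S' : Set (GL (Fin d) K))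
            ≤ Subgroup.closure ((S' ∪ T : Finset (GL (Fin d) K)) : Set (GL (Fin d) K)) := by
          apply Subgroup.closure_mono
          rw [Finset.coe_union]
          exact Set.subset_union_left
        have hsub2 : Subgroup.closure (T : Set (GL (Fin d) K))
            ≤ Subgroup.closure ((S' ∪ T : Finset (GL (Fin d) K)) : Set (GL (Fin d) K)) := by
          apply Subgroup.closure_mono
          rw [Finset.coe_union]
          exact Set.subset_union_right
        have h1 : g * h⁻¹ ∈ Subgroup.closure ((S' ∪ T : Finset (GL (Fin d) K)) : Set (GL (Fin d) K)) :=
          hsub1 (hS'clo ▸ hker)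
        have h2 : h ∈ Subgroup.closure ((S' ∪ T : Finset (GL (Fin d) K)) : Set (GL (Fin d) K)) :=
          hsub2 hclo
        have := mul_mem h1 h2
        rwa [inv_mul_cancel_right] at this

lemma sum_Ico_choose (d : ℕ) : ∑ l ∈ Finset.Ico 1 d, (d - l) = d.choose 2 := by
  induction d with
  | zero => simp
  | succ d ih =>
    rcases Nat.eq_zero_or_pos d with rfl | hd
    · simp
    rw [Finset.sum_Ico_succ_top (by omega : 1 ≤ d)]
    have h1 : ∑ l ∈ Finset.Ico 1 d, (d + 1 - l)
        = (∑ l ∈ Finset.Ico 1 d, (d - l)) + (d - 1) := by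
      calc ∑ l ∈ Finset.Ico 1 d, (d + 1 - l)
          = ∑ l ∈ Finset.Ico 1 d, ((d - l) + 1) :=
            Finset.sum_congr rfl (fun l hl => by rw [Finset.mem_Ico] at hl; omega)
        _ = (∑ l ∈ Finset.Ico 1 d, (d - l)) + (d - 1) := by
            rw [Finset.sum_add_distrib, Finset.sum_const, Nat.card_Ico, smul_eq_mul, mul_one]
    rw [h1, ih]
    have h2 : (d + 1).choose 2 = d.choose 1 + d.choose 2 := Nat.choose_succ_succ d 1
    rw [Nat.choose_one_right] at h2
    omega

end UTaux

open UTaux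

/-- Let `K` be an algebraic number field of degree `m = [K : ℚ]` and
`d ≥ 1`. Every finitely generated subgroup `H` of `GL(d, K)` all of whose elements are
upper unitriangular can be generated by at most `m · (d choose 2)` elements. -/
theorem unitriangular_pruefer_rank_bound
    {K : Type*} [Field K] [NumberField K] {d : ℕ} (hd : 1 ≤ d)
    (H : Subgroup (GL (Fin d) K))
    (hH : ∀ g ∈ H,
      (∀ i j : Fin d, j < i → (g : Matrix (Fin d) (Fin d) K) i j = 0) ∧
      (∀ i : Fin d, (g : Matrix (Fin d) (Fin d) K) i i = 1))
    (hfg : H.FG) :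
    ∃ S : Finset (GL (Fin d) K),
      S.card ≤ Module.finrank ℚ K * Nat.choose d 2 ∧
      Subgroup.closure (S : Set (GL (Fin d) K)) = H := by
  classical
  obtain ⟨F, hF⟩ := hfg
  set F' : Finset (GL (Fin d) K) := F ∪ F.image (fun g => g⁻¹) with hF'
  have hF'H : (F' : Set (GL (Fin d) K)) ⊆ H := by
    intro g hg
    simp only [hF', Finset.coe_union, Finset.coe_image, Set.mem_union, Set.mem_image,
      Finset.mem_coe] at hg
    rcases hg with hg | ⟨f, hf, rfl⟩
    · exact hF ▸ Subgroup.subset_closure hg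
    · exact inv_mem (hF ▸ Subgroup.subset_closure hf)
  have hF'clo : Subgroup.closure (F' : Set (GL (Fin d) K)) = H := by
    apply le_antisymm ((Subgroup.closure_le H).mpr hF'H)
    rw [← hF]
    apply Subgroup.closure_mono
    rw [hF', Finset.coe_union]
    exact Set.subset_union_left
  have hF'inv : ∀ g ∈ F', g⁻¹ ∈ F' := by
    intro g hg
    rw [hF', Finset.mem_union] at hg ⊢
    rcases hg with hg | hg
    · exact Or.inr (Finset.mem_image_of_mem _ hg)
    · rcases Finset.mem_image.mp hg with ⟨f, hf, rfl⟩
      rw [inv_inv]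
      exact Or.inl hf
  set E : Finset K := insert 1 (F'.biUnion (fun g => Finset.image
    (fun p : Fin d × Fin d => (g : Matrix (Fin d) (Fin d) K) p.1 p.2) Finset.univ)) with hE
  set M₁ : Submodule ℤ K := Submodule.span ℤ (E : Set K) with hM₁
  have h1M : (1 : K) ∈ M₁ := Submodule.subset_span (by simp [hE])
  have hEntM : ∀ g ∈ F', ∀ i j : Fin d, (g : Matrix (Fin d) (Fin d) K) i j ∈ M₁ := by
    intro g hg i j
    apply Submodule.subset_span
    rw [hE]
    exact Finset.mem_insert_of_mem (Finset.mem_biUnion.mpr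
      ⟨g, hg, Finset.mem_image.mpr ⟨(i, j), Finset.mem_univ _, rfl⟩⟩)
  have hM₁fg : M₁.FG := Submodule.fg_span (E.finite_toSet)
  have hpow : ∀ {a b : ℕ}, a ≤ b → M₁ ^ a ≤ M₁ ^ b := by
    intro a b hab
    induction b, hab using Nat.le_induction with
    | base => exact le_rfl
    | succ b hb ih =>
      refine le_trans ih ?_
      intro x hx
      rw [pow_succ]
      simpa using Submodule.mul_mem_mul hx h1M
  -- the invariant predicate
  set Q : GL (Fin d) K → Prop := fun g =>
    (∀ i j : Fin d, j < i → (g : Matrix (Fin d) (Fin d) K) i j = 0) ∧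
    (∀ i : Fin d, (g : Matrix (Fin d) (Fin d) K) i i = 1) ∧
    (∀ i j : Fin d, (i : ℕ) < (j : ℕ) →
      (g : Matrix (Fin d) (Fin d) K) i j ∈ M₁ ^ ((j : ℕ) - (i : ℕ))) with hQdef
  have hQone : Q 1 := by
    refine ⟨?_, ?_, ?_⟩
    · intro i j hji
      rw [Units.val_one]
      exact Matrix.one_apply_ne (by intro h; rw [h] at hji; exact lt_irrefl j hji)
    · intro i
      rw [Units.val_one]
      exact Matrix.one_apply_eq i
    · intro i j hij
      rw [Units.val_one, Matrix.one_apply_ne (by intro h; have := congrArg Fin.val h; omega)]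
      exact Submodule.zero_mem _
  have hQmul : ∀ a c : GL (Fin d) K, Q a → Q c → Q (a * c) := by
    rintro a c ⟨ha1, ha2, ha3⟩ ⟨hc1, hc2, hc3⟩
    have hmulapp : ∀ i j : Fin d, ((a * c : GL (Fin d) K) : Matrix (Fin d) (Fin d) K) i j
        = ∑ l : Fin d, (a : Matrix (Fin d) (Fin d) K) i l * (c : Matrix (Fin d) (Fin d) K) l j :=
      fun i j => by rw [Units.val_mul, Matrix.mul_apply]
    refine ⟨?_, ?_, ?_⟩
    · intro i j hji
      rw [hmulapp]
      apply Finset.sum_eq_zero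
      intro l _
      rcases lt_or_ge (l : ℕ) (i : ℕ) with hl | hl
      · rw [ha1 i l hl, zero_mul]
      · rw [hc1 l j (show (j : ℕ) < (l : ℕ) from lt_of_lt_of_le hji hl), mul_zero]
    · intro i
      rw [hmulapp, Finset.sum_eq_single i]
      · rw [ha2 i, hc2 i, one_mul]
      · intro l _ hl
        have hlv : (l : ℕ) ≠ (i : ℕ) := fun h => hl (Fin.ext h)
        rcases lt_or_gt_of_ne hlv with h | h
        · rw [ha1 i l h, zero_mul]
        · rw [hc1 l i h, mul_zero]
      · exact fun h => absurd (Finset.mem_univ i) h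
    · intro i j hij
      rw [hmulapp]
      apply Submodule.sum_mem
      intro l _
      rcases lt_trichotomy (l : ℕ) (i : ℕ) with hl | hl | hl
      · rw [ha1 i l hl, zero_mul]
        exact Submodule.zero_mem _
      · have : l = i := Fin.ext hl
        subst this
        rw [ha2 l, one_mul]
        exact hc3 l j hij
      · rcases lt_trichotomy (l : ℕ) (j : ℕ) with hl2 | hl2 | hl2
        · have hm := Submodule.mul_mem_mul (ha3 i l hl) (hc3 l j hl2)
          rw [← pow_add] at hm
          have harith : (l : ℕ) - (i : ℕ) + ((j : ℕ) - (l : ℕ)) = (j : ℕ) - (i : ℕ) := by omega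
          rwa [harith] at hm
        · have : l = j := Fin.ext hl2
          subst this
          rw [hc2 l, mul_one]
          exact ha3 i l hij
        · rw [hc1 l j hl2, mul_zero]
          exact Submodule.zero_mem _
  have hQ : ∀ g ∈ H, Q g := by
    intro g hg
    rw [← hF'clo] at hg
    refine (Subgroup.closure_induction (p := fun x _ => Q x ∧ Q x⁻¹) ?_ ?_ ?_ ?_ hg).1
    · intro x hx
      have hx' : x ∈ F' := Finset.mem_coe.mp hx
      have hQF' : ∀ y ∈ F', Q y := by
        intro y hy
        obtain ⟨h1, h2⟩ := hH y (hF'H (Finset.mem_coe.mpr hy))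
        refine ⟨h1, h2, ?_⟩
        intro i j hij
        have hm : (y : Matrix (Fin d) (Fin d) K) i j ∈ M₁ ^ 1 := by
          rw [pow_one]
          exact hEntM y hy i j
        exact hpow (show 1 ≤ (j : ℕ) - (i : ℕ) by omega) hm
      exact ⟨hQF' x hx', hQF' x⁻¹ (hF'inv x hx')⟩
    · exact ⟨hQone, by rw [inv_one]; exact hQone⟩
    · rintro x y hx hy ⟨qx, qxi⟩ ⟨qy, qyi⟩
      exact ⟨hQmul x y qx qy, by rw [_root_.mul_inv_rev]; exact hQmul _ _ qyi qxi⟩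
    · rintro x hx ⟨qx, qxi⟩
      exact ⟨qxi, by rw [inv_inv]; exact qx⟩
  have hUT : ∀ g ∈ H, UTlvl (M₁ ^ d) 0 g := by
    intro g hg
    obtain ⟨h1, h2, h3⟩ := hQ g hg
    refine ⟨h1, h2, ?_, ?_⟩
    · intro i j hij
      exact hpow (show (j : ℕ) - (i : ℕ) ≤ d by have := j.2; omega) (h3 i j hij)
    · intro i j hij hj
      omega
  obtain ⟨S, hcard, hclo⟩ := key (M₁ ^ d) (hM₁fg.pow d) (d - 1) 0 H (by omega) hUT
  refine ⟨S, ?_, hclo⟩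
  rw [← sum_Ico_choose d]
  simpa using hcard
end
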